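/- arXiv:1612.02932 — 14 statements merged into one kernel-verified Lean document; each statement's English description precedes it below -/
import Mathlib

section
/- Let g : ℝ^d → ℝ^d be continuous and linearly homogeneous, and suppose there exists r > 0 such that g^n(x) → 0 as n → ∞ for every x ∈ ℝ^d with ‖x‖ < r. Then 0 is a globally asymptotically stable fixed point of g; that is, 0 is Lyapunov stable and g^n(x) → 0 as n → ∞ for every x ∈ ℝ^d. -/
open Filter Topology

/-- If `g : ℝ^d → ℝ^d` is continuous and linearly homogeneous, and there is
`r > 0` such that `g^[n] x → 0` for every `x` with `‖x‖ < r`, then `0` is a globally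
asymptotically stable fixed point of `g`: `0` is Lyapunov stable and `g^[n] x → 0` for
every `x ∈ ℝ^d`. -/
theorem stmt0 {d : ℕ}
    (g : EuclideanSpace ℝ (Fin d) → EuclideanSpace ℝ (Fin d))
    (hg : Continuous g)
    (hhom : ∀ (α : ℝ), 0 ≤ α → ∀ x, g (α • x) = α • g x)
    (r : ℝ) (hr : 0 < r)
    (hconv : ∀ x : EuclideanSpace ℝ (Fin d), ‖x‖ < r →
      Tendsto (fun n : ℕ => g^[n] x) atTop (𝓝 0)) :
    (∀ ε > 0, ∃ δ > 0, ∀ x : EuclideanSpace ℝ (Fin d), ‖x‖ < δ → ∀ n : ℕ, ‖g^[n] x‖ < ε) ∧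
      (∀ x : EuclideanSpace ℝ (Fin d), Tendsto (fun n : ℕ => g^[n] x) atTop (𝓝 0)) := by
  -- iterates are homogeneous
  have hit : ∀ (n : ℕ) (α : ℝ), 0 ≤ α → ∀ x, g^[n] (α • x) = α • g^[n] x := by
    intro n
    induction n with
    | zero => intro α hα x; simp
    | succ n ih =>
      intro α hα x
      rw [Function.iterate_succ_apply', Function.iterate_succ_apply', ih α hα, hhom α hα]
  have hg0 : ∀ n : ℕ, g^[n] (0 : EuclideanSpace ℝ (Fin d)) = 0 := by
    intro n
    have := hit n 0 le_rfl 0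
    simpa using this
  -- compact ball K and open cover
  set K := Metric.closedBall (0 : EuclideanSpace ℝ (Fin d)) (r/2) with hKdef
  have hKc : IsCompact K := isCompact_closedBall _ _
  set U : ℕ → Set (EuclideanSpace ℝ (Fin d)) := fun n => {y | ‖g^[n+1] y‖ < r/4} with hUdef
  have hUopen : ∀ n, IsOpen (U n) := by
    intro n
    exact isOpen_lt (hg.iterate (n+1)).norm continuous_const
  have hcover : K ⊆ ⋃ n, U n := by
    intro x hx
    have hxr : ‖x‖ < r := by
      have := Metric.mem_closedBall.mp hx
      rw [dist_zero_right] at this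
      linarith
    have h1 : ∀ᶠ n : ℕ in atTop, g^[n] x ∈ Metric.ball (0 : EuclideanSpace ℝ (Fin d)) (r/4) :=
      (hconv x hxr) (Metric.ball_mem_nhds 0 (by linarith))
    obtain ⟨n, hn1, hn2⟩ := ((eventually_ge_atTop 1).and h1).exists
    obtain ⟨m, rfl⟩ := Nat.exists_eq_add_of_le hn1
    refine Set.mem_iUnion.mpr ⟨m, ?_⟩
    have : ‖g^[1 + m] x‖ < r/4 := by simpa [mem_ball_zero_iff] using hn2
    simpa [hUdef, Nat.add_comm] using this
  obtain ⟨t, ht⟩ := hKc.elim_finite_subcover U hUopen hcover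
  set N := t.sup id + 1 with hNdef
  -- uniform bound for iterates up to N on K
  have hbdd : ∀ M : ℕ, ∃ C : ℝ, ∀ n ≤ M, ∀ y ∈ K, ‖g^[n] y‖ ≤ C := by
    intro M
    induction M with
    | zero =>
      refine ⟨r/2, ?_⟩
      intro n hn y hy
      interval_cases n
      simpa [dist_zero_right] using Metric.mem_closedBall.mp hy
    | succ M ih =>
      obtain ⟨C, hC⟩ := ih
      obtain ⟨C', hC'⟩ := hKc.exists_bound_of_continuousOn (hg.iterate (M+1)).continuousOn
      refine ⟨max C C', ?_⟩
      intro n hn y hy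
      rcases Nat.lt_succ_iff_lt_or_eq.mp (Nat.lt_succ_of_le hn) with h | h
      · exact le_trans (hC n (Nat.lt_succ_iff.mp h) y hy) (le_max_left _ _)
      · subst h
        exact le_trans (hC' y hy) (le_max_right _ _)
  obtain ⟨C, hC⟩ := hbdd N
  have hC0 : 0 ≤ C := by
    have := hC 0 (Nat.zero_le _) 0 (by simp [hKdef]; positivity)
    simpa using this
  -- uniform bound for ALL iterates on K
  have hmain : ∀ n : ℕ, ∀ y ∈ K, ‖g^[n] y‖ ≤ C := by
    intro n
    induction n using Nat.strong_induction_on with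
    | _ n ih =>
      intro y hy
      by_cases hn : n ≤ N
      · exact hC n hn y hy
      · push_neg at hn
        obtain ⟨m, hmt, hm⟩ : ∃ m ∈ t, y ∈ U m := by
          simpa using ht hy
        have hm4 : ‖g^[m+1] y‖ < r/4 := hm
        have hm1 : m + 1 ≤ N := by
          have : m ≤ t.sup id := Finset.le_sup (f := id) hmt
          omega
        have hyK : g^[m+1] y ∈ K := by
          rw [hKdef, Metric.mem_closedBall, dist_zero_right]
          linarith
        have heq : g^[n] y = g^[n - (m+1)] (g^[m+1] y) := by
          rw [← Function.iterate_add_apply]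
          congr 1
          omega
        rw [heq]
        exact ih (n - (m+1)) (by omega) _ hyK
  constructor
  · -- Lyapunov stability
    intro ε hε
    have hC1 : (0:ℝ) < C + 1 := by linarith
    refine ⟨min (r/2) (ε * r / (2 * (C + 1))), lt_min (by linarith) (by positivity), ?_⟩
    intro x hx n
    by_cases hx0 : x = 0
    · subst hx0
      rw [hg0 n]
      simpa using hε
    · have hxn : 0 < ‖x‖ := norm_pos_iff.mpr hx0
      set α := (r/2) / ‖x‖ with hαdef
      have hα : 0 < α := div_pos (by linarith) hxn
      have hyK : α • x ∈ K := by
        rw [hKdef, Metric.mem_closedBall, dist_zero_right, norm_smul,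
          Real.norm_of_nonneg hα.le, hαdef, div_mul_cancel₀ _ hxn.ne']
      have key : g^[n] x = α⁻¹ • g^[n] (α • x) := by
        rw [← hit n α⁻¹ (by positivity), smul_smul, inv_mul_cancel₀ hα.ne', one_smul]
      have hb := hmain n (α • x) hyK
      have hb0 : (0:ℝ) ≤ ‖g^[n] (α • x)‖ := norm_nonneg _
      rw [key, norm_smul, Real.norm_of_nonneg (inv_nonneg.mpr hα.le)]
      have hαinv : α⁻¹ = ‖x‖ * 2 / r := by
        rw [hαdef]
        field_simp
      have hxδ : ‖x‖ < ε * r / (2 * (C + 1)) := lt_of_lt_of_le hx (min_le_right _ _)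
      rw [hαinv]
      rw [div_mul_eq_mul_div, div_lt_iff₀ hr]
      have h1 : ‖x‖ * 2 * ‖g^[n] (α • x)‖ ≤ ‖x‖ * 2 * C := by nlinarith
      have h3 : ‖x‖ * (2 * (C + 1)) < ε * r :=
        (lt_div_iff₀ (by linarith : (0:ℝ) < 2 * (C + 1))).mp hxδ
      nlinarith [h1, h3, norm_nonneg x]
  · -- global convergence
    intro x
    set α := r / (‖x‖ + 1) with hαdef
    have hx0 : (0:ℝ) ≤ ‖x‖ := norm_nonneg x
    have hα : 0 < α := div_pos hr (by linarith)
    have hαx : ‖α • x‖ < r := by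
      rw [norm_smul, Real.norm_of_nonneg hα.le, hαdef, div_mul_eq_mul_div,
        div_lt_iff₀ (by linarith)]
      nlinarith
    have h1 := (hconv (α • x) hαx).const_smul α⁻¹
    rw [smul_zero] at h1
    have heq : (fun n : ℕ => g^[n] x) = fun n : ℕ => α⁻¹ • g^[n] (α • x) := by
      funext n
      rw [← hit n α⁻¹ (by positivity), smul_smul, inv_mul_cancel₀ hα.ne', one_smul]
    rw [heq]
    exact h1
end

section
/- Let g : ℝ^d → ℝ^d be continuous and linearly homogeneous, and suppose there exists r > 0 such that g^n(x) → 0 as n → ∞ for every x ∈ ℝ^d with ‖x‖ < r. Then g^n → 0 uniformly on the ball of radius r: for every ε > 0 there exists N such that ‖g^n(x)‖ < ε for all n ≥ N and all x with ‖x‖ < r. -/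
open Filter Topology

set_option maxHeartbeats 1000000 in
/-- If `g : ℝ^d → ℝ^d` is continuous and linearly homogeneous, and there is
`r > 0` such that `g^[n] x → 0` for every `x` with `‖x‖ < r`, then `g^[n] → 0` uniformly
on the ball of radius `r`. -/
theorem stmt1 {d : ℕ}
    (g : EuclideanSpace ℝ (Fin d) → EuclideanSpace ℝ (Fin d))
    (hg : Continuous g)
    (hhom : ∀ (α : ℝ), 0 ≤ α → ∀ x, g (α • x) = α • g x)
    (r : ℝ) (hr : 0 < r)
    (hconv : ∀ x : EuclideanSpace ℝ (Fin d), ‖x‖ < r →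
      Tendsto (fun n : ℕ => g^[n] x) atTop (𝓝 0)) :
    ∀ ε > 0, ∃ N : ℕ, ∀ n ≥ N, ∀ x : EuclideanSpace ℝ (Fin d), ‖x‖ < r →
      ‖g^[n] x‖ < ε := by
  intro ε hε
  -- abbreviation
  have h0 : g 0 = 0 := by
    have := hhom 0 le_rfl 0
    simpa using this
  have hhomn : ∀ n (α : ℝ), 0 ≤ α → ∀ x, g^[n] (α • x) = α • g^[n] x := by
    intro n
    induction n with
    | zero => intro α hα x; simp
    | succ n ih =>
      intro α hα x
      rw [Function.iterate_succ_apply, hhom α hα, ih α hα, Function.iterate_succ_apply]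
  have hcont : ∀ n, Continuous (g^[n]) := fun n => hg.iterate n
  -- convergence for every x
  have hconv' : ∀ x : EuclideanSpace ℝ (Fin d), Tendsto (fun n : ℕ => g^[n] x) atTop (𝓝 0) := by
    intro x
    set α : ℝ := ‖x‖ / r + 1 with hαdef
    have hα0 : 0 < α := by positivity
    have hxα : ‖α⁻¹ • x‖ < r := by
      rw [norm_smul, Real.norm_eq_abs, abs_of_pos (inv_pos.mpr hα0)]
      rw [inv_mul_lt_iff₀ hα0]
      rw [hαdef]
      have : 0 < ‖x‖ / r * r + r := by positivity
      calc ‖x‖ = ‖x‖ / r * r := by field_simp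
        _ < (‖x‖ / r + 1) * r := by nlinarith
    have h1 := (hconv _ hxα).const_smul α
    have h2 : (fun n : ℕ => α • g^[n] (α⁻¹ • x)) = fun n : ℕ => g^[n] x := by
      funext n
      rw [← hhomn n α hα0.le, smul_inv_smul₀ hα0.ne']
    rw [h2] at h1
    simpa using h1
  -- uniform halving time K via compactness of the sphere
  obtain ⟨K, hK1, hstep⟩ : ∃ K : ℕ, 1 ≤ K ∧ ∀ x : EuclideanSpace ℝ (Fin d), ‖x‖ ≤ 1 →
      ∃ m, 1 ≤ m ∧ m ≤ K ∧ ‖g^[m] x‖ ≤ ‖x‖ / 2 := by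
    have hsc : IsCompact (Metric.sphere (0 : EuclideanSpace ℝ (Fin d)) 1) := isCompact_sphere 0 1
    have hopen : ∀ n : ℕ, IsOpen {x : EuclideanSpace ℝ (Fin d) | ‖g^[n+1] x‖ < 1/2} :=
      fun n => isOpen_lt ((hcont (n+1)).norm) continuous_const
    have hcov : Metric.sphere (0 : EuclideanSpace ℝ (Fin d)) 1 ⊆
        ⋃ n : ℕ, {x | ‖g^[n+1] x‖ < 1/2} := by
      intro x _
      have := Metric.tendsto_atTop.mp (hconv' x) (1/2) (by norm_num)
      obtain ⟨N, hN⟩ := this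
      refine Set.mem_iUnion.mpr ⟨N, ?_⟩
      have := hN (N+1) (by omega)
      simpa [dist_zero_right] using this
    obtain ⟨t, ht⟩ := hsc.elim_finite_subcover _ hopen hcov
    refine ⟨t.sup id + 1, by omega, ?_⟩
    intro x hx
    rcases eq_or_ne x 0 with rfl | hx0
    · refine ⟨t.sup id + 1, by omega, le_rfl, ?_⟩
      rw [Function.iterate_fixed h0]
      simp
    · have hxn : 0 < ‖x‖ := norm_pos_iff.mpr hx0
      set u : EuclideanSpace ℝ (Fin d) := ‖x‖⁻¹ • x with hu
      have hus : u ∈ Metric.sphere (0 : EuclideanSpace ℝ (Fin d)) 1 := by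
        rw [mem_sphere_zero_iff_norm, hu, norm_smul, Real.norm_eq_abs,
          abs_of_pos (inv_pos.mpr hxn), inv_mul_cancel₀ hxn.ne']
      have := ht hus
      rw [Set.mem_iUnion₂] at this
      obtain ⟨n, hnt, hnx⟩ := this
      refine ⟨n + 1, by omega, by
        have := Finset.le_sup (f := id) hnt
        simpa using Nat.succ_le_succ this, ?_⟩
      have hxu : x = ‖x‖ • u := by rw [hu, smul_inv_smul₀ hxn.ne']
      have heq : ‖g^[n+1] x‖ = ‖x‖ * ‖g^[n+1] u‖ := by
        conv_lhs => rw [hxu]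
        rw [hhomn _ _ hxn.le, norm_smul, Real.norm_eq_abs, abs_of_pos hxn]
      rw [heq]
      have hlt : ‖g^[n+1] u‖ < 1/2 := hnx
      nlinarith
  -- uniform bound C for iterates up to K
  obtain ⟨C, hC1, hCb⟩ : ∃ C : ℝ, 1 ≤ C ∧ ∀ m ≤ K, ∀ x : EuclideanSpace ℝ (Fin d),
      ‖g^[m] x‖ ≤ C * ‖x‖ := by
    have hbd : ∀ m : ℕ, ∃ Cm : ℝ, ∀ x ∈ Metric.sphere (0 : EuclideanSpace ℝ (Fin d)) 1,
        ‖g^[m] x‖ ≤ Cm := by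
      intro m
      exact (isCompact_sphere 0 1).exists_bound_of_continuousOn (hcont m).continuousOn
    choose Cm hCm using hbd
    set C : ℝ := max 1 ((Finset.range (K+1)).sup' (by simp) Cm) with hCdef
    refine ⟨C, le_max_left _ _, ?_⟩
    intro m hm x
    rcases eq_or_ne x 0 with rfl | hx0
    · simp [Function.iterate_fixed h0]
    · have hxn : 0 < ‖x‖ := norm_pos_iff.mpr hx0
      set u : EuclideanSpace ℝ (Fin d) := ‖x‖⁻¹ • x with hu
      have hus : u ∈ Metric.sphere (0 : EuclideanSpace ℝ (Fin d)) 1 := by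
        rw [mem_sphere_zero_iff_norm, hu, norm_smul, Real.norm_eq_abs,
          abs_of_pos (inv_pos.mpr hxn), inv_mul_cancel₀ hxn.ne']
      have hxu : x = ‖x‖ • u := by rw [hu, smul_inv_smul₀ hxn.ne']
      rw [hxu, hhomn _ _ hxn.le, norm_smul, Real.norm_eq_abs, abs_of_pos hxn,
        norm_smul, Real.norm_eq_abs, abs_of_pos hxn]
      have h1 : ‖g^[m] u‖ ≤ Cm m := hCm m u hus
      have h2 : Cm m ≤ C := le_trans (Finset.le_sup' Cm (Finset.mem_range.mpr (by omega)))
        (le_max_right _ _)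
      have h3 : ‖u‖ = 1 := mem_sphere_zero_iff_norm.mp hus
      rw [h3, mul_one]
      calc ‖x‖ * ‖g^[m] u‖ ≤ ‖x‖ * C := by nlinarith
        _ = C * ‖x‖ := by ring
  have hC0 : (0:ℝ) < C := lt_of_lt_of_le one_pos hC1
  have hK0 : 0 < K := hK1
  -- geometric decay on the unit ball
  have hdecay : ∀ n, ∀ x : EuclideanSpace ℝ (Fin d), ‖x‖ ≤ 1 →
      ‖g^[n] x‖ ≤ C * (1/2 : ℝ)^(n / K) := by
    intro n
    induction n using Nat.strong_induction_on with
    | _ n ih =>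
      intro x hx
      by_cases hnK : n < K
      · have h1 : n / K = 0 := Nat.div_eq_of_lt hnK
        rw [h1, pow_zero, mul_one]
        calc ‖g^[n] x‖ ≤ C * ‖x‖ := hCb n hnK.le x
          _ ≤ C * 1 := by nlinarith
          _ = C := mul_one C
      · push_neg at hnK
        obtain ⟨m, hm1, hmK, hmle⟩ := hstep x hx
        have hmn : m ≤ n := le_trans hmK hnK
        have key : g^[n] x = g^[n - m] (g^[m] x) := by
          rw [← Function.iterate_add_apply, Nat.sub_add_cancel hmn]
        set y := g^[m] x with hy
        have hy2 : ‖y‖ ≤ 1/2 := le_trans hmle (by linarith)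
        have h2y : ‖(2:ℝ) • y‖ ≤ 1 := by
          rw [norm_smul, Real.norm_eq_abs]
          rw [abs_of_pos (by norm_num : (0:ℝ) < 2)]
          linarith
        have ihy := ih (n - m) (by omega) ((2:ℝ) • y) h2y
        have hsc : g^[n - m] ((2:ℝ) • y) = (2:ℝ) • g^[n-m] y :=
          hhomn _ 2 (by norm_num) y
        rw [hsc, norm_smul, Real.norm_eq_abs, abs_of_pos (by norm_num : (0:ℝ) < 2)] at ihy
        have hnorm : ‖g^[n] x‖ ≤ C * (1/2 : ℝ)^((n-m)/K + 1) := by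
          rw [key]
          have : ‖g^[n-m] y‖ ≤ C * (1/2 : ℝ)^((n-m)/K) / 2 := by linarith
          calc ‖g^[n-m] y‖ ≤ C * (1/2 : ℝ)^((n-m)/K) / 2 := this
            _ = C * (1/2 : ℝ)^((n-m)/K + 1) := by rw [pow_succ]; ring
        refine le_trans hnorm ?_
        have hexp : n / K ≤ (n - m)/K + 1 := by
          have h1 : n ≤ (n - m) + K := by omega
          calc n / K ≤ ((n - m) + K) / K := Nat.div_le_div_right h1
            _ = (n - m)/K + 1 := Nat.add_div_right _ hK0
        have := pow_le_pow_of_le_one (by norm_num : (0:ℝ) ≤ 1/2)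
          (by norm_num : (1/2:ℝ) ≤ 1) hexp
        nlinarith
  -- conclude
  obtain ⟨j, hj⟩ : ∃ j : ℕ, (1/2 : ℝ)^j < ε / (C * r) := by
    refine exists_pow_lt_of_lt_one (by positivity) (by norm_num)
  refine ⟨j * K, ?_⟩
  intro n hn x hx
  have hjn : j ≤ n / K := (Nat.le_div_iff_mul_le hK0).mpr hn
  have hxle : 0 ≤ ‖x‖ := norm_nonneg x
  have hu1 : ‖r⁻¹ • x‖ ≤ 1 := by
    rw [norm_smul, Real.norm_eq_abs, abs_of_pos (inv_pos.mpr hr)]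
    rw [inv_mul_le_iff₀ hr]
    nlinarith
  have hxu : x = r • (r⁻¹ • x) := (smul_inv_smul₀ hr.ne' x).symm
  have hb := hdecay n (r⁻¹ • x) hu1
  have heval : ‖g^[n] x‖ = r * ‖g^[n] (r⁻¹ • x)‖ := by
    conv_lhs => rw [hxu]
    rw [hhomn _ _ hr.le, norm_smul, Real.norm_eq_abs, abs_of_pos hr]
  rw [heval]
  have hmono : (1/2:ℝ)^(n/K) ≤ (1/2:ℝ)^j :=
    pow_le_pow_of_le_one (by norm_num) (by norm_num) hjn
  have hjε : C * r * (1/2:ℝ)^j < ε := by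
    rw [lt_div_iff₀ (by positivity)] at hj
    nlinarith
  have hA : ‖g^[n] (r⁻¹ • x)‖ ≤ C * (1/2:ℝ)^j := le_trans hb (by nlinarith)
  calc r * ‖g^[n] (r⁻¹ • x)‖ ≤ r * (C * (1/2:ℝ)^j) := by
        nlinarith [norm_nonneg (g^[n] (r⁻¹ • x))]
    _ < ε := by nlinarith
end

section
/- Let g : ℝ^d → ℝ^d be continuous and linearly homogeneous, and let f : ℝ^d → ℝ^d be continuous with f(x) − g(x) = o(‖x‖) as x → 0 (i.e. for every ε > 0 there exists δ > 0 such that ‖f(x) − g(x)‖ ≤ ε‖x‖ whenever ‖x‖ < δ). Then for every n ≥ 1, f^n(x) − g^n(x) = o(‖x‖) as x → 0: for every ε > 0 there exists δ > 0 such that ‖f^n(x) − g^n(x)‖ ≤ ε‖x‖ whenever ‖x‖ < δ. -/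
open Filter Topology

/-- If `g : ℝ^d → ℝ^d` is continuous and linearly homogeneous and
`f : ℝ^d → ℝ^d` is continuous with `f x - g x = o(‖x‖)` as `x → 0`, then for every
`n ≥ 1`, `f^[n] x - g^[n] x = o(‖x‖)` as `x → 0`. -/
theorem stmt2 {d : ℕ}
    (g : EuclideanSpace ℝ (Fin d) → EuclideanSpace ℝ (Fin d))
    (hg : Continuous g)
    (hhom : ∀ (α : ℝ), 0 ≤ α → ∀ x, g (α • x) = α • g x)
    (f : EuclideanSpace ℝ (Fin d) → EuclideanSpace ℝ (Fin d))
    (hf : Continuous f)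
    (hfg : ∀ ε > 0, ∃ δ > 0, ∀ x : EuclideanSpace ℝ (Fin d), ‖x‖ < δ →
      ‖f x - g x‖ ≤ ε * ‖x‖) :
    ∀ n : ℕ, 1 ≤ n → ∀ ε > 0, ∃ δ > 0, ∀ x : EuclideanSpace ℝ (Fin d), ‖x‖ < δ →
      ‖f^[n] x - g^[n] x‖ ≤ ε * ‖x‖ := by
  let E := EuclideanSpace ℝ (Fin d)
  -- g 0 = 0
  have hg0 : g 0 = 0 := by
    have := hhom 0 le_rfl 0
    simpa using this
  -- f 0 = 0
  have hf0 : f 0 = 0 := by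
    obtain ⟨δ, hδ, h⟩ := hfg 1 one_pos
    have := h 0 (by simpa using hδ)
    simp only [norm_zero, mul_zero] at this
    have h0 : f 0 - g 0 = 0 := by
      rwa [← norm_le_zero_iff]
    rw [hg0] at h0
    simpa [sub_eq_zero] using h0
  -- linear bound for g
  obtain ⟨C, hC1, hC⟩ : ∃ C : ℝ, 1 ≤ C ∧ ∀ y : E, ‖g y‖ ≤ C * ‖y‖ := by
    obtain ⟨M, hM⟩ := (isCompact_closedBall (0 : E) 1).exists_bound_of_continuousOn
      hg.continuousOn
    refine ⟨max M 1, le_max_right _ _, fun y => ?_⟩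
    rcases eq_or_ne y 0 with rfl | hy
    · simp [hg0]
    · have hny : 0 < ‖y‖ := norm_pos_iff.mpr hy
      have hrw : g y = ‖y‖ • g (‖y‖⁻¹ • y) := by
        rw [← hhom ‖y‖ hny.le, smul_inv_smul₀ hny.ne']
      have hmem : ‖y‖⁻¹ • y ∈ Metric.closedBall (0 : E) 1 := by
        simp [norm_smul, abs_of_nonneg (inv_nonneg.mpr hny.le),
          inv_mul_cancel₀ hny.ne']
      have hb := hM _ hmem
      rw [hrw, norm_smul, Real.norm_eq_abs, abs_of_nonneg hny.le]
      have h2 : ‖y‖ * ‖g (‖y‖⁻¹ • y)‖ ≤ ‖y‖ * max M 1 :=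
        mul_le_mul_of_nonneg_left (hb.trans (le_max_left _ _)) hny.le
      linarith [h2]
  -- iterated bound for g
  have hgn : ∀ n : ℕ, ∀ y : E, ‖g^[n] y‖ ≤ C ^ n * ‖y‖ := by
    intro n
    induction n with
    | zero => intro y; simp
    | succ n IH =>
      intro y
      rw [Function.iterate_succ_apply']
      calc ‖g (g^[n] y)‖ ≤ C * ‖g^[n] y‖ := hC _
        _ ≤ C * (C ^ n * ‖y‖) :=
          mul_le_mul_of_nonneg_left (IH y) (by linarith)
        _ = C ^ (n + 1) * ‖y‖ := by ring
  -- scaled uniform continuity of g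
  have key : ∀ R > (0:ℝ), ∀ ε > (0:ℝ), ∃ η > (0:ℝ), ∀ s > (0:ℝ), ∀ u v : E,
      ‖u‖ ≤ R * s → ‖v‖ ≤ R * s → ‖u - v‖ ≤ η * s → ‖g u - g v‖ ≤ ε * s := by
    intro R hR ε hε
    have hcomp : IsCompact (Metric.closedBall (0 : E) R) := isCompact_closedBall _ _
    have huc : UniformContinuousOn g (Metric.closedBall (0 : E) R) :=
      hcomp.uniformContinuousOn_of_continuous hg.continuousOn
    rw [Metric.uniformContinuousOn_iff] at huc
    obtain ⟨η, hη, h⟩ := huc ε hε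
    refine ⟨η / 2, by positivity, fun s hs u v hu hv huv => ?_⟩
    have hs' : (0:ℝ) < s⁻¹ := inv_pos.mpr hs
    have hmu : s⁻¹ • u ∈ Metric.closedBall (0 : E) R := by
      simp only [Metric.mem_closedBall, dist_zero_right, norm_smul, Real.norm_eq_abs,
        abs_of_nonneg hs'.le]
      calc s⁻¹ * ‖u‖ ≤ s⁻¹ * (R * s) := mul_le_mul_of_nonneg_left hu hs'.le
        _ = R := by field_simp
    have hmv : s⁻¹ • v ∈ Metric.closedBall (0 : E) R := by
      simp only [Metric.mem_closedBall, dist_zero_right, norm_smul, Real.norm_eq_abs,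
        abs_of_nonneg hs'.le]
      calc s⁻¹ * ‖v‖ ≤ s⁻¹ * (R * s) := mul_le_mul_of_nonneg_left hv hs'.le
        _ = R := by field_simp
    have hd : dist (s⁻¹ • u) (s⁻¹ • v) < η := by
      rw [dist_eq_norm, ← smul_sub, norm_smul, Real.norm_eq_abs, abs_of_nonneg hs'.le]
      calc s⁻¹ * ‖u - v‖ ≤ s⁻¹ * (η / 2 * s) := mul_le_mul_of_nonneg_left huv hs'.le
        _ = η / 2 := by field_simp
        _ < η := by linarith
    have := h _ hmu _ hmv hd
    rw [dist_eq_norm] at this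
    have hru : g u = s • g (s⁻¹ • u) := by
      rw [← hhom s hs.le, smul_inv_smul₀ hs.ne']
    have hrv : g v = s • g (s⁻¹ • v) := by
      rw [← hhom s hs.le, smul_inv_smul₀ hs.ne']
    rw [hru, hrv, ← smul_sub, norm_smul, Real.norm_eq_abs, abs_of_nonneg hs.le]
    nlinarith
  -- main induction
  intro n hn
  clear hn hf
  induction n with
  | zero =>
    intro ε hε
    exact ⟨1, one_pos, fun x _ => by
      simpa using mul_nonneg hε.le (norm_nonneg x)⟩
  | succ n IH =>
    intro ε hε
    have hCn : (0:ℝ) < C ^ n + 1 := by positivity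
    obtain ⟨η, hη, hkey⟩ := key (C ^ n + 1) hCn (ε / 2) (by positivity)
    obtain ⟨δ₁, hδ₁, h1⟩ := IH (min η 1) (by positivity)
    obtain ⟨δ₂, hδ₂, h2⟩ := hfg (ε / (2 * (C ^ n + 1))) (by positivity)
    refine ⟨min δ₁ (δ₂ / (C ^ n + 1)), by positivity, fun x hx => ?_⟩
    rcases eq_or_ne x 0 with rfl | hx0
    · have hfz : ∀ m : ℕ, f^[m] (0:E) = 0 := fun m => by
        induction m with
        | zero => simp
        | succ m IHm => rw [Function.iterate_succ_apply', IHm, hf0]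
      have hgz : ∀ m : ℕ, g^[m] (0:E) = 0 := fun m => by
        induction m with
        | zero => simp
        | succ m IHm => rw [Function.iterate_succ_apply', IHm, hg0]
      simp [hfz, hgz]
    · have hs : (0:ℝ) < ‖x‖ := norm_pos_iff.mpr hx0
      have hx1 : ‖x‖ < δ₁ := lt_of_lt_of_le hx (min_le_left _ _)
      have hx2 : ‖x‖ < δ₂ / (C ^ n + 1) := lt_of_lt_of_le hx (min_le_right _ _)
      have hd1 := h1 x hx1
      have hdη : ‖f^[n] x - g^[n] x‖ ≤ η * ‖x‖ :=
        hd1.trans (mul_le_mul_of_nonneg_right (min_le_left _ _) hs.le)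
      have hd1' : ‖f^[n] x - g^[n] x‖ ≤ ‖x‖ := by
        have := hd1.trans (mul_le_mul_of_nonneg_right (min_le_right _ _) hs.le)
        simpa using this
      have hgnx : ‖g^[n] x‖ ≤ C ^ n * ‖x‖ := hgn n x
      have hfnx : ‖f^[n] x‖ ≤ (C ^ n + 1) * ‖x‖ := by
        calc ‖f^[n] x‖ = ‖(f^[n] x - g^[n] x) + g^[n] x‖ := by congr 1; abel
          _ ≤ ‖f^[n] x - g^[n] x‖ + ‖g^[n] x‖ := norm_add_le _ _
          _ ≤ ‖x‖ + C ^ n * ‖x‖ := add_le_add hd1' hgnx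
          _ = (C ^ n + 1) * ‖x‖ := by ring
      have hfnlt : ‖f^[n] x‖ < δ₂ := by
        calc ‖f^[n] x‖ ≤ (C ^ n + 1) * ‖x‖ := hfnx
          _ < (C ^ n + 1) * (δ₂ / (C ^ n + 1)) :=
            mul_lt_mul_of_pos_left hx2 hCn
          _ = δ₂ := by field_simp
      have hterm1 : ‖f (f^[n] x) - g (f^[n] x)‖ ≤ ε / 2 * ‖x‖ := by
        calc ‖f (f^[n] x) - g (f^[n] x)‖ ≤ ε / (2 * (C ^ n + 1)) * ‖f^[n] x‖ :=
              h2 _ hfnlt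
          _ ≤ ε / (2 * (C ^ n + 1)) * ((C ^ n + 1) * ‖x‖) :=
              mul_le_mul_of_nonneg_left hfnx (by positivity)
          _ = ε / 2 * ‖x‖ := by field_simp
      have hterm2 : ‖g (f^[n] x) - g (g^[n] x)‖ ≤ ε / 2 * ‖x‖ :=
        hkey ‖x‖ hs _ _ hfnx (hgnx.trans (by nlinarith)) hdη
      calc ‖f^[n+1] x - g^[n+1] x‖
          = ‖(f (f^[n] x) - g (f^[n] x)) + (g (f^[n] x) - g (g^[n] x))‖ := by
            rw [Function.iterate_succ_apply', Function.iterate_succ_apply']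
            congr 1; abel
        _ ≤ ‖f (f^[n] x) - g (f^[n] x)‖ + ‖g (f^[n] x) - g (g^[n] x)‖ :=
            norm_add_le _ _
        _ ≤ ε / 2 * ‖x‖ + ε / 2 * ‖x‖ := add_le_add hterm1 hterm2
        _ = ε * ‖x‖ := by ring
end

section
/- Let g : ℝ^d → ℝ^d be continuous and linearly homogeneous, and let f : ℝ^d → ℝ^d be continuous with f(x) − g(x) = o(‖x‖) as x → 0. If there exists r > 0 such that g^n(x) → 0 as n → ∞ for all x with ‖x‖ < r, then 0 is an exponentially stable fixed point of f. -/
open Filter Topology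

set_option maxHeartbeats 1000000 in
/-- If `g : ℝ^d → ℝ^d` is continuous and linearly homogeneous,
`f : ℝ^d → ℝ^d` is continuous with `f x - g x = o(‖x‖)` as `x → 0`, and there is `r > 0`
such that `g^[n] x → 0` for all `‖x‖ < r`, then `0` is an exponentially stable fixed
point of `f`. -/
theorem stmt3 {d : ℕ}
    (g : EuclideanSpace ℝ (Fin d) → EuclideanSpace ℝ (Fin d))
    (hg : Continuous g)
    (hhom : ∀ (α : ℝ), 0 ≤ α → ∀ x, g (α • x) = α • g x)
    (f : EuclideanSpace ℝ (Fin d) → EuclideanSpace ℝ (Fin d))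
    (hf : Continuous f)
    (hfg : ∀ ε > 0, ∃ δ > 0, ∀ x : EuclideanSpace ℝ (Fin d), ‖x‖ < δ →
      ‖f x - g x‖ ≤ ε * ‖x‖)
    (r : ℝ) (hr : 0 < r)
    (hconv : ∀ x : EuclideanSpace ℝ (Fin d), ‖x‖ < r →
      Tendsto (fun n : ℕ => g^[n] x) atTop (𝓝 0)) :
    (∀ ε > 0, ∃ δ > 0, ∀ x : EuclideanSpace ℝ (Fin d), ‖x‖ < δ → ∀ n : ℕ, ‖f^[n] x‖ < ε) ∧
      (∃ δ > 0, ∃ a > 0, ∃ b : ℝ, 0 < b ∧ b < 1 ∧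
        ∀ x : EuclideanSpace ℝ (Fin d), ‖x‖ < δ → ∀ n : ℕ, ‖f^[n] x‖ ≤ a * b ^ n * ‖x‖) := by
  
  -- basic facts
  have hg0 : g 0 = 0 := by
    have := hhom 0 le_rfl 0; simpa using this
  have hf0 : f 0 = 0 := by
    obtain ⟨δ, hδ, h⟩ := hfg 1 one_pos
    have h0 := h 0 (by simpa using hδ)
    rw [hg0, norm_zero, mul_zero, sub_zero] at h0
    exact norm_le_zero_iff.mp h0
  have hithom : ∀ (n : ℕ) (α : ℝ), 0 ≤ α → ∀ x : EuclideanSpace ℝ (Fin d), g^[n] (α • x) = α • g^[n] x := by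
    intro n
    induction n with
    | zero => intro α hα x; simp
    | succ n ih =>
      intro α hα x
      rw [Function.iterate_succ_apply, Function.iterate_succ_apply, hhom α hα, ih α hα]
  have hgit0 : ∀ n : ℕ, g^[n] (0 : EuclideanSpace ℝ (Fin d)) = 0 := by
    intro n
    induction n with
    | zero => simp
    | succ n ih => rw [Function.iterate_succ_apply, hg0, ih]
  have hfit0 : ∀ n : ℕ, f^[n] (0 : EuclideanSpace ℝ (Fin d)) = 0 := by
    intro n
    induction n with
    | zero => simp
    | succ n ih => rw [Function.iterate_succ_apply, hf0, ih]
  -- linear bound for g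
  obtain ⟨M₀, hM₀⟩ := (isCompact_sphere (0 : EuclideanSpace ℝ (Fin d)) 1).exists_bound_of_continuousOn hg.continuousOn
  set M : ℝ := max 1 M₀ with hMdef
  have hM1 : (1:ℝ) ≤ M := le_max_left _ _
  have hM0 : (0:ℝ) < M := lt_of_lt_of_le one_pos hM1
  have hsphere_mem : ∀ x : EuclideanSpace ℝ (Fin d), x ≠ 0 → ‖x‖⁻¹ • x ∈ Metric.sphere (0 : EuclideanSpace ℝ (Fin d)) 1 := by
    intro x hx
    have hnx : ‖x‖ ≠ 0 := norm_ne_zero_iff.mpr hx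
    simp [norm_smul, abs_of_nonneg (inv_nonneg.mpr (norm_nonneg x)),
      inv_mul_cancel₀ hnx]
  have hgM : ∀ x : EuclideanSpace ℝ (Fin d), ‖g x‖ ≤ M * ‖x‖ := by
    intro x
    rcases eq_or_ne x 0 with rfl | hx
    · simp [hg0]
    · have hnx : ‖x‖ ≠ 0 := norm_ne_zero_iff.mpr hx
      have hxx : g x = ‖x‖ • g (‖x‖⁻¹ • x) := by
        conv_lhs => rw [← smul_inv_smul₀ hnx x, hhom ‖x‖ (norm_nonneg x)]
      rw [hxx, norm_smul, Real.norm_eq_abs, abs_of_nonneg (norm_nonneg x)]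
      have := hM₀ _ (hsphere_mem x hx)
      calc ‖x‖ * ‖g (‖x‖⁻¹ • x)‖ ≤ ‖x‖ * M₀ := by
            exact mul_le_mul_of_nonneg_left this (norm_nonneg x)
        _ ≤ ‖x‖ * M := mul_le_mul_of_nonneg_left (le_max_right _ _) (norm_nonneg x)
        _ = M * ‖x‖ := mul_comm _ _
  have hgitM : ∀ (n : ℕ) (x : EuclideanSpace ℝ (Fin d)), ‖g^[n] x‖ ≤ M ^ n * ‖x‖ := by
    intro n
    induction n with
    | zero => intro x; simp
    | succ n ih =>
      intro x
      rw [Function.iterate_succ_apply']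
      calc ‖g (g^[n] x)‖ ≤ M * ‖g^[n] x‖ := hgM _
        _ ≤ M * (M ^ n * ‖x‖) := mul_le_mul_of_nonneg_left (ih x) hM0.le
        _ = M ^ (n+1) * ‖x‖ := by ring
  -- pointwise convergence on the sphere
  have hsconv : ∀ u : Metric.sphere (0 : EuclideanSpace ℝ (Fin d)) 1, ∃ n : ℕ, 1 ≤ n ∧ ‖g^[n] (u : EuclideanSpace ℝ (Fin d))‖ < 1/2 := by
    intro ⟨u, hu⟩
    have hnu : ‖u‖ = 1 := by simpa using hu
    have h1 : ‖(r/2) • u‖ < r := by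
      rw [norm_smul, Real.norm_eq_abs, abs_of_nonneg (by linarith : (0:ℝ) ≤ r/2), hnu]
      linarith
    have h2 := hconv _ h1
    have h3 : Tendsto (fun n : ℕ => (r/2) • g^[n] u) atTop (𝓝 0) := by
      have : (fun n : ℕ => g^[n] ((r/2) • u)) = fun n : ℕ => (r/2) • g^[n] u := by
        funext n; exact hithom n (r/2) (by linarith) u
      rwa [this] at h2
    have h4 : Tendsto (fun n : ℕ => g^[n] u) atTop (𝓝 0) := by
      have h5 := h3.const_smul ((r/2)⁻¹)
      simp only [smul_smul, inv_mul_cancel₀ (by positivity : (r/2) ≠ 0), one_smul,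
        smul_zero] at h5
      exact h5
    rw [Metric.tendsto_atTop] at h4
    obtain ⟨N, hN⟩ := h4 (1/2) (by norm_num)
    refine ⟨max N 1, le_max_right _ _, ?_⟩
    have := hN (max N 1) (le_max_left _ _)
    rwa [dist_zero_right] at this
  choose nt hnt1 hnt2 using hsconv
  -- finite subcover
  have hopen : ∀ u : Metric.sphere (0 : EuclideanSpace ℝ (Fin d)) 1,
      IsOpen {y : EuclideanSpace ℝ (Fin d) | ‖g^[nt u] y‖ < 1/2} :=
    fun u => isOpen_lt ((hg.iterate (nt u)).norm) continuous_const
  have hcover : Metric.sphere (0 : EuclideanSpace ℝ (Fin d)) 1 ⊆ ⋃ u : Metric.sphere (0 : EuclideanSpace ℝ (Fin d)) 1,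
      {y : EuclideanSpace ℝ (Fin d) | ‖g^[nt u] y‖ < 1/2} := by
    intro u hu
    exact Set.mem_iUnion.mpr ⟨⟨u, hu⟩, hnt2 ⟨u, hu⟩⟩
  obtain ⟨t, ht⟩ := (isCompact_sphere (0 : EuclideanSpace ℝ (Fin d)) 1).elim_finite_subcover _ hopen hcover
  set N₀ : ℕ := max 1 (t.sup nt) with hN₀def
  have hN₀1 : 1 ≤ N₀ := le_max_left _ _
  have hP : ∀ x : EuclideanSpace ℝ (Fin d), ∃ k : ℕ, 1 ≤ k ∧ k ≤ N₀ ∧ ‖g^[k] x‖ ≤ (1/2) * ‖x‖ := by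
    intro x
    rcases eq_or_ne x 0 with rfl | hx
    · exact ⟨1, le_rfl, hN₀1, by simp [hgit0, hg0]⟩
    · have hnx : ‖x‖ ≠ 0 := norm_ne_zero_iff.mpr hx
      have hu := hsphere_mem x hx
      obtain ⟨i, hit, hiu⟩ := Set.mem_iUnion₂.mp (ht hu)
      have hk : ‖g^[nt i] (‖x‖⁻¹ • x)‖ < 1/2 := hiu
      refine ⟨nt i, hnt1 i, le_max_of_le_right (Finset.le_sup hit), ?_⟩
      have heq : g^[nt i] x = ‖x‖ • g^[nt i] (‖x‖⁻¹ • x) := by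
        conv_lhs => rw [← smul_inv_smul₀ hnx x, hithom (nt i) ‖x‖ (norm_nonneg x)]
      rw [heq, norm_smul, Real.norm_eq_abs, abs_of_nonneg (norm_nonneg x)]
      calc ‖x‖ * ‖g^[nt i] (‖x‖⁻¹ • x)‖ ≤ ‖x‖ * (1/2) :=
            mul_le_mul_of_nonneg_left hk.le (norm_nonneg x)
        _ = (1/2) * ‖x‖ := mul_comm _ _
  -- geometric decay of g iterates
  have hQ : ∀ m : ℕ, ∀ x : EuclideanSpace ℝ (Fin d), ‖g^[m] x‖ ≤ 2 * M ^ N₀ * (1/2)^(m / N₀) * ‖x‖ := by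
    intro m
    induction m using Nat.strong_induction_on with
    | _ m ih =>
      intro x
      rcases lt_or_ge m N₀ with hm | hm
      · rw [Nat.div_eq_of_lt hm, pow_zero, mul_one]
        have h1 : M ^ m ≤ M ^ N₀ := pow_le_pow_right₀ hM1 hm.le
        have h2 : (0:ℝ) < M ^ N₀ := pow_pos hM0 _
        calc ‖g^[m] x‖ ≤ M ^ m * ‖x‖ := hgitM m x
          _ ≤ 2 * M ^ N₀ * ‖x‖ := by nlinarith [norm_nonneg x]
      · obtain ⟨k, hk1, hkN, hc⟩ := hP x
        have hkm : k ≤ m := hkN.trans hm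
        have heq : g^[m] x = g^[m - k] (g^[k] x) := by
          rw [← Function.iterate_add_apply, Nat.sub_add_cancel hkm]
        have hlt : m - k < m := Nat.sub_lt (by omega) (by omega)
        have hih := ih (m - k) hlt (g^[k] x)
        have hdiv : m / N₀ ≤ (m - k)/N₀ + 1 := by
          have h1 : m ≤ (m - k) + N₀ := by omega
          calc m / N₀ ≤ ((m - k) + N₀) / N₀ := Nat.div_le_div_right h1
            _ = (m - k)/N₀ + 1 := Nat.add_div_right _ (by omega)
        have hpow2 : ((1:ℝ)/2)^((m-k)/N₀ + 1) ≤ (1/2)^(m / N₀) :=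
          pow_le_pow_of_le_one (by norm_num) (by norm_num) hdiv
        have h2 : (0:ℝ) < M ^ N₀ := pow_pos hM0 _
        have h3 : (0:ℝ) < (1/2:ℝ)^((m-k)/N₀) := by positivity
        calc ‖g^[m] x‖ = ‖g^[m-k] (g^[k] x)‖ := by rw [heq]
          _ ≤ 2 * M ^ N₀ * (1/2)^((m-k)/N₀) * ‖g^[k] x‖ := hih
          _ ≤ 2 * M ^ N₀ * (1/2)^((m-k)/N₀) * ((1/2) * ‖x‖) := by
            apply mul_le_mul_of_nonneg_left hc; positivity
          _ = 2 * M ^ N₀ * (1/2)^((m-k)/N₀ + 1) * ‖x‖ := by ring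
          _ ≤ 2 * M ^ N₀ * (1/2)^(m / N₀) * ‖x‖ := by
            apply mul_le_mul_of_nonneg_right _ (norm_nonneg x)
            apply mul_le_mul_of_nonneg_left hpow2; positivity
  -- a single contracting time N for g
  obtain ⟨K, hK⟩ := exists_pow_lt_of_lt_one
    (show (0:ℝ) < (4 * (2 * M ^ N₀))⁻¹ by positivity) (show (1:ℝ)/2 < 1 by norm_num)
  set N : ℕ := N₀ * (K + 1) with hNdef
  have hNpos : 0 < N := by positivity
  have hgN : ∀ x : EuclideanSpace ℝ (Fin d), ‖g^[N] x‖ ≤ (1/4) * ‖x‖ := by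
    intro x
    have h1 := hQ N x
    have h2 : N / N₀ = K + 1 := by
      rw [hNdef, Nat.mul_div_cancel_left _ (by omega : 0 < N₀)]
    rw [h2] at h1
    have h3 : ((1:ℝ)/2)^(K+1) ≤ (1/2)^K :=
      pow_le_pow_of_le_one (by norm_num) (by norm_num) (by omega)
    have h4 : 2 * M ^ N₀ * (1/2)^(K+1) ≤ 1/4 := by
      have h5 : (0:ℝ) < M ^ N₀ := pow_pos hM0 _
      have h6 : ((1:ℝ)/2)^(K+1) ≤ (4 * (2 * M ^ N₀))⁻¹ := h3.trans hK.le
      calc 2 * M ^ N₀ * (1/2)^(K+1) ≤ 2 * M ^ N₀ * (4 * (2 * M ^ N₀))⁻¹ :=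
            mul_le_mul_of_nonneg_left h6 (by positivity)
        _ = 1/4 := by
            have : (2 * M ^ N₀) ≠ 0 := by positivity
            field_simp
    calc ‖g^[N] x‖ ≤ 2 * M ^ N₀ * (1/2)^(K+1) * ‖x‖ := h1
      _ ≤ (1/4) * ‖x‖ := mul_le_mul_of_nonneg_right h4 (norm_nonneg x)
    -- transfer the contraction to f
  have hL : ∀ (k : ℕ) (η : ℝ), 0 < η → ∃ δ > 0, ∀ x : EuclideanSpace ℝ (Fin d), ‖x‖ ≤ δ →
      ∀ j ≤ k, ‖f^[j] x - g^[j] x‖ ≤ η * ‖x‖ := by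
    intro k
    induction k with
    | zero =>
      intro η hη
      refine ⟨1, one_pos, fun x _ j hj => ?_⟩
      interval_cases j
      simp only [Function.iterate_zero, id_eq, sub_self, norm_zero]
      positivity
    | succ k ih =>
      intro η hη
      set R : ℝ := M ^ k + 2 with hRdef
      have hUC : UniformContinuousOn g (Metric.closedBall 0 R) :=
        (isCompact_closedBall (0 : EuclideanSpace ℝ (Fin d)) R).uniformContinuousOn_of_continuous
          hg.continuousOn
      obtain ⟨η₁', hη₁', hUC'⟩ := Metric.uniformContinuousOn_iff_le.mp hUC (η/2) (half_pos hη)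
      set η₁ : ℝ := min η₁' (min 1 η) with hη₁def
      have hη₁pos : 0 < η₁ := lt_min hη₁' (lt_min one_pos hη)
      have hη₁le1 : η₁ ≤ 1 := (min_le_right _ _).trans (min_le_left _ _)
      have hη₁leη : η₁ ≤ η := (min_le_right _ _).trans (min_le_right _ _)
      have hη₁le' : η₁ ≤ η₁' := min_le_left _ _
      obtain ⟨δ₁, hδ₁, hIH⟩ := ih η₁ hη₁pos
      have hMk1 : (0:ℝ) < M ^ k + 1 := by positivity
      obtain ⟨δ₂, hδ₂, hε⟩ := hfg (η / (2 * (M ^ k + 1))) (by positivity)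
      refine ⟨min δ₁ (δ₂ / (2 * (M ^ k + 1))), by positivity, ?_⟩
      intro x hx j hj
      have hxδ₁ : ‖x‖ ≤ δ₁ := hx.trans (min_le_left _ _)
      rcases Nat.lt_succ_iff_lt_or_eq.mp (Nat.lt_succ_of_le hj) with hjk | rfl
      · have hjk' : j ≤ k := Nat.lt_succ_iff.mp hjk
        calc ‖f^[j] x - g^[j] x‖ ≤ η₁ * ‖x‖ := hIH x hxδ₁ j hjk'
          _ ≤ η * ‖x‖ := mul_le_mul_of_nonneg_right hη₁leη (norm_nonneg x)
      · rcases eq_or_ne x 0 with rfl | hx0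
        · simp [hgit0, hfit0]
        · have ht0 : (0:ℝ) < ‖x‖ := norm_pos_iff.mpr hx0
          have hdk : ‖f^[k] x - g^[k] x‖ ≤ η₁ * ‖x‖ := hIH x hxδ₁ k le_rfl
          have hgk : ‖g^[k] x‖ ≤ M ^ k * ‖x‖ := hgitM k x
          have hfk : ‖f^[k] x‖ ≤ (M ^ k + 1) * ‖x‖ := by
            calc ‖f^[k] x‖ = ‖g^[k] x + (f^[k] x - g^[k] x)‖ := by congr 1; abel
              _ ≤ ‖g^[k] x‖ + ‖f^[k] x - g^[k] x‖ := norm_add_le _ _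
              _ ≤ M ^ k * ‖x‖ + η₁ * ‖x‖ := add_le_add hgk hdk
              _ ≤ (M ^ k + 1) * ‖x‖ := by nlinarith [norm_nonneg x]
          have hfk_small : ‖f^[k] x‖ < δ₂ := by
            have h1 : ‖x‖ ≤ δ₂ / (2 * (M ^ k + 1)) := hx.trans (min_le_right _ _)
            calc ‖f^[k] x‖ ≤ (M ^ k + 1) * ‖x‖ := hfk
              _ ≤ (M ^ k + 1) * (δ₂ / (2 * (M ^ k + 1))) :=
                  mul_le_mul_of_nonneg_left h1 hMk1.le
              _ = δ₂ / 2 := by field_simp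
              _ < δ₂ := by linarith
          have h1 : ‖f (f^[k] x) - g (f^[k] x)‖ ≤ (η/2) * ‖x‖ := by
            calc ‖f (f^[k] x) - g (f^[k] x)‖ ≤ (η / (2 * (M ^ k + 1))) * ‖f^[k] x‖ :=
                  hε _ hfk_small
              _ ≤ (η / (2 * (M ^ k + 1))) * ((M ^ k + 1) * ‖x‖) := by
                  apply mul_le_mul_of_nonneg_left hfk; positivity
              _ = (η/2) * ‖x‖ := by field_simp
          -- second term via uniform continuity after rescaling
          set u : EuclideanSpace ℝ (Fin d) := ‖x‖⁻¹ • f^[k] x with hudef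
          set v : EuclideanSpace ℝ (Fin d) := ‖x‖⁻¹ • g^[k] x with hvdef
          have hnu : ‖u‖ ≤ M ^ k + 1 := by
            rw [hudef, norm_smul, Real.norm_eq_abs, abs_of_nonneg (by positivity)]
            rw [inv_mul_le_iff₀ ht0]
            calc ‖f^[k] x‖ ≤ (M ^ k + 1) * ‖x‖ := hfk
              _ = ‖x‖ * (M ^ k + 1) := mul_comm _ _
          have hnv : ‖v‖ ≤ M ^ k := by
            rw [hvdef, norm_smul, Real.norm_eq_abs, abs_of_nonneg (by positivity)]
            rw [inv_mul_le_iff₀ ht0]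
            calc ‖g^[k] x‖ ≤ M ^ k * ‖x‖ := hgk
              _ = ‖x‖ * M ^ k := mul_comm _ _
          have humem : u ∈ Metric.closedBall (0 : EuclideanSpace ℝ (Fin d)) R := by
            rw [Metric.mem_closedBall, dist_zero_right]
            calc ‖u‖ ≤ M ^ k + 1 := hnu
              _ ≤ R := by rw [hRdef]; linarith
          have hvmem : v ∈ Metric.closedBall (0 : EuclideanSpace ℝ (Fin d)) R := by
            rw [Metric.mem_closedBall, dist_zero_right]
            have : (0:ℝ) < M ^ k := pow_pos hM0 k
            calc ‖v‖ ≤ M ^ k := hnv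
              _ ≤ R := by rw [hRdef]; linarith
          have huv : dist u v ≤ η₁' := by
            rw [dist_eq_norm, hudef, hvdef, ← smul_sub, norm_smul, Real.norm_eq_abs,
              abs_of_nonneg (by positivity)]
            rw [inv_mul_le_iff₀ ht0]
            calc ‖f^[k] x - g^[k] x‖ ≤ η₁ * ‖x‖ := hdk
              _ ≤ η₁' * ‖x‖ := mul_le_mul_of_nonneg_right hη₁le' (norm_nonneg x)
              _ = ‖x‖ * η₁' := mul_comm _ _
          have hguv : dist (g u) (g v) ≤ η / 2 := hUC' u humem v hvmem huv
          have hfku : f^[k] x = ‖x‖ • u := by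
            rw [hudef, smul_inv_smul₀ (norm_ne_zero_iff.mpr hx0)]
          have hgkv : g^[k] x = ‖x‖ • v := by
            rw [hvdef, smul_inv_smul₀ (norm_ne_zero_iff.mpr hx0)]
          have h2 : ‖g (f^[k] x) - g (g^[k] x)‖ ≤ (η/2) * ‖x‖ := by
            rw [hfku, hgkv, hhom _ (norm_nonneg x), hhom _ (norm_nonneg x), ← smul_sub,
              norm_smul, Real.norm_eq_abs, abs_of_nonneg (norm_nonneg x)]
            rw [← dist_eq_norm]
            calc ‖x‖ * dist (g u) (g v) ≤ ‖x‖ * (η/2) :=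
                  mul_le_mul_of_nonneg_left hguv (norm_nonneg x)
              _ = (η/2) * ‖x‖ := mul_comm _ _
          calc ‖f^[k+1] x - g^[k+1] x‖
              = ‖(f (f^[k] x) - g (f^[k] x)) + (g (f^[k] x) - g (g^[k] x))‖ := by
                rw [Function.iterate_succ_apply', Function.iterate_succ_apply']
                congr 1
                abel
            _ ≤ ‖f (f^[k] x) - g (f^[k] x)‖ + ‖g (f^[k] x) - g (g^[k] x)‖ := norm_add_le _ _
            _ ≤ (η/2) * ‖x‖ + (η/2) * ‖x‖ := add_le_add h1 h2
            _ = η * ‖x‖ := by ring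
  obtain ⟨δ₀, hδ₀, hLN⟩ := hL N (1/4) (by norm_num)
  set C : ℝ := M ^ N + 1 with hCdef
  have hC0 : (0:ℝ) < C := by positivity
  have hC1 : (1:ℝ) ≤ C := by
    have : (0:ℝ) < M ^ N := pow_pos hM0 N
    rw [hCdef]; linarith
  have hfN : ∀ x : EuclideanSpace ℝ (Fin d), ‖x‖ ≤ δ₀ → ‖f^[N] x‖ ≤ (1/2) * ‖x‖ := by
    intro x hx
    calc ‖f^[N] x‖ = ‖g^[N] x + (f^[N] x - g^[N] x)‖ := by congr 1; abel
      _ ≤ ‖g^[N] x‖ + ‖f^[N] x - g^[N] x‖ := norm_add_le _ _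
      _ ≤ (1/4) * ‖x‖ + (1/4) * ‖x‖ := add_le_add (hgN x) (hLN x hx N le_rfl)
      _ = (1/2) * ‖x‖ := by ring
  have hfs : ∀ x : EuclideanSpace ℝ (Fin d), ‖x‖ ≤ δ₀ → ∀ s ≤ N, ‖f^[s] x‖ ≤ C * ‖x‖ := by
    intro x hx s hs
    have h1 : M ^ s ≤ M ^ N := pow_le_pow_right₀ hM1 hs
    calc ‖f^[s] x‖ = ‖g^[s] x + (f^[s] x - g^[s] x)‖ := by congr 1; abel
      _ ≤ ‖g^[s] x‖ + ‖f^[s] x - g^[s] x‖ := norm_add_le _ _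
      _ ≤ M ^ s * ‖x‖ + (1/4) * ‖x‖ := add_le_add (hgitM s x) (hLN x hx s hs)
      _ = (M ^ s + 1/4) * ‖x‖ := by ring
      _ ≤ C * ‖x‖ := by
          apply mul_le_mul_of_nonneg_right _ (norm_nonneg x)
          rw [hCdef]; linarith
  have hiter : ∀ x : EuclideanSpace ℝ (Fin d), ‖x‖ ≤ δ₀ →
      ∀ q : ℕ, ‖f^[N * q] x‖ ≤ (1/2)^q * ‖x‖ := by
    intro x hx q
    induction q with
    | zero => simp
    | succ q ih =>
      have hhalf : ((1:ℝ)/2)^q ≤ 1 := pow_le_one₀ (by norm_num) (by norm_num)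
      have hy : ‖f^[N * q] x‖ ≤ δ₀ := by
        calc ‖f^[N * q] x‖ ≤ (1/2)^q * ‖x‖ := ih
          _ ≤ 1 * ‖x‖ := mul_le_mul_of_nonneg_right hhalf (norm_nonneg x)
          _ = ‖x‖ := one_mul _
          _ ≤ δ₀ := hx
      have heq : f^[N * (q+1)] x = f^[N] (f^[N * q] x) := by
        rw [← Function.iterate_add_apply]
        congr 1
        ring
      rw [heq]
      calc ‖f^[N] (f^[N * q] x)‖ ≤ (1/2) * ‖f^[N * q] x‖ := hfN _ hy
        _ ≤ (1/2) * ((1/2)^q * ‖x‖) := by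
            apply mul_le_mul_of_nonneg_left ih; norm_num
        _ = (1/2)^(q+1) * ‖x‖ := by ring
  have hmain : ∀ x : EuclideanSpace ℝ (Fin d), ‖x‖ ≤ δ₀ →
      ∀ n : ℕ, ‖f^[n] x‖ ≤ C * (1/2)^(n / N) * ‖x‖ := by
    intro x hx n
    have heq : f^[n] x = f^[n % N] (f^[N * (n / N)] x) := by
      conv_lhs => rw [← Nat.mod_add_div n N]
      rw [Function.iterate_add_apply]
    have hhalf : ((1:ℝ)/2)^(n / N) ≤ 1 := pow_le_one₀ (by norm_num) (by norm_num)
    have hy1 : ‖f^[N * (n / N)] x‖ ≤ (1/2)^(n / N) * ‖x‖ := hiter x hx _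
    have hy2 : ‖f^[N * (n / N)] x‖ ≤ δ₀ := by
      calc ‖f^[N * (n / N)] x‖ ≤ (1/2)^(n / N) * ‖x‖ := hy1
        _ ≤ 1 * ‖x‖ := mul_le_mul_of_nonneg_right hhalf (norm_nonneg x)
        _ = ‖x‖ := one_mul _
        _ ≤ δ₀ := hx
    rw [heq]
    calc ‖f^[n % N] (f^[N * (n / N)] x)‖ ≤ C * ‖f^[N * (n / N)] x‖ :=
          hfs _ hy2 _ (le_of_lt (Nat.mod_lt _ hNpos))
      _ ≤ C * ((1/2)^(n / N) * ‖x‖) := mul_le_mul_of_nonneg_left hy1 hC0.le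
      _ = C * (1/2)^(n / N) * ‖x‖ := by ring
  -- convert to exponential form
  set b : ℝ := (1/2 : ℝ) ^ ((N:ℝ)⁻¹) with hbdef
  have hNR : (0:ℝ) < (N:ℝ) := by exact_mod_cast hNpos
  have hb0 : 0 < b := Real.rpow_pos_of_pos (by norm_num) _
  have hb1 : b < 1 := Real.rpow_lt_one (by norm_num) (by norm_num) (by positivity)
  have hbn : ∀ n : ℕ, ((1:ℝ)/2)^(n / N) ≤ 2 * b ^ n := by
    intro n
    have h1 : (b:ℝ) ^ n = (1/2:ℝ) ^ (((N:ℝ)⁻¹) * n) := by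
      rw [hbdef, ← Real.rpow_natCast ((1/2:ℝ) ^ ((N:ℝ)⁻¹)) n,
        ← Real.rpow_mul (by norm_num : (0:ℝ) ≤ 1/2)]
    have h2 : ((1:ℝ)/2)^(n / N) = (1/2:ℝ) ^ (((n / N : ℕ)):ℝ) :=
      (Real.rpow_natCast _ _).symm
    have h3 : ((N:ℝ)⁻¹) * n ≤ ((n / N : ℕ):ℝ) + 1 := by
      rw [inv_mul_le_iff₀ hNR]
      have h4 : n < N * (n / N + 1) := by
        have h := Nat.mod_add_div n N
        have h' : n % N + N * (n / N) < N + N * (n / N) :=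
          Nat.add_lt_add_right (Nat.mod_lt n hNpos) _
        calc n = n % N + N * (n / N) := h.symm
          _ < N + N * (n / N) := h'
          _ = N * (n / N + 1) := by ring
      have h5 : (n:ℝ) < (N:ℝ) * ((n / N : ℕ) + 1) := by exact_mod_cast h4
      linarith
    have h6 : (1/2:ℝ) ^ (((n / N : ℕ):ℝ) + 1) ≤ (1/2:ℝ) ^ (((N:ℝ)⁻¹) * n) :=
      Real.rpow_le_rpow_of_exponent_ge (by norm_num) (by norm_num) h3
    have h7 : (1/2:ℝ) ^ (((n / N : ℕ):ℝ) + 1)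
        = (1/2:ℝ) ^ (((n / N : ℕ)):ℝ) * (1/2) := by
      rw [Real.rpow_add (by norm_num : (0:ℝ) < 1/2), Real.rpow_one]
    rw [h2, h1]
    nlinarith [h6, h7]
  constructor
  · intro ε hε
    refine ⟨min δ₀ (ε / C), by positivity, fun x hx n => ?_⟩
    have hx1 : ‖x‖ ≤ δ₀ := le_of_lt (lt_of_lt_of_le hx (min_le_left _ _))
    have hx2 : ‖x‖ < ε / C := lt_of_lt_of_le hx (min_le_right _ _)
    have hhalf : ((1:ℝ)/2)^(n / N) ≤ 1 := pow_le_one₀ (by norm_num) (by norm_num)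
    calc ‖f^[n] x‖ ≤ C * (1/2)^(n / N) * ‖x‖ := hmain x hx1 n
      _ ≤ C * 1 * ‖x‖ := by
          apply mul_le_mul_of_nonneg_right _ (norm_nonneg x)
          exact mul_le_mul_of_nonneg_left hhalf hC0.le
      _ = C * ‖x‖ := by ring
      _ < C * (ε / C) := by exact mul_lt_mul_of_pos_left hx2 hC0
      _ = ε := by field_simp
  · refine ⟨δ₀, hδ₀, 2 * C, by positivity, b, hb0, hb1, fun x hx n => ?_⟩
    calc ‖f^[n] x‖ ≤ C * (1/2)^(n / N) * ‖x‖ := hmain x hx.le n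
      _ ≤ C * (2 * b ^ n) * ‖x‖ := by
          apply mul_le_mul_of_nonneg_right _ (norm_nonneg x)
          exact mul_le_mul_of_nonneg_left (hbn n) hC0.le
      _ = 2 * C * b ^ n * ‖x‖ := by ring
end

section
/- Let g : ℝ^d → ℝ^d be continuous and linearly homogeneous, and let f : ℝ^d → ℝ^d be continuous with f(x) − g(x) = o(‖x‖) as x → 0. If 0 is an exponentially stable fixed point of f, then there exists r > 0 such that g^n(x) → 0 as n → ∞ for all x with ‖x‖ < r. -/
open Filter Topology

set_option maxHeartbeats 1000000 in
/-- If `g : ℝ^d → ℝ^d` is continuous and linearly homogeneous,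
`f : ℝ^d → ℝ^d` is continuous with `f x - g x = o(‖x‖)` as `x → 0`, and `0` is an
exponentially stable fixed point of `f`, then there exists `r > 0` such that
`g^[n] x → 0` for all `‖x‖ < r`. -/
theorem stmt4 {d : ℕ}
    (g : EuclideanSpace ℝ (Fin d) → EuclideanSpace ℝ (Fin d))
    (hg : Continuous g)
    (hhom : ∀ (α : ℝ), 0 ≤ α → ∀ x, g (α • x) = α • g x)
    (f : EuclideanSpace ℝ (Fin d) → EuclideanSpace ℝ (Fin d))
    (hf : Continuous f)
    (hfg : ∀ ε > 0, ∃ δ > 0, ∀ x : EuclideanSpace ℝ (Fin d), ‖x‖ < δ →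
      ‖f x - g x‖ ≤ ε * ‖x‖)
    (hLyap : ∀ ε > 0, ∃ δ > 0, ∀ x : EuclideanSpace ℝ (Fin d), ‖x‖ < δ →
      ∀ n : ℕ, ‖f^[n] x‖ < ε)
    (hexp : ∃ δ > 0, ∃ a > 0, ∃ b : ℝ, 0 < b ∧ b < 1 ∧
      ∀ x : EuclideanSpace ℝ (Fin d), ‖x‖ < δ → ∀ n : ℕ, ‖f^[n] x‖ ≤ a * b ^ n * ‖x‖) :
    ∃ r > 0, ∀ x : EuclideanSpace ℝ (Fin d), ‖x‖ < r →
      Tendsto (fun n : ℕ => g^[n] x) atTop (𝓝 0) := by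
  -- g 0 = 0
  have hg0 : g 0 = 0 := by
    have := hhom 0 le_rfl 0
    simpa using this
  -- linear growth bound for g
  obtain ⟨C, hC⟩ : ∃ C, ∀ y ∈ Metric.closedBall (0:EuclideanSpace ℝ (Fin d)) 1, ‖g y‖ ≤ C :=
    (isCompact_closedBall (0:EuclideanSpace ℝ (Fin d)) 1).exists_bound_of_continuousOn hg.continuousOn
  set L : ℝ := max C 1 with hLdef
  have hL1 : (1:ℝ) ≤ L := le_max_right _ _
  have hL : ∀ y : EuclideanSpace ℝ (Fin d), ‖g y‖ ≤ L * ‖y‖ := by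
    intro y
    rcases eq_or_ne y 0 with rfl | hy
    · simp [hg0]
    · have hny : (0:ℝ) < ‖y‖ := norm_pos_iff.2 hy
      have h1 : ‖(‖y‖⁻¹ • y : EuclideanSpace ℝ (Fin d))‖ ≤ 1 := by
        rw [norm_smul, norm_inv, norm_norm, inv_mul_cancel₀ hny.ne']
      have h2 : g y = ‖y‖ • g (‖y‖⁻¹ • y) := by
        rw [← hhom (‖y‖) (norm_nonneg y) (‖y‖⁻¹ • y), smul_smul,
          mul_inv_cancel₀ hny.ne', one_smul]
      rw [h2, norm_smul, norm_norm, mul_comm]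
      have := hC _ (by simpa [Metric.mem_closedBall, dist_zero_right] using h1)
      have : ‖g (‖y‖⁻¹ • y)‖ ≤ L := this.trans (le_max_left _ _)
      nlinarith
  have hLpos : (0:ℝ) < L := lt_of_lt_of_le one_pos hL1
  have hLk : ∀ (k : ℕ) (y : EuclideanSpace ℝ (Fin d)), ‖g^[k] y‖ ≤ L ^ k * ‖y‖ := by
    intro k
    induction k with
    | zero => intro y; simp
    | succ k ih =>
      intro y
      rw [Function.iterate_succ_apply']
      calc ‖g (g^[k] y)‖ ≤ L * ‖g^[k] y‖ := hL _
        _ ≤ L * (L ^ k * ‖y‖) := by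
            exact mul_le_mul_of_nonneg_left (ih y) hLpos.le
        _ = L ^ (k+1) * ‖y‖ := by ring
  -- key limit: t⁻¹ • f^[k] (t • x) → g^[k] x as t → 0+
  have key : ∀ (k : ℕ) (x : EuclideanSpace ℝ (Fin d)),
      Tendsto (fun t : ℝ => t⁻¹ • f^[k] (t • x)) (𝓝[>] (0:ℝ)) (𝓝 (g^[k] x)) := by
    intro k x
    induction k with
    | zero =>
      apply Tendsto.congr' (f₁ := fun _ => x)
      · filter_upwards [self_mem_nhdsWithin] with t (ht : (0:ℝ) < t)
        simp [smul_smul, inv_mul_cancel₀ ht.ne']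
      · simpa using tendsto_const_nhds
    | succ k ih =>
      have heq : (fun t : ℝ => t⁻¹ • (f (f^[k] (t • x)) - g (f^[k] (t • x)))
              + g (t⁻¹ • f^[k] (t • x)))
          =ᶠ[𝓝[>] (0:ℝ)] fun t : ℝ => t⁻¹ • f^[k+1] (t • x) := by
        filter_upwards [self_mem_nhdsWithin] with t (ht : (0:ℝ) < t)
        have hu : f^[k] (t • x) = t • (t⁻¹ • f^[k] (t • x)) := by
          rw [smul_smul, mul_inv_cancel₀ ht.ne', one_smul]
        rw [Function.iterate_succ_apply']
        nth_rewrite 2 [hu]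
        rw [hhom t ht.le, smul_sub, smul_smul, inv_mul_cancel₀ ht.ne', one_smul]
        abel
      rw [Function.iterate_succ_apply']
      refine Tendsto.congr' heq ?_
      have h2 : Tendsto (fun t : ℝ => g (t⁻¹ • f^[k] (t • x))) (𝓝[>] (0:ℝ))
          (𝓝 (g (g^[k] x))) := (hg.tendsto _).comp ih
      have h1 : Tendsto (fun t : ℝ => t⁻¹ • (f (f^[k] (t • x)) - g (f^[k] (t • x))))
          (𝓝[>] (0:ℝ)) (𝓝 0) := by
        rw [NormedAddCommGroup.tendsto_nhds_zero]
        intro ε hε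
        set Cx : ℝ := ‖g^[k] x‖ + 1 with hCx
        have hCxpos : (0:ℝ) < Cx := by positivity
        obtain ⟨δ', hδ', hδ'2⟩ := hfg (ε / (2 * Cx)) (by positivity)
        have hvlt : ∀ᶠ t in 𝓝[>] (0:ℝ), ‖t⁻¹ • f^[k] (t • x)‖ < Cx :=
          (ih.norm).eventually_lt_const (by simp [hCx])
        have htlt : ∀ᶠ t in 𝓝[>] (0:ℝ), t < δ' / Cx :=
          eventually_nhdsWithin_of_eventually_nhds
            (Filter.Tendsto.eventually_lt_const (by positivity) tendsto_id)
        filter_upwards [self_mem_nhdsWithin, hvlt, htlt] with t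
          (ht : (0:ℝ) < t) hv htl
        have hu : f^[k] (t • x) = t • (t⁻¹ • f^[k] (t • x)) := by
          rw [smul_smul, mul_inv_cancel₀ ht.ne', one_smul]
        have hun : ‖f^[k] (t • x)‖ = t * ‖t⁻¹ • f^[k] (t • x)‖ := by
          rw [norm_smul, norm_inv, Real.norm_eq_abs, abs_of_pos ht,
            ← mul_assoc, mul_inv_cancel₀ ht.ne', one_mul]
        have husmall : ‖f^[k] (t • x)‖ < δ' := by
          rw [hun]
          calc t * ‖t⁻¹ • f^[k] (t • x)‖ ≤ t * Cx := by nlinarith [norm_nonneg (t⁻¹ • f^[k] (t • x))]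
            _ < (δ' / Cx) * Cx := by nlinarith
            _ = δ' := by field_simp
        have hb := hδ'2 _ husmall
        rw [norm_smul, norm_inv, Real.norm_eq_abs, abs_of_pos ht]
        calc t⁻¹ * ‖f (f^[k] (t • x)) - g (f^[k] (t • x))‖
            ≤ t⁻¹ * (ε / (2 * Cx) * ‖f^[k] (t • x)‖) := by
              exact mul_le_mul_of_nonneg_left hb (by positivity)
          _ = ε / (2 * Cx) * (t⁻¹ * ‖f^[k] (t • x)‖) := by ring
          _ = ε / (2 * Cx) * ‖t⁻¹ • f^[k] (t • x)‖ := by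
              rw [hun]; field_simp
          _ ≤ ε / (2 * Cx) * Cx := mul_le_mul_of_nonneg_left hv.le (by positivity)
          _ = ε / 2 := by field_simp
          _ < ε := by linarith
      simpa using h1.add h2
  -- choose N with contraction
  obtain ⟨δ, hδ, a, ha, b, hb0, hb1, hstab⟩ := hexp
  have htend : Tendsto (fun n : ℕ => a * b ^ n) atTop (𝓝 0) := by
    simpa using (tendsto_pow_atTop_nhds_zero_of_lt_one hb0.le hb1).const_mul a
  obtain ⟨N₀, hN₀⟩ := (htend.eventually_lt_const (by norm_num : (0:ℝ) < 1/2)).exists_forall_of_atTop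
  set N : ℕ := max N₀ 1 with hNdef
  have hNpos : 0 < N := lt_of_lt_of_le one_pos (le_max_right _ _)
  have habN : a * b ^ N < 1/2 := hN₀ N (le_max_left _ _)
  -- contraction of g^[N]
  have hhalf : ∀ x : EuclideanSpace ℝ (Fin d), ‖g^[N] x‖ ≤ (1/2) * ‖x‖ := by
    intro x
    have hev : ∀ᶠ t in 𝓝[>] (0:ℝ), ‖t⁻¹ • f^[N] (t • x)‖ ≤ (1/2) * ‖x‖ := by
      have htlt : ∀ᶠ t in 𝓝[>] (0:ℝ), t < δ / (‖x‖ + 1) :=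
        eventually_nhdsWithin_of_eventually_nhds
          (Filter.Tendsto.eventually_lt_const (by positivity) tendsto_id)
      filter_upwards [self_mem_nhdsWithin, htlt] with t (ht : (0:ℝ) < t) htl
      have hsm : ‖t • x‖ < δ := by
        rw [norm_smul, Real.norm_eq_abs, abs_of_pos ht]
        have hx1 : ‖x‖ < ‖x‖ + 1 := by linarith
        calc t * ‖x‖ ≤ t * (‖x‖ + 1) := by nlinarith [norm_nonneg x]
          _ < (δ / (‖x‖ + 1)) * (‖x‖ + 1) := by nlinarith [norm_nonneg x]
          _ = δ := by field_simp
      have := hstab _ hsm N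
      rw [norm_smul, norm_inv, Real.norm_eq_abs, abs_of_pos ht]
      have hnt : ‖t • x‖ = t * ‖x‖ := by
        rw [norm_smul, Real.norm_eq_abs, abs_of_pos ht]
      rw [hnt] at this
      have h3 : ‖f^[N] (t • x)‖ ≤ (1/2) * (t * ‖x‖) := by
        nlinarith [this, habN, mul_nonneg ht.le (norm_nonneg x)]
      calc t⁻¹ * ‖f^[N] (t • x)‖ ≤ t⁻¹ * ((1/2) * (t * ‖x‖)) := by
            exact mul_le_mul_of_nonneg_left h3 (by positivity)
        _ = (1/2) * ‖x‖ := by field_simp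
    exact le_of_tendsto (key N x).norm hev
  -- iterate contraction
  have hpow : ∀ (q : ℕ) (x : EuclideanSpace ℝ (Fin d)), ‖g^[N * q] x‖ ≤ (1/2) ^ q * ‖x‖ := by
    intro q
    induction q with
    | zero => intro x; simp
    | succ q ih =>
      intro x
      have : N * (q + 1) = N * q + N := by ring
      rw [this, Function.iterate_add_apply]
      calc ‖g^[N*q] (g^[N] x)‖ ≤ (1/2)^q * ‖g^[N] x‖ := ih _
        _ ≤ (1/2)^q * ((1/2) * ‖x‖) := by
            exact mul_le_mul_of_nonneg_left (hhalf x) (by positivity)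
        _ = (1/2)^(q+1) * ‖x‖ := by ring
  refine ⟨1, one_pos, fun x _ => ?_⟩
  rw [tendsto_zero_iff_norm_tendsto_zero]
  have hbound : ∀ n : ℕ, ‖g^[n] x‖ ≤ L ^ N * ((1/2) ^ (n / N) * ‖x‖) := by
    intro n
    have hsplit : n = n % N + N * (n / N) := by
      rw [Nat.add_comm]; exact (Nat.div_add_mod n N).symm
    calc ‖g^[n] x‖ = ‖g^[n % N] (g^[N * (n / N)] x)‖ := by
          rw [← Function.iterate_add_apply, ← hsplit]
      _ ≤ L ^ (n % N) * ‖g^[N * (n / N)] x‖ := hLk _ _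
      _ ≤ L ^ N * ‖g^[N * (n / N)] x‖ := by
          exact mul_le_mul_of_nonneg_right
            (pow_le_pow_right₀ hL1 (Nat.mod_lt _ hNpos).le) (norm_nonneg _)
      _ ≤ L ^ N * ((1/2) ^ (n / N) * ‖x‖) := by
          exact mul_le_mul_of_nonneg_left (hpow _ _) (by positivity)
  have hdiv : Tendsto (fun n : ℕ => n / N) atTop atTop := by
    refine tendsto_atTop_atTop.2 fun m => ⟨m * N, fun n hn => ?_⟩
    exact (Nat.le_div_iff_mul_le hNpos).2 hn
  have hb2 : Tendsto (fun n : ℕ => L ^ N * ((1/2:ℝ) ^ (n / N) * ‖x‖)) atTop (𝓝 0) := by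
    have := ((tendsto_pow_atTop_nhds_zero_of_lt_one (by norm_num) (by norm_num :
        (1/2:ℝ) < 1)).comp hdiv).mul_const ‖x‖
    simpa using this.const_mul (L ^ N)
  exact squeeze_zero (fun n => norm_nonneg _) hbound hb2
end

section
/- Let d ≥ 2 and let g : ℝ^d → ℝ^d be continuous and linearly homogeneous with g(x) = 0 only for x = 0. If 0 is a Lyapunov stable fixed point of g, then λ(μ) ≤ 0 for every ergodic G-invariant Borel probability measure μ on S^{d-1}. -/
open Filter Topology MeasureTheory

/-- Let `d ≥ 2` and let `g : ℝ^d → ℝ^d` be continuous and linearly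
homogeneous with `g x = 0` only for `x = 0`, and let `G : S^{d-1} → S^{d-1}` be the
induced sphere map. If `0` is a Lyapunov stable fixed point of `g`, then
`λ(μ) = ∫ log ‖g z‖ dμ ≤ 0` for every ergodic `G`-invariant Borel probability measure
`μ` on `S^{d-1}`. -/
theorem stmt7 {d : ℕ} (hd : 2 ≤ d)
    (g : EuclideanSpace ℝ (Fin d) → EuclideanSpace ℝ (Fin d))
    (hg : Continuous g)
    (hhom : ∀ (α : ℝ), 0 ≤ α → ∀ x, g (α • x) = α • g x)
    (hg0 : ∀ x, g x = 0 → x = 0)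
    (G : Metric.sphere (0 : EuclideanSpace ℝ (Fin d)) 1 →
      Metric.sphere (0 : EuclideanSpace ℝ (Fin d)) 1)
    (hG : ∀ z : Metric.sphere (0 : EuclideanSpace ℝ (Fin d)) 1,
      (G z : EuclideanSpace ℝ (Fin d)) =
        ‖g (z : EuclideanSpace ℝ (Fin d))‖⁻¹ • g (z : EuclideanSpace ℝ (Fin d)))
    (hstab : ∀ ε > 0, ∃ δ > 0, ∀ x : EuclideanSpace ℝ (Fin d), ‖x‖ < δ →
      ∀ n : ℕ, ‖g^[n] x‖ < ε) :
    ∀ μ : Measure (Metric.sphere (0 : EuclideanSpace ℝ (Fin d)) 1),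
      IsProbabilityMeasure μ → μ.map G = μ →
      (∀ s : Set (Metric.sphere (0 : EuclideanSpace ℝ (Fin d)) 1),
        MeasurableSet s → G ⁻¹' s = s → μ s = 0 ∨ μ s = 1) →
      (∫ z, Real.log ‖g (z : EuclideanSpace ℝ (Fin d))‖ ∂μ) ≤ 0 := by
  intro μ hprob hinv _herg
  haveI := hprob
  -- basic nonvanishing facts
  have hnz : ∀ z : Metric.sphere (0 : EuclideanSpace ℝ (Fin d)) 1,
      ‖(z : EuclideanSpace ℝ (Fin d))‖ = 1 := fun z => by
    simpa using mem_sphere_zero_iff_norm.mp z.2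
  have hz_ne : ∀ z : Metric.sphere (0 : EuclideanSpace ℝ (Fin d)) 1,
      (z : EuclideanSpace ℝ (Fin d)) ≠ 0 := by
    intro z hz0
    have := hnz z
    rw [hz0] at this
    simp at this
  have hgz_ne : ∀ z : Metric.sphere (0 : EuclideanSpace ℝ (Fin d)) 1,
      g (z : EuclideanSpace ℝ (Fin d)) ≠ 0 := fun z h => hz_ne z (hg0 _ h)
  have hgz_pos : ∀ z : Metric.sphere (0 : EuclideanSpace ℝ (Fin d)) 1,
      0 < ‖g (z : EuclideanSpace ℝ (Fin d))‖ := fun z => norm_pos_iff.mpr (hgz_ne z)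
  -- continuity of G
  have hGcont : Continuous G := by
    apply continuous_induced_rng.mpr
    have : (Subtype.val ∘ G) = fun z : Metric.sphere (0 : EuclideanSpace ℝ (Fin d)) 1 =>
        ‖g (z : EuclideanSpace ℝ (Fin d))‖⁻¹ • g (z : EuclideanSpace ℝ (Fin d)) :=
      funext hG
    rw [this]
    exact (((hg.comp continuous_subtype_val).norm).inv₀
      (fun z => (hgz_pos z).ne')).smul (hg.comp continuous_subtype_val)
  have hGmeas : Measurable G := hGcont.measurable
  -- the function f
  set f : Metric.sphere (0 : EuclideanSpace ℝ (Fin d)) 1 → ℝ :=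
    fun z => Real.log ‖g (z : EuclideanSpace ℝ (Fin d))‖ with hf
  have hfcont : Continuous f := by
    apply Continuous.log ((hg.comp continuous_subtype_val).norm)
    exact fun z => (hgz_pos z).ne'
  -- integrability of continuous functions on the (compact) sphere
  have hint : ∀ (h : Metric.sphere (0 : EuclideanSpace ℝ (Fin d)) 1 → ℝ),
      Continuous h → Integrable h μ := by
    intro h hc
    exact hc.integrable_of_hasCompactSupport (HasCompactSupport.of_compactSpace h)
  -- key cocycle identity
  have hkey : ∀ (z : Metric.sphere (0 : EuclideanSpace ℝ (Fin d)) 1) (n : ℕ),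
      g^[n] (z : EuclideanSpace ℝ (Fin d)) =
        ‖g^[n] (z : EuclideanSpace ℝ (Fin d))‖ •
          ((G^[n] z : Metric.sphere (0 : EuclideanSpace ℝ (Fin d)) 1) :
            EuclideanSpace ℝ (Fin d)) ∧
      0 < ‖g^[n] (z : EuclideanSpace ℝ (Fin d))‖ := by
    intro z n
    induction n with
    | zero => constructor <;> simp [hnz z]
    | succ n ih =>
      obtain ⟨h1, h2⟩ := ih
      have hgw : g (g^[n] (z : EuclideanSpace ℝ (Fin d))) =
          ‖g^[n] (z : EuclideanSpace ℝ (Fin d))‖ •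
            g ((G^[n] z : Metric.sphere (0 : EuclideanSpace ℝ (Fin d)) 1) :
              EuclideanSpace ℝ (Fin d)) := by
        conv_lhs => rw [h1]
        rw [hhom _ h2.le]
      constructor
      · rw [Function.iterate_succ_apply' g, Function.iterate_succ_apply' G, hgw,
          hG (G^[n] z), norm_smul, Real.norm_eq_abs, abs_of_pos h2, smul_smul,
          mul_assoc, mul_inv_cancel₀ (hgz_pos (G^[n] z)).ne', mul_one]
      · rw [Function.iterate_succ_apply' g, hgw, norm_smul, Real.norm_eq_abs,
          abs_of_pos h2]
        exact mul_pos h2 (hgz_pos _)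
  -- Birkhoff sums
  have hsum : ∀ (z : Metric.sphere (0 : EuclideanSpace ℝ (Fin d)) 1) (n : ℕ),
      Real.log ‖g^[n] (z : EuclideanSpace ℝ (Fin d))‖ =
        ∑ k ∈ Finset.range n, f (G^[k] z) := by
    intro z n
    induction n with
    | zero => simp [hnz z]
    | succ n ih =>
      obtain ⟨h1, h2⟩ := hkey z n
      have hnorm : ‖g^[n+1] (z : EuclideanSpace ℝ (Fin d))‖ =
          ‖g^[n] (z : EuclideanSpace ℝ (Fin d))‖ *
            ‖g ((G^[n] z : Metric.sphere (0 : EuclideanSpace ℝ (Fin d)) 1) :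
              EuclideanSpace ℝ (Fin d))‖ := by
        rw [Function.iterate_succ_apply' g]
        conv_lhs => rw [h1]
        rw [hhom _ h2.le, norm_smul, Real.norm_eq_abs, abs_of_pos h2]
      rw [Finset.sum_range_succ, ← ih, hnorm, Real.log_mul h2.ne' (hgz_pos _).ne']
  -- stability gives a uniform bound
  obtain ⟨δ, hδ, hδbound⟩ := hstab 1 one_pos
  set c : ℝ := δ / 2 with hc
  have hcpos : 0 < c := by positivity
  have hhomiter : ∀ (x : EuclideanSpace ℝ (Fin d)) (n : ℕ),
      g^[n] (c • x) = c • g^[n] x := by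
    intro x n
    induction n with
    | zero => simp
    | succ n ih => rw [Function.iterate_succ_apply', ih, hhom c hcpos.le,
        Function.iterate_succ_apply']
  set C : ℝ := Real.log c⁻¹ with hC
  have hbound : ∀ (z : Metric.sphere (0 : EuclideanSpace ℝ (Fin d)) 1) (n : ℕ),
      (∑ k ∈ Finset.range n, f (G^[k] z)) ≤ C := by
    intro z n
    rw [← hsum]
    obtain ⟨-, h2⟩ := hkey z n
    have hlt : ‖g^[n] (c • (z : EuclideanSpace ℝ (Fin d)))‖ < 1 := by
      apply hδbound _ _ n
      rw [norm_smul, Real.norm_eq_abs, abs_of_pos hcpos, hnz z, mul_one]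
      rw [hc]; linarith
    rw [hhomiter, norm_smul, Real.norm_eq_abs, abs_of_pos hcpos] at hlt
    have hlt2 : ‖g^[n] (z : EuclideanSpace ℝ (Fin d))‖ < c⁻¹ := by
      rw [← mul_lt_mul_iff_right₀ hcpos, mul_inv_cancel₀ hcpos.ne']
      exact hlt
    exact le_of_lt (Real.log_lt_log h2 hlt2)
  -- invariance of integrals under iterates of G
  have hmapiter : ∀ k : ℕ, μ.map (G^[k]) = μ := by
    intro k
    induction k with
    | zero => simp
    | succ k ih =>
      rw [Function.iterate_succ', ← Measure.map_map hGmeas (hGmeas.iterate k), ih, hinv]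
  have hintegral_iter : ∀ k : ℕ, (∫ z, f (G^[k] z) ∂μ) = ∫ z, f z ∂μ := by
    intro k
    conv_rhs => rw [← hmapiter k]
    rw [integral_map (hGmeas.iterate k).aemeasurable hfcont.aestronglyMeasurable]
  -- main estimate: n * ∫ f ≤ C for all n
  set L : ℝ := ∫ z, f z ∂μ with hL
  have hmain : ∀ n : ℕ, (n : ℝ) * L ≤ C := by
    intro n
    have hintk : ∀ k ∈ Finset.range n, Integrable (fun z => f (G^[k] z)) μ :=
      fun k _ => hint _ (hfcont.comp (hGcont.iterate k))
    have h1 : (∫ z, (∑ k ∈ Finset.range n, f (G^[k] z)) ∂μ) = (n : ℝ) * L := by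
      rw [integral_finset_sum _ hintk]
      simp only [hintegral_iter]
      rw [Finset.sum_const, Finset.card_range, nsmul_eq_mul]
    rw [← h1]
    calc (∫ z, (∑ k ∈ Finset.range n, f (G^[k] z)) ∂μ)
        ≤ ∫ _, C ∂μ := by
          apply integral_mono (integrable_finset_sum _ hintk) (integrable_const C)
          exact fun z => hbound z n
      _ = C := by simp
  -- conclude L ≤ 0
  show L ≤ 0
  by_contra hneg
  push_neg at hneg
  obtain ⟨n, hn⟩ := exists_nat_gt (C / L)
  have h := hmain n
  rw [div_lt_iff₀ hneg] at hn
  linarith [mul_comm (n : ℝ) L]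
end

section
/- Let d ≥ 2 and let g : ℝ^d → ℝ^d be continuous and linearly homogeneous with g(x) = 0 only for x = 0. Let μ be a G-invariant Borel probability measure on S^{d-1} and let z ∈ S^{d-1} be a point in the basin of μ. Then ‖g^n(z)‖^{1/n} → exp(λ(μ)) as n → ∞. -/
open Filter Topology MeasureTheory

/-- Let `d ≥ 2` and let `g : ℝ^d → ℝ^d` be continuous and linearly
homogeneous with `g x = 0` only for `x = 0`, with induced sphere map `G`. If `μ` is a
`G`-invariant Borel probability measure on `S^{d-1}` and `z ∈ S^{d-1}` lies in the basin
of `μ`, then `‖g^[n] z‖^(1/n) → exp (λ(μ))` as `n → ∞`, where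
`λ(μ) = ∫ log ‖g z‖ dμ`. -/
theorem stmt11 {d : ℕ} (hd : 2 ≤ d)
    (g : EuclideanSpace ℝ (Fin d) → EuclideanSpace ℝ (Fin d))
    (hg : Continuous g)
    (hhom : ∀ (α : ℝ), 0 ≤ α → ∀ x, g (α • x) = α • g x)
    (hg0 : ∀ x, g x = 0 → x = 0)
    (G : Metric.sphere (0 : EuclideanSpace ℝ (Fin d)) 1 →
      Metric.sphere (0 : EuclideanSpace ℝ (Fin d)) 1)
    (hG : ∀ z : Metric.sphere (0 : EuclideanSpace ℝ (Fin d)) 1,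
      (G z : EuclideanSpace ℝ (Fin d)) =
        ‖g (z : EuclideanSpace ℝ (Fin d))‖⁻¹ • g (z : EuclideanSpace ℝ (Fin d)))
    (μ : Measure (Metric.sphere (0 : EuclideanSpace ℝ (Fin d)) 1))
    (hprob : IsProbabilityMeasure μ) (hinv : μ.map G = μ)
    (z : Metric.sphere (0 : EuclideanSpace ℝ (Fin d)) 1)
    (hz : ∀ φ : Metric.sphere (0 : EuclideanSpace ℝ (Fin d)) 1 → ℝ, Continuous φ →
      Tendsto (fun n : ℕ => (∑ i ∈ Finset.range n, φ (G^[i] z)) / n) atTop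
        (𝓝 (∫ w, φ w ∂μ))) :
    Tendsto (fun n : ℕ => ‖g^[n] (z : EuclideanSpace ℝ (Fin d))‖ ^ ((n : ℝ)⁻¹)) atTop
      (𝓝 (Real.exp (∫ w, Real.log ‖g (w : EuclideanSpace ℝ (Fin d))‖ ∂μ))) := by
  set D : Metric.sphere (0 : EuclideanSpace ℝ (Fin d)) 1 → ℝ :=
    fun w => ‖g (w : EuclideanSpace ℝ (Fin d))‖ with hDdef
  have hzero : ∀ w : Metric.sphere (0 : EuclideanSpace ℝ (Fin d)) 1,
      g (w : EuclideanSpace ℝ (Fin d)) ≠ 0 := by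
    intro w hw
    have hw0 : (w : EuclideanSpace ℝ (Fin d)) = 0 := hg0 _ hw
    have hnw : ‖(w : EuclideanSpace ℝ (Fin d))‖ = 1 :=
      mem_sphere_zero_iff_norm.mp w.2
    rw [hw0] at hnw
    simp at hnw
  have hDpos : ∀ w, 0 < D w := fun w => norm_pos_iff.mpr (hzero w)
  -- key identity
  have key : ∀ n : ℕ, g^[n] (z : EuclideanSpace ℝ (Fin d)) =
      (∏ i ∈ Finset.range n, D (G^[i] z)) •
        ((G^[n] z : Metric.sphere (0 : EuclideanSpace ℝ (Fin d)) 1) :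
          EuclideanSpace ℝ (Fin d)) := by
    intro n
    induction n with
    | zero => simp
    | succ n ih =>
      have hP : (0:ℝ) ≤ ∏ i ∈ Finset.range n, D (G^[i] z) :=
        Finset.prod_nonneg fun i _ => (hDpos _).le
      have h1 : ((G^[n+1] z : Metric.sphere (0 : EuclideanSpace ℝ (Fin d)) 1) :
          EuclideanSpace ℝ (Fin d)) = (D (G^[n] z))⁻¹ • g (G^[n] z : EuclideanSpace ℝ (Fin d)) := by
        rw [Function.iterate_succ_apply', hG]
      rw [Function.iterate_succ_apply' g, ih, hhom _ hP, Finset.prod_range_succ, h1,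
        smul_smul, mul_assoc, mul_inv_cancel₀ (hDpos _).ne', mul_one]
  have hnorm : ∀ n : ℕ, ‖g^[n] (z : EuclideanSpace ℝ (Fin d))‖ =
      ∏ i ∈ Finset.range n, D (G^[i] z) := by
    intro n
    rw [key n, norm_smul]
    have : ‖((G^[n] z : Metric.sphere (0 : EuclideanSpace ℝ (Fin d)) 1) :
        EuclideanSpace ℝ (Fin d))‖ = 1 := mem_sphere_zero_iff_norm.mp (G^[n] z).2
    rw [this, mul_one, Real.norm_eq_abs,
      abs_of_nonneg (Finset.prod_nonneg fun i _ => (hDpos _).le)]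
  have hnormpos : ∀ n : ℕ, 0 < ‖g^[n] (z : EuclideanSpace ℝ (Fin d))‖ := by
    intro n
    rw [hnorm n]
    exact Finset.prod_pos fun i _ => hDpos _
  -- continuity of φ
  have hφcont : Continuous fun w : Metric.sphere (0 : EuclideanSpace ℝ (Fin d)) 1 =>
      Real.log (D w) :=
    ((hg.comp continuous_subtype_val).norm).log fun w => (hDpos w).ne'
  have hT := hz _ hφcont
  have hlog : ∀ n : ℕ, Real.log ‖g^[n] (z : EuclideanSpace ℝ (Fin d))‖ =
      ∑ i ∈ Finset.range n, Real.log (D (G^[i] z)) := by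
    intro n
    rw [hnorm n]
    exact Real.log_prod fun i _ => (hDpos _).ne'
  have hT2 : Tendsto (fun n : ℕ =>
      Real.log ‖g^[n] (z : EuclideanSpace ℝ (Fin d))‖ * (n : ℝ)⁻¹) atTop
      (𝓝 (∫ w, Real.log (D w) ∂μ)) := by
    refine hT.congr fun n => ?_
    rw [hlog n, div_eq_mul_inv]
  have hfinal := (Real.continuous_exp.continuousAt
    (x := ∫ w, Real.log (D w) ∂μ)).tendsto.comp hT2
  refine hfinal.congr fun n => ?_
  simp only [Function.comp_apply]
  rw [Real.rpow_def_of_pos (hnormpos n)]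
end

section
/- Let d ≥ 2 and let g : ℝ^d → ℝ^d be continuous and linearly homogeneous with g(x) = 0 only for x = 0. Let μ be a G-invariant Borel probability measure on S^{d-1} and let z ∈ S^{d-1} be a point in the basin of μ. If λ(μ) < 0 then g^n(α z) → 0 as n → ∞ for every α ≥ 0, and if λ(μ) > 0 then ‖g^n(α z)‖ → ∞ as n → ∞ for every α > 0. -/
open Filter Topology MeasureTheory

private lemma sum_tendsto_atBot {S : ℕ → ℝ} {L : ℝ} (hL : L < 0)
    (h : Tendsto (fun n : ℕ => S n / n) atTop (𝓝 L)) : Tendsto S atTop atBot := by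
  have hev : ∀ᶠ n : ℕ in atTop, S n / n < L / 2 :=
    h.eventually_lt_const (by linarith)
  have hev2 : ∀ᶠ n : ℕ in atTop, S n ≤ (L / 2) * n := by
    filter_upwards [hev, eventually_ge_atTop 1] with n hn hn1
    have hn0 : (0 : ℝ) < n := by exact_mod_cast hn1
    have := (div_lt_iff₀ hn0).mp hn
    linarith
  refine tendsto_atBot_mono' atTop hev2 ?_
  have : Tendsto (fun n : ℕ => (n : ℝ)) atTop atTop := tendsto_natCast_atTop_atTop
  exact this.const_mul_atTop_of_neg (by linarith)

private lemma sum_tendsto_atTop {S : ℕ → ℝ} {L : ℝ} (hL : 0 < L)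
    (h : Tendsto (fun n : ℕ => S n / n) atTop (𝓝 L)) : Tendsto S atTop atTop := by
  have hev : ∀ᶠ n : ℕ in atTop, L / 2 < S n / n :=
    h.eventually_const_lt (by linarith)
  have hev2 : ∀ᶠ n : ℕ in atTop, (L / 2) * n ≤ S n := by
    filter_upwards [hev, eventually_ge_atTop 1] with n hn hn1
    have hn0 : (0 : ℝ) < n := by exact_mod_cast hn1
    have := (lt_div_iff₀ hn0).mp hn
    linarith
  refine tendsto_atTop_mono' atTop hev2 ?_
  have : Tendsto (fun n : ℕ => (n : ℝ)) atTop atTop := tendsto_natCast_atTop_atTop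
  exact this.const_mul_atTop (by linarith)

/-- Let `d ≥ 2` and let `g : ℝ^d → ℝ^d` be continuous and linearly
homogeneous with `g x = 0` only for `x = 0`, with induced sphere map `G`. Let `μ` be a
`G`-invariant Borel probability measure on `S^{d-1}` and let `z ∈ S^{d-1}` lie in the
basin of `μ`. If `λ(μ) < 0` then `g^[n] (α • z) → 0` for every `α ≥ 0`, and if
`λ(μ) > 0` then `‖g^[n] (α • z)‖ → ∞` for every `α > 0`. -/
theorem stmt12 {d : ℕ} (hd : 2 ≤ d)
    (g : EuclideanSpace ℝ (Fin d) → EuclideanSpace ℝ (Fin d))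
    (hg : Continuous g)
    (hhom : ∀ (α : ℝ), 0 ≤ α → ∀ x, g (α • x) = α • g x)
    (hg0 : ∀ x, g x = 0 → x = 0)
    (G : Metric.sphere (0 : EuclideanSpace ℝ (Fin d)) 1 →
      Metric.sphere (0 : EuclideanSpace ℝ (Fin d)) 1)
    (hG : ∀ z : Metric.sphere (0 : EuclideanSpace ℝ (Fin d)) 1,
      (G z : EuclideanSpace ℝ (Fin d)) =
        ‖g (z : EuclideanSpace ℝ (Fin d))‖⁻¹ • g (z : EuclideanSpace ℝ (Fin d)))
    (μ : Measure (Metric.sphere (0 : EuclideanSpace ℝ (Fin d)) 1))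
    (hprob : IsProbabilityMeasure μ) (hinv : μ.map G = μ)
    (z : Metric.sphere (0 : EuclideanSpace ℝ (Fin d)) 1)
    (hz : ∀ φ : Metric.sphere (0 : EuclideanSpace ℝ (Fin d)) 1 → ℝ, Continuous φ →
      Tendsto (fun n : ℕ => (∑ i ∈ Finset.range n, φ (G^[i] z)) / n) atTop
        (𝓝 (∫ w, φ w ∂μ))) :
    ((∫ w, Real.log ‖g (w : EuclideanSpace ℝ (Fin d))‖ ∂μ) < 0 →
      ∀ α : ℝ, 0 ≤ α →
        Tendsto (fun n : ℕ => g^[n] (α • (z : EuclideanSpace ℝ (Fin d)))) atTop (𝓝 0)) ∧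
    (0 < (∫ w, Real.log ‖g (w : EuclideanSpace ℝ (Fin d))‖ ∂μ) →
      ∀ α : ℝ, 0 < α →
        Tendsto (fun n : ℕ => ‖g^[n] (α • (z : EuclideanSpace ℝ (Fin d)))‖) atTop atTop) := by
  have hnorm1 : ∀ w : Metric.sphere (0 : EuclideanSpace ℝ (Fin d)) 1,
      ‖(w : EuclideanSpace ℝ (Fin d))‖ = 1 := fun w => by
    simpa [mem_sphere_zero_iff_norm] using w.2
  have hgpos : ∀ w : Metric.sphere (0 : EuclideanSpace ℝ (Fin d)) 1,
      0 < ‖g (w : EuclideanSpace ℝ (Fin d))‖ := by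
    intro w
    rw [norm_pos_iff]
    intro h
    have hw0 : (w : EuclideanSpace ℝ (Fin d)) = 0 := hg0 _ h
    have := hnorm1 w
    rw [hw0] at this; simp at this
  -- the key product formula
  have key : ∀ α : ℝ, 0 ≤ α → ∀ n : ℕ,
      g^[n] (α • (z : EuclideanSpace ℝ (Fin d))) =
        (α * ∏ i ∈ Finset.range n, ‖g ((G^[i] z : Metric.sphere (0 : EuclideanSpace ℝ (Fin d)) 1)
          : EuclideanSpace ℝ (Fin d))‖) • ((G^[n] z : Metric.sphere (0 : EuclideanSpace ℝ (Fin d)) 1)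
          : EuclideanSpace ℝ (Fin d)) := by
    intro α hα n
    induction n with
    | zero => simp
    | succ n ih =>
      have hprodpos : (0:ℝ) < ∏ i ∈ Finset.range n,
          ‖g ((G^[i] z : Metric.sphere (0 : EuclideanSpace ℝ (Fin d)) 1)
            : EuclideanSpace ℝ (Fin d))‖ :=
        Finset.prod_pos fun i _ => hgpos _
      have hc : 0 ≤ α * ∏ i ∈ Finset.range n,
          ‖g ((G^[i] z : Metric.sphere (0 : EuclideanSpace ℝ (Fin d)) 1)
            : EuclideanSpace ℝ (Fin d))‖ := mul_nonneg hα hprodpos.le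
      rw [Function.iterate_succ_apply', ih, hhom _ hc, Function.iterate_succ_apply']
      have hGn := hG (G^[n] z)
      have hne : ‖g ((G^[n] z : Metric.sphere (0 : EuclideanSpace ℝ (Fin d)) 1)
          : EuclideanSpace ℝ (Fin d))‖ ≠ 0 := (hgpos _).ne'
      have hgval : g ((G^[n] z : Metric.sphere (0 : EuclideanSpace ℝ (Fin d)) 1)
          : EuclideanSpace ℝ (Fin d)) =
          ‖g ((G^[n] z : Metric.sphere (0 : EuclideanSpace ℝ (Fin d)) 1)
            : EuclideanSpace ℝ (Fin d))‖ •
          ((G (G^[n] z) : Metric.sphere (0 : EuclideanSpace ℝ (Fin d)) 1)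
            : EuclideanSpace ℝ (Fin d)) := by
        rw [hGn, smul_smul, mul_inv_cancel₀ hne, one_smul]
      rw [hgval, smul_smul, Finset.prod_range_succ, mul_assoc]
  -- norm formula
  have keynorm : ∀ α : ℝ, 0 ≤ α → ∀ n : ℕ,
      ‖g^[n] (α • (z : EuclideanSpace ℝ (Fin d)))‖ =
        α * Real.exp (∑ i ∈ Finset.range n,
          Real.log ‖g ((G^[i] z : Metric.sphere (0 : EuclideanSpace ℝ (Fin d)) 1)
            : EuclideanSpace ℝ (Fin d))‖) := by
    intro α hα n
    rw [key α hα n, norm_smul, hnorm1, mul_one, Real.exp_sum]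
    rw [Real.norm_eq_abs, abs_mul, abs_of_nonneg hα]
    congr 1
    rw [abs_of_nonneg (Finset.prod_pos fun i _ => hgpos _).le]
    exact Finset.prod_congr rfl fun i _ => (Real.exp_log (hgpos _)).symm
  -- continuity of φ
  have hφcont : Continuous (fun w : Metric.sphere (0 : EuclideanSpace ℝ (Fin d)) 1 =>
      Real.log ‖g (w : EuclideanSpace ℝ (Fin d))‖) := by
    apply continuous_iff_continuousAt.mpr
    intro w
    have h1 : ContinuousAt (fun w : Metric.sphere (0 : EuclideanSpace ℝ (Fin d)) 1 =>
        ‖g (w : EuclideanSpace ℝ (Fin d))‖) w :=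
      ((hg.comp continuous_subtype_val).norm).continuousAt
    exact h1.log (hgpos w).ne'
  have hbirk := hz _ hφcont
  set S : ℕ → ℝ := fun n => ∑ i ∈ Finset.range n,
    Real.log ‖g ((G^[i] z : Metric.sphere (0 : EuclideanSpace ℝ (Fin d)) 1)
      : EuclideanSpace ℝ (Fin d))‖ with hS
  constructor
  · intro hL α hα
    have hSbot : Tendsto S atTop atBot := sum_tendsto_atBot hL hbirk
    have hexp : Tendsto (fun n => Real.exp (S n)) atTop (𝓝 0) :=
      Real.tendsto_exp_atBot.comp hSbot
    have hnormt : Tendsto (fun n : ℕ => ‖g^[n] (α • (z : EuclideanSpace ℝ (Fin d)))‖)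
        atTop (𝓝 0) := by
      have : Tendsto (fun n => α * Real.exp (S n)) atTop (𝓝 (α * 0)) :=
        hexp.const_mul α
      rw [mul_zero] at this
      refine this.congr fun n => ?_
      exact (keynorm α hα n).symm
    exact tendsto_zero_iff_norm_tendsto_zero.mpr hnormt
  · intro hL α hα
    have hStop : Tendsto S atTop atTop := sum_tendsto_atTop hL hbirk
    have hexp : Tendsto (fun n => Real.exp (S n)) atTop atTop :=
      Real.tendsto_exp_atTop.comp hStop
    have : Tendsto (fun n => α * Real.exp (S n)) atTop atTop :=
      hexp.const_mul_atTop hα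
    refine this.congr fun n => ?_
    exact (keynorm α hα.le n).symm
end

section
/- Consider the two-dimensional border-collision normal form g with δ_L > 0, δ_R < 0 and τ_L < 2√δ_L, and let G be the induced circle map. Then G has no fixed point z = (z₁, z₂) on the unit circle with z₁ < 0 and z₂ > 0, and for every unit vector z with z₁ < 0 and z₂ > 0 there exists i > 0 such that G^i(z) lies in the closed first quadrant {w : w₁ ≥ 0, w₂ ≥ 0}. -/
open Filter Topology

set_option maxHeartbeats 1000000 in
/-- For the 2D border-collision normal form `g` with `δ_L > 0`,
`δ_R < 0`, `τ_L < 2√δ_L`, the induced circle map `G z = g z / ‖g z‖` has no fixed point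
`z` on the unit circle with `z₁ < 0, z₂ > 0`, and every unit vector `z` with
`z₁ < 0, z₂ > 0` reaches the closed first quadrant under some positive iterate of `G`. -/
theorem stmt14 (τL δL τR δR : ℝ) (hδL : 0 < δL) (hδR : δR < 0)
    (hτL : τL < 2 * Real.sqrt δL)
    (g : ℝ × ℝ → ℝ × ℝ)
    (hgL : ∀ p : ℝ × ℝ, p.1 ≤ 0 → g p = (τL * p.1 + p.2, -δL * p.1))
    (hgR : ∀ p : ℝ × ℝ, 0 ≤ p.1 → g p = (τR * p.1 + p.2, -δR * p.1))
    (G : ℝ × ℝ → ℝ × ℝ)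
    (hG : ∀ p : ℝ × ℝ, G p = (Real.sqrt ((g p).1 ^ 2 + (g p).2 ^ 2))⁻¹ • g p) :
    (∀ z : ℝ × ℝ, z.1 ^ 2 + z.2 ^ 2 = 1 → z.1 < 0 → 0 < z.2 → G z ≠ z) ∧
      (∀ z : ℝ × ℝ, z.1 ^ 2 + z.2 ^ 2 = 1 → z.1 < 0 → 0 < z.2 →
        ∃ i : ℕ, 0 < i ∧ 0 ≤ (G^[i] z).1 ∧ 0 ≤ (G^[i] z).2) := by
  -- If τL > 0 then τL^2 < 4δL
  have hdisc : 0 < τL → τL ^ 2 < 4 * δL := by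
    intro hτ
    have hs := Real.sq_sqrt hδL.le
    have hs0 := Real.sqrt_nonneg δL
    nlinarith
  -- key: explicit form of G on the open left half plane
  have key : ∀ p : ℝ × ℝ, p.1 < 0 → ∃ c : ℝ, 0 < c ∧
      (G p).1 = c * (τL * p.1 + p.2) ∧ (G p).2 = c * (-δL * p.1) := by
    intro p hp
    have hgp := hgL p hp.le
    have h2 : 0 < (g p).2 := by rw [hgp]; simp; nlinarith
    have hsum : 0 < (g p).1 ^ 2 + (g p).2 ^ 2 := by nlinarith [sq_nonneg (g p).1]
    have hs : 0 < Real.sqrt ((g p).1 ^ 2 + (g p).2 ^ 2) := Real.sqrt_pos.2 hsum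
    refine ⟨(Real.sqrt ((g p).1 ^ 2 + (g p).2 ^ 2))⁻¹, inv_pos.2 hs, ?_, ?_⟩
    · rw [hG]; simp [hgp]
    · rw [hG]; simp [hgp]
  constructor
  · -- no fixed point
    intro z hz h1 h2 hfix
    obtain ⟨c, hc, hc1, hc2⟩ := key z h1
    rw [hfix] at hc1 hc2
    -- z₁ = c(τL z₁ + z₂), z₂ = -c δL z₁ ⇒ c²δL - cτL + 1 = 0
    have hq : z.1 * (c ^ 2 * δL - c * τL + 1) = 0 := by nlinarith
    have hq' : c ^ 2 * δL - c * τL + 1 = 0 := by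
      rcases mul_eq_zero.1 hq with h | h
      · exact absurd h h1.ne
      · exact h
    rcases le_or_gt τL 0 with hτ | hτ
    · nlinarith
    · have h4 := hdisc hτ
      have h5 : τL ^ 2 * c ^ 2 < 4 * δL * c ^ 2 :=
        (mul_lt_mul_of_pos_right h4 (by positivity))
      nlinarith [sq_nonneg (τL * c - 2)]
  · -- reaching the first quadrant
    intro z hz h1 h2
    rcases le_or_gt τL 0 with hτ | hτ
    · -- one step suffices
      obtain ⟨c, hc, hc1, hc2⟩ := key z h1
      have e1 : 0 < τL * z.1 + z.2 := by
        nlinarith [mul_nonneg (neg_nonneg.2 hτ) (neg_nonneg.2 h1.le)]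
      refine ⟨1, one_pos, ?_, ?_⟩ <;> simp only [Function.iterate_one]
      · rw [hc1]; exact (mul_pos hc e1).le
      · rw [hc2]; nlinarith [mul_pos hc (mul_pos hδL (neg_pos.2 h1))]
    · have h4 := hdisc hτ
      obtain ⟨κ, hκ, hκτ⟩ : ∃ κ : ℝ, 0 < κ ∧ κ * τL = δL - τL ^ 2 / 4 :=
        ⟨(4 * δL - τL ^ 2) / (4 * τL),
          div_pos (by linarith) (by linarith),
          by field_simp⟩
      have main : ∀ n : ℕ, ∀ w : ℝ × ℝ, w.1 < 0 → 0 < w.2 →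
          τL * (-w.1) ≤ w.2 + n * κ * (-w.1) →
          ∃ i : ℕ, 0 < i ∧ 0 ≤ (G^[i] w).1 ∧ 0 ≤ (G^[i] w).2 := by
        intro n
        induction n with
        | zero =>
          intro w hw1 hw2 hle
          obtain ⟨c, hc, hc1, hc2⟩ := key w hw1
          push_cast at hle
          refine ⟨1, one_pos, ?_, ?_⟩ <;> simp only [Function.iterate_one]
          · rw [hc1]
            have : 0 ≤ τL * w.1 + w.2 := by nlinarith
            positivity
          · rw [hc2]; nlinarith [mul_pos hc (mul_pos hδL (neg_pos.2 hw1))]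
        | succ n ih =>
          intro w hw1 hw2 hle
          obtain ⟨c, hc, hc1, hc2⟩ := key w hw1
          rcases le_or_gt (τL * (-w.1)) w.2 with hcase | hcase
          · refine ⟨1, one_pos, ?_, ?_⟩ <;> simp only [Function.iterate_one]
            · rw [hc1]
              have : 0 ≤ τL * w.1 + w.2 := by nlinarith
              positivity
            · rw [hc2]; nlinarith [mul_pos hc (mul_pos hδL (neg_pos.2 hw1))]
          · -- G w stays in the open second quadrant; slope improves
            push_cast at hle
            have hu : 0 < -w.1 := by linarith
            have hw : 0 < τL * (-w.1) - w.2 := by linarith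
            have hGw1 : (G w).1 < 0 := by
              rw [hc1]
              have : τL * w.1 + w.2 < 0 := by linarith
              nlinarith
            have hGw2 : 0 < (G w).2 := by
              rw [hc2]; nlinarith [mul_pos hc (mul_pos hδL hu)]
            -- key inequality, scale-free form
            have hdiv : (-w.1) * (τL * (τL * (-w.1) - w.2)) ≤
                (-w.1) * (δL * (-w.1) + ↑n * κ * (τL * (-w.1) - w.2)) := by
              have hmul : τL * (-w.1) * (τL * (-w.1) - w.2) ≤
                  (w.2 + (↑n + 1) * κ * (-w.1)) * (τL * (-w.1) - w.2) :=
                mul_le_mul_of_nonneg_right hle hw.le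
              have hsq : κ * τL * (-w.1) ^ 2 ≤
                  δL * (-w.1) ^ 2 - τL * (-w.1) * w.2 + w.2 ^ 2 := by
                rw [hκτ]; nlinarith [sq_nonneg (w.2 - τL * (-w.1) / 2)]
              have hbound : κ * (-w.1) * (τL * (-w.1) - w.2) ≤ κ * τL * (-w.1) ^ 2 := by
                nlinarith [mul_pos hκ hu]
              nlinarith [hmul, hsq, hbound]
            have S : τL * (τL * (-w.1) - w.2) ≤
                δL * (-w.1) + ↑n * κ * (τL * (-w.1) - w.2) :=
              (mul_le_mul_iff_of_pos_left hu).1 hdiv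
            have hslope : τL * (-(G w).1) ≤ (G w).2 + ↑n * κ * (-(G w).1) := by
              have e1 : τL * (-(G w).1) = c * (τL * (τL * (-w.1) - w.2)) := by
                rw [hc1]; ring
              have e2 : (G w).2 + ↑n * κ * (-(G w).1) =
                  c * (δL * (-w.1) + ↑n * κ * (τL * (-w.1) - w.2)) := by
                rw [hc1, hc2]; ring
              rw [e1, e2]
              exact mul_le_mul_of_nonneg_left S hc.le
            obtain ⟨i, hi, hi1, hi2⟩ := ih (G w) hGw1 hGw2 hslope
            refine ⟨i + 1, Nat.succ_pos i, ?_, ?_⟩ <;>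
              rw [Function.iterate_succ_apply] <;> assumption
      obtain ⟨n, hn⟩ := exists_nat_ge (τL / κ)
      have hn' : τL ≤ n * κ := by
        rw [div_le_iff₀ hκ] at hn; linarith
      refine main n z h1 h2 ?_
      have hu : 0 < -z.1 := by linarith
      nlinarith [mul_le_mul_of_nonneg_right hn' hu.le]
end

section
/- Consider the two-dimensional border-collision normal form g with δ_L > 0, δ_R < 0 and τ_L > 2√δ_L, and let G be the induced circle map. Let λ^L_± = τ_L/2 ± √(τ_L²/4 − δ_L) (both real and positive) and let w_± = (−1, λ^L_∓)/√(1 + (λ^L_∓)²) be unit vectors. Then w_− and w_+ are the only fixed points z = (z₁, z₂) of G with z₁ < 0 and z₂ > 0. Moreover, for every unit vector z = (z₁, z₂) with z₁ < 0, z₂ > 0 and z₂/z₁ < −λ^L_+ there exists i > 0 such that G^i(z) lies in the closed first quadrant {w : w₁ ≥ 0, w₂ ≥ 0}, and for every unit vector z with z₁ < 0, z₂ > 0 and z₂/z₁ > −λ^L_+ we have G^n(z) → w_+ as n → ∞. -/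
open Filter Topology

open Filter Topology

section
variable (τL δL : ℝ) (g G : ℝ × ℝ → ℝ × ℝ)

lemma gcomp (hgL : ∀ p : ℝ × ℝ, p.1 ≤ 0 → g p = (τL * p.1 + p.2, -δL * p.1))
    (hG : ∀ p : ℝ × ℝ, G p = (Real.sqrt ((g p).1 ^ 2 + (g p).2 ^ 2))⁻¹ • g p)
    (hδL : 0 < δL) (z : ℝ × ℝ) (h1 : z.1 < 0) :
    ∃ c : ℝ, 0 < c ∧ (G z).1 = c * (τL * z.1 + z.2) ∧ (G z).2 = c * (-δL * z.1) ∧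
      c ^ 2 * ((τL * z.1 + z.2) ^ 2 + (-δL * z.1) ^ 2) = 1 := by
  have hg := hgL z h1.le
  have hX : 0 < (τL * z.1 + z.2) ^ 2 + (-δL * z.1) ^ 2 := by
    have : 0 < (-δL * z.1) := by nlinarith
    positivity
  refine ⟨(Real.sqrt ((τL * z.1 + z.2) ^ 2 + (-δL * z.1) ^ 2))⁻¹, by positivity, ?_, ?_, ?_⟩
  · rw [hG, hg]; simp [smul_eq_mul]
  · rw [hG, hg]; simp [smul_eq_mul]
  · have h := Real.sqrt_pos.mpr hX
    rw [inv_pow, ← Real.sq_sqrt hX.le]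
    field_simp
    have hX' : 0 < (τL * z.1 + z.2) ^ 2 + z.1 ^ 2 * δL ^ 2 := by nlinarith [hX]
    simp only [Real.sq_sqrt hX'.le]
    exact div_self hX'.ne'

end

section
variable (τL δL : ℝ) (g G : ℝ × ℝ → ℝ × ℝ)

lemma stepA (hgL : ∀ p : ℝ × ℝ, p.1 ≤ 0 → g p = (τL * p.1 + p.2, -δL * p.1))
    (hG : ∀ p : ℝ × ℝ, G p = (Real.sqrt ((g p).1 ^ 2 + (g p).2 ^ 2))⁻¹ • g p)
    (hδL : 0 < δL) (z : ℝ × ℝ) (h1 : z.1 < 0) (h2 : 0 < z.2)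
    (hs : -τL < z.2 / z.1) :
    (G z).1 ^ 2 + (G z).2 ^ 2 = 1 ∧ (G z).1 < 0 ∧ 0 < (G z).2 ∧
      (G z).2 / (G z).1 = -δL / (τL + z.2 / z.1) := by
  obtain ⟨c, hc0, hc1, hc2, hc4⟩ := gcomp τL δL g G hgL hG hδL z h1
  have hz1 : z.1 ≠ 0 := ne_of_lt h1
  have hA : τL * z.1 + z.2 < 0 := by
    have := (lt_div_iff_of_neg h1).mp hs
    linarith
  have hB : 0 < -δL * z.1 := by nlinarith
  refine ⟨by rw [hc1, hc2]; linear_combination hc4,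
    by rw [hc1]; exact mul_neg_of_pos_of_neg hc0 hA,
    by rw [hc2]; positivity, ?_⟩
  rw [hc1, hc2, mul_div_mul_left _ _ (ne_of_gt hc0)]
  have hts : τL + z.2 / z.1 = (τL * z.1 + z.2) / z.1 := by field_simp
  rw [hts, div_div_eq_mul_div, div_eq_div_iff (ne_of_lt hA) (ne_of_lt hA)]

lemma stepB (hgL : ∀ p : ℝ × ℝ, p.1 ≤ 0 → g p = (τL * p.1 + p.2, -δL * p.1))
    (hG : ∀ p : ℝ × ℝ, G p = (Real.sqrt ((g p).1 ^ 2 + (g p).2 ^ 2))⁻¹ • g p)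
    (hδL : 0 < δL) (z : ℝ × ℝ) (h1 : z.1 < 0) (h2 : 0 < z.2)
    (hs : z.2 / z.1 ≤ -τL) :
    0 ≤ (G z).1 ∧ 0 ≤ (G z).2 := by
  obtain ⟨c, hc0, hc1, hc2, hc4⟩ := gcomp τL δL g G hgL hG hδL z h1
  have hA : 0 ≤ τL * z.1 + z.2 := by
    have := (div_le_iff_of_neg h1).mp hs
    linarith
  have hB : 0 < -δL * z.1 := by nlinarith
  exact ⟨by rw [hc1]; positivity, by rw [hc2]; positivity⟩

lemma gfix (hG : ∀ p : ℝ × ℝ, G p = (Real.sqrt ((g p).1 ^ 2 + (g p).2 ^ 2))⁻¹ • g p)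
    (z : ℝ × ℝ) (r : ℝ) (hu : z.1 ^ 2 + z.2 ^ 2 = 1) (hr : 0 < r)
    (hgz : g z = r • z) : G z = z := by
  rw [hG, hgz]
  have h1 : (r • z).1 = r * z.1 := rfl
  have h2 : (r • z).2 = r * z.2 := rfl
  rw [h1, h2]
  have : (r * z.1) ^ 2 + (r * z.2) ^ 2 = r ^ 2 := by
    linear_combination r ^ 2 * hu
  rw [this, Real.sqrt_sq hr.le, smul_smul, inv_mul_cancel₀ (ne_of_gt hr), one_smul]

end

noncomputable def uvec (s : ℝ) : ℝ × ℝ := (Real.sqrt (1 + s ^ 2))⁻¹ • (-1, -s)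

lemma uvec_cont : Continuous uvec := by
  apply Continuous.fun_smul (f := fun s : ℝ => (Real.sqrt (1 + s ^ 2))⁻¹) (g := fun s : ℝ => ((-1 : ℝ), -s))
  · exact (Real.continuous_sqrt.comp (by continuity)).inv₀
      (fun s => ne_of_gt (Real.sqrt_pos.mpr (by positivity)))
  · continuity

lemma unit_rep (z : ℝ × ℝ) (hu : z.1 ^ 2 + z.2 ^ 2 = 1) (h1 : z.1 < 0) :
    z = uvec (z.2 / z.1) := by
  have hz1 : z.1 ≠ 0 := ne_of_lt h1
  have h : 1 + (z.2 / z.1) ^ 2 = (z.1 ^ 2)⁻¹ := by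
    field_simp
    linarith
  have h2 : Real.sqrt (1 + (z.2 / z.1) ^ 2) = (-z.1)⁻¹ := by
    rw [h, Real.sqrt_inv, Real.sqrt_sq_eq_abs, abs_of_neg h1]
  rw [uvec, h2, inv_inv]
  have : (-z.1) • ((-1 : ℝ), -(z.2 / z.1)) = (z.1, z.2) := by
    rw [Prod.smul_mk]
    congr 1
    · simp
    · simp [smul_eq_mul]; field_simp
  rw [this]

lemma uvec_prop (s : ℝ) (hs : s < 0) :
    (uvec s).1 ^ 2 + (uvec s).2 ^ 2 = 1 ∧ (uvec s).1 < 0 ∧ 0 < (uvec s).2 := by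
  have hpos : (0:ℝ) < 1 + s ^ 2 := by positivity
  have h : 0 < Real.sqrt (1 + s ^ 2) := Real.sqrt_pos.mpr hpos
  have hsq : Real.sqrt (1 + s ^ 2) ^ 2 = 1 + s ^ 2 := Real.sq_sqrt hpos.le
  have h1 : (uvec s).1 = (Real.sqrt (1 + s ^ 2))⁻¹ * (-1) := rfl
  have h2 : (uvec s).2 = (Real.sqrt (1 + s ^ 2))⁻¹ * (-s) := rfl
  refine ⟨?_, ?_, ?_⟩
  · rw [h1, h2]
    field_simp
    exact hsq.symm
  · rw [h1]
    nlinarith [inv_pos.mpr h]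
  · rw [h2]
    have : 0 < -s := by linarith
    positivity

lemma arith2 (τL δL lamp lamm s₀ ε sn n : ℝ)
    (hsum : lamp + lamm = τL) (hprod : lamp * lamm = δL)
    (hε : ε = (s₀ + lamp) * (s₀ + lamm) / (τL + s₀))
    (hlt : lamm < lamp) (hs : s₀ < -lamp) (hden : 0 < τL + s₀)
    (hn : 0 ≤ n) (hsl : sn ≤ s₀ - n * ε) (hc : -τL < sn) :
    -δL / (τL + sn) ≤ s₀ - (n + 1) * ε := by
  have hdn : 0 < τL + sn := by linarith
  have hnum : 0 < (s₀ + lamp) * (s₀ + lamm) :=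
    mul_pos_of_neg_of_neg (by linarith) (by linarith)
  have hε0 : 0 < ε := hε ▸ div_pos hnum hden
  have hnε : 0 ≤ n * ε := mul_nonneg hn hε0.le
  have hsnle : sn ≤ s₀ := by linarith
  have hfn : -δL / (τL + sn) = sn - (sn + lamp) * (sn + lamm) / (τL + sn) := by
    have h0 : (sn + lamp) * (sn + lamm) = sn ^ 2 + τL * sn + δL := by
      linear_combination sn * hsum + hprod
    rw [h0]
    field_simp
    ring
  have hnn : (s₀ + lamp) * (s₀ + lamm) ≤ (sn + lamp) * (sn + lamm) := by
    have hb : (0:ℝ) ≤ (s₀ - sn) * (-(sn + s₀ + lamp + lamm)) :=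
      mul_nonneg (by linarith) (by linarith)
    nlinarith [hb]
  have hmono : ε ≤ (sn + lamp) * (sn + lamm) / (τL + sn) := by
    rw [hε]
    exact div_le_div₀ (by linarith) hnn hdn (by linarith)
  rw [hfn]
  nlinarith [hmono, hsl]

lemma arith3 (τL δL lamp lamm m sn : ℝ)
    (hsum : lamp + lamm = τL) (hprod : lamp * lamm = δL)
    (hlamm0 : 0 < lamm) (hlt : lamm < lamp)
    (hmlamp : -lamp < m) (hmle : m ≤ -lamm) (hge : m ≤ sn) (hsnn : sn < 0) :
    m ≤ -δL / (τL + sn) ∧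
      |(-δL / (τL + sn)) + lamm| ≤ (lamm / (τL + m)) * |sn + lamm| := by
  have hdm : 0 < τL + m := by linarith
  have hdn : 0 < τL + sn := by linarith
  have h0 : lamm * (sn + lamm) = lamm * (τL + sn) - δL := by
    linear_combination lamm * hsum - hprod
  have hfid : -δL / (τL + sn) + lamm = lamm * (sn + lamm) / (τL + sn) := by
    rw [h0]
    field_simp
    ring
  constructor
  · rcases le_or_gt (-lamm) sn with hcase | hcase
    · have hge2 : 0 ≤ lamm * (sn + lamm) / (τL + sn) :=
        div_nonneg (mul_nonneg hlamm0.le (by linarith)) hdn.le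
      linarith [hfid]
    · have hf : (sn + lamp) * (sn + lamm) ≤ 0 :=
        mul_nonpos_of_nonneg_of_nonpos (by linarith) (by linarith)
      have hq : sn * (τL + sn) ≤ -δL := by nlinarith [hf]
      have : sn ≤ -δL / (τL + sn) := (le_div_iff₀ hdn).mpr hq
      linarith
  · rw [hfid, abs_div, abs_mul, abs_of_pos hdn, abs_of_pos hlamm0]
    have h1 : lamm * |sn + lamm| / (τL + sn) ≤ lamm * |sn + lamm| / (τL + m) :=
      div_le_div_of_nonneg_left (mul_nonneg hlamm0.le (abs_nonneg _)) hdm (by linarith)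
    calc lamm * |sn + lamm| / (τL + sn) ≤ lamm * |sn + lamm| / (τL + m) := h1
      _ = lamm / (τL + m) * |sn + lamm| := by ring

/-- For the 2D border-collision normal form `g` with `δ_L > 0`, `δ_R < 0`,
`τ_L > 2√δ_L`, let `λ^L_± = τ_L/2 ± √(τ_L²/4 − δ_L)` and
`w_± = (−1, λ^L_∓)/√(1 + (λ^L_∓)²)`. Then `w_−, w_+` are the only fixed points of the
circle map `G` with `z₁ < 0, z₂ > 0`; every unit `z` with `z₁ < 0 < z₂` and
`z₂/z₁ < −λ^L_+` reaches the closed first quadrant under some positive iterate of `G`;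
and every unit `z` with `z₁ < 0 < z₂` and `z₂/z₁ > −λ^L_+` satisfies `G^[n] z → w_+`. -/
theorem stmt15 (τL δL τR δR : ℝ) (hδL : 0 < δL) (hδR : δR < 0)
    (hτL : 2 * Real.sqrt δL < τL)
    (g : ℝ × ℝ → ℝ × ℝ)
    (hgL : ∀ p : ℝ × ℝ, p.1 ≤ 0 → g p = (τL * p.1 + p.2, -δL * p.1))
    (hgR : ∀ p : ℝ × ℝ, 0 ≤ p.1 → g p = (τR * p.1 + p.2, -δR * p.1))
    (G : ℝ × ℝ → ℝ × ℝ)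
    (hG : ∀ p : ℝ × ℝ, G p = (Real.sqrt ((g p).1 ^ 2 + (g p).2 ^ 2))⁻¹ • g p)
    (lamp lamm : ℝ)
    (hlamp : lamp = τL / 2 + Real.sqrt (τL ^ 2 / 4 - δL))
    (hlamm : lamm = τL / 2 - Real.sqrt (τL ^ 2 / 4 - δL))
    (wp wm : ℝ × ℝ)
    (hwp : wp = (Real.sqrt (1 + lamm ^ 2))⁻¹ • (-1, lamm))
    (hwm : wm = (Real.sqrt (1 + lamp ^ 2))⁻¹ • (-1, lamp)) :
    ({z : ℝ × ℝ | z.1 ^ 2 + z.2 ^ 2 = 1 ∧ z.1 < 0 ∧ 0 < z.2 ∧ G z = z} = {wm, wp}) ∧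
      (∀ z : ℝ × ℝ, z.1 ^ 2 + z.2 ^ 2 = 1 → z.1 < 0 → 0 < z.2 → z.2 / z.1 < -lamp →
        ∃ i : ℕ, 0 < i ∧ 0 ≤ (G^[i] z).1 ∧ 0 ≤ (G^[i] z).2) ∧
      (∀ z : ℝ × ℝ, z.1 ^ 2 + z.2 ^ 2 = 1 → z.1 < 0 → 0 < z.2 → -lamp < z.2 / z.1 →
        Tendsto (fun n : ℕ => G^[n] z) atTop (𝓝 wp)) := by
  -- basic spectral facts
  have hτ0 : 0 < τL := lt_of_le_of_lt (by positivity) hτL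
  have hd : 0 < τL ^ 2 / 4 - δL := by
    nlinarith [Real.sq_sqrt hδL.le, Real.sqrt_nonneg δL]
  have hsum : lamp + lamm = τL := by rw [hlamp, hlamm]; ring
  have hprod : lamp * lamm = δL := by
    rw [hlamp, hlamm]
    have := Real.sq_sqrt hd.le
    nlinarith
  have hsd : Real.sqrt (τL ^ 2 / 4 - δL) < τL / 2 :=
    (Real.sqrt_lt' (by linarith)).mpr (by nlinarith)
  have hsd0 : 0 < Real.sqrt (τL ^ 2 / 4 - δL) := Real.sqrt_pos.mpr hd
  have hlamm0 : 0 < lamm := by rw [hlamm]; linarith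
  have hlamp0 : 0 < lamp := by rw [hlamp]; linarith
  have hlt : lamm < lamp := by rw [hlamm, hlamp]; linarith
  have hlampτ : lamp < τL := by linarith
  have hwmu : wm = uvec (-lamp) := by rw [hwm, uvec]; norm_num
  have hwpu : wp = uvec (-lamm) := by rw [hwp, uvec]; norm_num
  -- Part 1
  have part1 : {z : ℝ × ℝ | z.1 ^ 2 + z.2 ^ 2 = 1 ∧ z.1 < 0 ∧ 0 < z.2 ∧ G z = z} = {wm, wp} := by
    ext z
    simp only [Set.mem_setOf_eq, Set.mem_insert_iff, Set.mem_singleton_iff]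
    constructor
    · rintro ⟨hu, h1, h2, hfix⟩
      obtain ⟨c, hc0, hc1, hc2, hc4⟩ := gcomp τL δL g G hgL hG hδL z h1
      rw [hfix] at hc1 hc2
      have hz1 : z.1 ≠ 0 := ne_of_lt h1
      have e : c * ((τL * z.1 + z.2) * z.2 + δL * z.1 ^ 2) = 0 := by
        linear_combination z.1 * hc2 - z.2 * hc1
      have e2 : (τL * z.1 + z.2) * z.2 + δL * z.1 ^ 2 = 0 :=
        (mul_eq_zero.mp e).resolve_left hc0.ne'
      have hq : (z.2 + lamp * z.1) * (z.2 + lamm * z.1) = 0 := by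
        linear_combination e2 + (z.1 * z.2) * hsum + (z.1 ^ 2) * hprod
      rcases mul_eq_zero.mp hq with h | h
      · left
        have hslope : z.2 / z.1 = -lamp := by field_simp; linarith
        rw [unit_rep z hu h1, hslope, hwmu]
      · right
        have hslope : z.2 / z.1 = -lamm := by field_simp; linarith
        rw [unit_rep z hu h1, hslope, hwpu]
    · have mem : ∀ (w : ℝ × ℝ) (lam lam' : ℝ), 0 < lam → 0 < lam' →
          lam + lam' = τL → lam * lam' = δL →
          w = (Real.sqrt (1 + lam ^ 2))⁻¹ • (-1, lam) →
          w.1 ^ 2 + w.2 ^ 2 = 1 ∧ w.1 < 0 ∧ 0 < w.2 ∧ G w = w := by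
        rintro w lam lam' hl hl' hls hlp hweq
        have hwu : w = uvec (-lam) := by rw [hweq, uvec]; norm_num
        obtain ⟨pu, p1, p2⟩ := hwu ▸ uvec_prop (-lam) (by linarith)
        refine ⟨pu, p1, p2, ?_⟩
        apply gfix g G hG w lam' pu hl'
        rw [hgL w p1.le]
        have hw1 : w.1 = (Real.sqrt (1 + lam ^ 2))⁻¹ * (-1) := by rw [hweq]; rfl
        have hw2 : w.2 = (Real.sqrt (1 + lam ^ 2))⁻¹ * lam := by rw [hweq]; rfl
        have hsm : lam' • w = (lam' * w.1, lam' * w.2) := rfl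
        rw [hsm, Prod.mk.injEq]
        constructor
        · rw [hw1, hw2]; linear_combination ((Real.sqrt (1 + lam ^ 2))⁻¹) * hls
        · rw [hw1, hw2]; linear_combination (-(Real.sqrt (1 + lam ^ 2))⁻¹) * hlp
      rintro (rfl | rfl)
      · exact mem z lamp lamm hlamp0 hlamm0 hsum hprod hwm
      · exact mem z lamm lamp hlamm0 hlamp0 (by linarith) (by linarith [hprod]) hwp
  -- Part 2
  have part2 : ∀ z : ℝ × ℝ, z.1 ^ 2 + z.2 ^ 2 = 1 → z.1 < 0 → 0 < z.2 → z.2 / z.1 < -lamp →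
      ∃ i : ℕ, 0 < i ∧ 0 ≤ (G^[i] z).1 ∧ 0 ≤ (G^[i] z).2 := by
    intro z hu h1 h2 hs
    by_cases hcase : z.2 / z.1 ≤ -τL
    · obtain ⟨hb1, hb2⟩ := stepB τL δL g G hgL hG hδL z h1 h2 hcase
      exact ⟨1, one_pos, by simpa using hb1, by simpa using hb2⟩
    push_neg at hcase
    obtain ⟨ε, hε⟩ : ∃ ε : ℝ, ε = (z.2 / z.1 + lamp) * (z.2 / z.1 + lamm) / (τL + z.2 / z.1) :=
      ⟨_, rfl⟩
    have hden : 0 < τL + z.2 / z.1 := by linarith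
    have hε0 : 0 < ε :=
      hε ▸ div_pos (mul_pos_of_neg_of_neg (by linarith) (by linarith)) hden
    have key : ∀ n : ℕ, (∃ i, 0 < i ∧ 0 ≤ (G^[i] z).1 ∧ 0 ≤ (G^[i] z).2) ∨
        ((G^[n] z).1 ^ 2 + (G^[n] z).2 ^ 2 = 1 ∧ (G^[n] z).1 < 0 ∧ 0 < (G^[n] z).2 ∧
          (G^[n] z).2 / (G^[n] z).1 ≤ z.2 / z.1 - n * ε) := by
      intro n
      induction n with
      | zero => exact Or.inr ⟨by simpa using hu, by simpa using h1, by simpa using h2, by simp⟩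
      | succ n ih =>
        rcases ih with h | ⟨hu', h1', h2', hsl⟩
        · exact Or.inl h
        by_cases hc : (G^[n] z).2 / (G^[n] z).1 ≤ -τL
        · left
          refine ⟨n + 1, Nat.succ_pos n, ?_, ?_⟩
          · rw [Function.iterate_succ_apply']
            exact (stepB τL δL g G hgL hG hδL _ h1' h2' hc).1
          · rw [Function.iterate_succ_apply']
            exact (stepB τL δL g G hgL hG hδL _ h1' h2' hc).2
        push_neg at hc
        right
        obtain ⟨qu, q1, q2, qs⟩ := stepA τL δL g G hgL hG hδL _ h1' h2' hc
        rw [Function.iterate_succ_apply']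
        refine ⟨qu, q1, q2, ?_⟩
        rw [qs]
        push_cast
        exact arith2 τL δL lamp lamm (z.2 / z.1) ε ((G^[n] z).2 / (G^[n] z).1) n
          hsum hprod hε hlt hs hden (Nat.cast_nonneg n) hsl hc
    obtain ⟨N, hN⟩ := exists_nat_gt ((z.2 / z.1 + τL) / ε)
    rcases key N with h | ⟨hu', h1', h2', hsl⟩
    · exact h
    · have hNε : z.2 / z.1 + τL < N * ε := by rwa [div_lt_iff₀ hε0] at hN
      have hslN : (G^[N] z).2 / (G^[N] z).1 ≤ -τL := by linarith
      refine ⟨N + 1, Nat.succ_pos N, ?_, ?_⟩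
      · rw [Function.iterate_succ_apply']
        exact (stepB τL δL g G hgL hG hδL _ h1' h2' hslN).1
      · rw [Function.iterate_succ_apply']
        exact (stepB τL δL g G hgL hG hδL _ h1' h2' hslN).2
  -- Part 3
  have part3 : ∀ z : ℝ × ℝ, z.1 ^ 2 + z.2 ^ 2 = 1 → z.1 < 0 → 0 < z.2 → -lamp < z.2 / z.1 →
      Tendsto (fun n : ℕ => G^[n] z) atTop (𝓝 wp) := by
    intro z hu h1 h2 hs
    have hs0 : z.2 / z.1 < 0 := div_neg_of_pos_of_neg h2 h1
    obtain ⟨m, hm⟩ : ∃ m : ℝ, m = min (z.2 / z.1) (-lamm) := ⟨_, rfl⟩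
    have hmle : m ≤ -lamm := hm ▸ min_le_right _ _
    have hms0 : m ≤ z.2 / z.1 := hm ▸ min_le_left _ _
    have hmlamp : -lamp < m := hm ▸ lt_min hs (by linarith)
    obtain ⟨r, hr⟩ : ∃ r : ℝ, r = lamm / (τL + m) := ⟨_, rfl⟩
    have hdm : 0 < τL + m := by linarith
    have hr0 : 0 < r := hr ▸ div_pos hlamm0 hdm
    have hr1 : r < 1 := hr ▸ (div_lt_one hdm).mpr (by linarith)
    have key : ∀ n : ℕ,
        ((G^[n] z).1 ^ 2 + (G^[n] z).2 ^ 2 = 1 ∧ (G^[n] z).1 < 0 ∧ 0 < (G^[n] z).2) ∧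
          m ≤ (G^[n] z).2 / (G^[n] z).1 ∧
          |(G^[n] z).2 / (G^[n] z).1 + lamm| ≤ r ^ n * |z.2 / z.1 + lamm| := by
      intro n
      induction n with
      | zero =>
        exact ⟨⟨by simpa using hu, by simpa using h1, by simpa using h2⟩,
          by simpa using hms0, by simp⟩
      | succ n ih =>
        obtain ⟨⟨hu', h1', h2'⟩, hge, habs⟩ := ih
        have hsnn : (G^[n] z).2 / (G^[n] z).1 < 0 := div_neg_of_pos_of_neg h2' h1'
        have hτsn : -τL < (G^[n] z).2 / (G^[n] z).1 := by linarith
        obtain ⟨qu, q1, q2, qs⟩ := stepA τL δL g G hgL hG hδL _ h1' h2' hτsn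
        obtain ⟨ha, hb⟩ := arith3 τL δL lamp lamm m ((G^[n] z).2 / (G^[n] z).1)
          hsum hprod hlamm0 hlt hmlamp hmle hge hsnn
        refine ⟨?_, ?_, ?_⟩
        · rw [Function.iterate_succ_apply']
          exact ⟨qu, q1, q2⟩
        · rw [Function.iterate_succ_apply', qs]
          exact ha
        · rw [Function.iterate_succ_apply', qs]
          calc |(-δL / (τL + (G^[n] z).2 / (G^[n] z).1)) + lamm|
              ≤ lamm / (τL + m) * |(G^[n] z).2 / (G^[n] z).1 + lamm| := hb
            _ ≤ r * (r ^ n * |z.2 / z.1 + lamm|) := by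
                rw [← hr]; exact mul_le_mul_of_nonneg_left habs hr0.le
            _ = r ^ (n + 1) * |z.2 / z.1 + lamm| := by ring
    have habs0 : Tendsto (fun n : ℕ => r ^ n * |z.2 / z.1 + lamm|) atTop (𝓝 0) := by
      simpa using
        (tendsto_pow_atTop_nhds_zero_of_lt_one hr0.le hr1).mul_const |z.2 / z.1 + lamm|
    have hsn0 : Tendsto (fun n : ℕ => (G^[n] z).2 / (G^[n] z).1 - (-lamm)) atTop (𝓝 0) := by
      apply squeeze_zero_norm (fun n => ?_) habs0
      rw [Real.norm_eq_abs, sub_neg_eq_add]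
      exact (key n).2.2
    have hsn : Tendsto (fun n : ℕ => (G^[n] z).2 / (G^[n] z).1) atTop (𝓝 (-lamm)) :=
      tendsto_sub_nhds_zero_iff.mp hsn0
    rw [hwpu]
    exact Tendsto.congr (fun n => (unit_rep _ (key n).1.1 (key n).1.2.1).symm)
      ((uvec_cont.tendsto _).comp hsn)
  exact ⟨part1, part2, part3⟩
end

section
/- Consider the two-dimensional border-collision normal form g with δ_L > 0 and δ_R < 0, and let G be the induced circle map. Let λ^R_+ = τ_R/2 + √(τ_R²/4 − δ_R) (real since δ_R < 0, with λ^R_+ − τ_R > 0) and let z* = (1, λ^R_+ − τ_R)/√(1 + (λ^R_+ − τ_R)²). Then z* is the unique fixed point of G in the closed first-quadrant arc {z ∈ S¹ : z₁ ≥ 0, z₂ ≥ 0}. -/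
open Filter Topology

/-- For the 2D border-collision normal form `g` with `δ_L > 0`, `δ_R < 0`,
let `λ^R_+ = τ_R/2 + √(τ_R²/4 − δ_R)` and
`z* = (1, λ^R_+ − τ_R)/√(1 + (λ^R_+ − τ_R)²)`. Then `z*` is the unique fixed point of
the circle map `G` in the closed first-quadrant arc `{z ∈ S¹ : z₁ ≥ 0, z₂ ≥ 0}`. -/
theorem stmt16 (τL δL τR δR : ℝ) (hδL : 0 < δL) (hδR : δR < 0)
    (g : ℝ × ℝ → ℝ × ℝ)
    (hgL : ∀ p : ℝ × ℝ, p.1 ≤ 0 → g p = (τL * p.1 + p.2, -δL * p.1))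
    (hgR : ∀ p : ℝ × ℝ, 0 ≤ p.1 → g p = (τR * p.1 + p.2, -δR * p.1))
    (G : ℝ × ℝ → ℝ × ℝ)
    (hG : ∀ p : ℝ × ℝ, G p = (Real.sqrt ((g p).1 ^ 2 + (g p).2 ^ 2))⁻¹ • g p)
    (lamRp : ℝ) (hlamRp : lamRp = τR / 2 + Real.sqrt (τR ^ 2 / 4 - δR))
    (zs : ℝ × ℝ) (hzs : zs = (Real.sqrt (1 + (lamRp - τR) ^ 2))⁻¹ • (1, lamRp - τR)) :
    G zs = zs ∧
      ∀ z : ℝ × ℝ, z.1 ^ 2 + z.2 ^ 2 = 1 → 0 ≤ z.1 → 0 ≤ z.2 → G z = z → z = zs := by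
  have hQ : Real.sqrt (τR ^ 2 / 4 - δR) ^ 2 = τR ^ 2 / 4 - δR :=
    Real.sq_sqrt (by nlinarith [sq_nonneg τR])
  have hQ0 : 0 ≤ Real.sqrt (τR ^ 2 / 4 - δR) := Real.sqrt_nonneg _
  set s : ℝ := lamRp - τR with hsdef
  have hst : s ^ 2 + τR * s + δR = 0 := by
    rw [hsdef, hlamRp]; linear_combination hQ
  have hs : 0 < s := by
    rw [hsdef, hlamRp]; nlinarith [hQ, hQ0, hδR]
  have hlam : 0 < τR + s := by nlinarith [hst, hs, hδR]
  set S : ℝ := Real.sqrt (1 + s ^ 2) with hSdef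
  have hS2 : S ^ 2 = 1 + s ^ 2 := Real.sq_sqrt (by positivity)
  have hSpos : 0 < S := Real.sqrt_pos.mpr (by positivity)
  have hSne : S ≠ 0 := ne_of_gt hSpos
  have hc : (S⁻¹) ^ 2 * (1 + s ^ 2) = 1 := by
    rw [← hS2]; field_simp
  have hzs' : zs = (S⁻¹, S⁻¹ * s) := by
    rw [hzs]; simp [Prod.smul_mk, smul_eq_mul]
  have hx0 : (0:ℝ) ≤ S⁻¹ := by positivity
  have hgzs : g zs = ((τR + s) * S⁻¹, (τR + s) * (S⁻¹ * s)) := by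
    rw [hzs', hgR (S⁻¹, S⁻¹ * s) hx0]
    refine Prod.ext ?_ ?_
    · simp; ring
    · simp; linear_combination (-S⁻¹) * hst
  have hnorm : Real.sqrt ((g zs).1 ^ 2 + (g zs).2 ^ 2) = τR + s := by
    rw [hgzs]
    have h1 : ((τR + s) * S⁻¹) ^ 2 + ((τR + s) * (S⁻¹ * s)) ^ 2 = (τR + s) ^ 2 := by
      linear_combination (τR + s) ^ 2 * hc
    rw [h1]
    exact Real.sqrt_sq hlam.le
  have hlne : τR + s ≠ 0 := ne_of_gt hlam
  constructor
  · rw [hG, hnorm, hgzs, hzs']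
    refine Prod.ext ?_ ?_
    · simp [smul_eq_mul]; field_simp
    · simp [smul_eq_mul]; field_simp
  · intro z h1 hx hy hfz
    obtain ⟨x, y⟩ := z
    simp only at h1 hx hy
    have hgz : g (x, y) = (τR * x + y, -δR * x) := hgR _ hx
    rw [hG, hgz] at hfz
    obtain ⟨N, hNdef⟩ : ∃ N : ℝ, N = Real.sqrt ((τR * x + y) ^ 2 + (-δR * x) ^ 2) :=
      ⟨_, rfl⟩
    rw [Prod.ext_iff] at hfz
    simp only [Prod.smul_fst, Prod.smul_snd, smul_eq_mul] at hfz
    rw [← hNdef] at hfz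
    obtain ⟨h1', h2'⟩ := hfz
    have hxpos : 0 < x := by
      rcases hx.eq_or_lt with h0 | h0
      · exfalso
        have hy1 : y = 1 := by
          have h3 : (y - 1) * (y + 1) = 0 := by linear_combination h1 + x * h0
          rcases mul_eq_zero.mp h3 with h4 | h4
          · linarith
          · linarith
        have hN1 : N = 1 := by
          rw [hNdef, ← h0, hy1]; norm_num
        rw [← h0, hy1, hN1] at h1'
        norm_num at h1'
      · exact h0
    have hNpos : 0 < N := by
      rw [hNdef]
      apply Real.sqrt_pos.mpr
      have hd : 0 < -δR * x := mul_pos (by linarith) hxpos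
      have : 0 < (-δR * x) ^ 2 := pow_pos hd 2
      linarith [this, sq_nonneg (τR * x + y)]
    have hNne : N ≠ 0 := ne_of_gt hNpos
    have ha : τR * x + y = N * x := by
      conv_rhs => rw [← h1']
      rw [← mul_assoc, mul_inv_cancel₀ hNne, one_mul]
    have hb : -δR * x = N * y := by
      conv_rhs => rw [← h2']
      rw [← mul_assoc, mul_inv_cancel₀ hNne, one_mul]
    have hbpos : 0 < -δR * x := mul_pos (by linarith) hxpos
    have hypos : 0 < y := h2' ▸ mul_pos (inv_pos.mpr hNpos) hbpos
    have hkey : y ^ 2 + τR * x * y + δR * x ^ 2 = 0 := by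
      linear_combination y * ha - x * hb
    have hf : (y - s * x) * (y + (s + τR) * x) = 0 := by
      linear_combination hkey - x ^ 2 * hst
    have hy_eq : y = s * x := by
      rcases mul_eq_zero.mp hf with h | h
      · linarith
      · exfalso
        have h5 : 0 < (s + τR) * x := mul_pos (by linarith) hxpos
        linarith
    have hxsq : x ^ 2 * (1 + s ^ 2) = 1 := by
      rw [hy_eq] at h1; linear_combination h1
    have hx2 : x ^ 2 = (S⁻¹) ^ 2 := by
      have h1s : (0:ℝ) < 1 + s ^ 2 := by positivity
      have := hxsq.trans hc.symm
      exact mul_right_cancel₀ (ne_of_gt h1s) this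
    have hxval : x = S⁻¹ := by
      have hfac : (x - S⁻¹) * (x + S⁻¹) = 0 := by linear_combination hx2
      rcases mul_eq_zero.mp hfac with h | h
      · linarith
      · exfalso
        have h6 : 0 < S⁻¹ := by positivity
        linarith
    rw [hzs', Prod.mk.injEq]
    exact ⟨hxval, by rw [hy_eq, hxval]; ring⟩
end

section
/- Consider the two-dimensional border-collision normal form g with δ_L > 0, δ_R < 0 and τ_R > 0, and let G be the induced circle map. Let λ^R_+ = τ_R/2 + √(τ_R²/4 − δ_R) and z* = (1, λ^R_+ − τ_R)/√(1 + (λ^R_+ − τ_R)²). Then the closed first-quadrant arc Q = {z ∈ S¹ : z₁ ≥ 0, z₂ ≥ 0} is forward invariant under G (G(Q) ⊆ Q), and G^n(z) → z* as n → ∞ for every z ∈ Q. -/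
open Filter Topology

private lemma nsc_aux (c : ℝ) (hc : 0 < c) (w : ℝ × ℝ) :
    (Real.sqrt ((c * w.1) ^ 2 + (c * w.2) ^ 2))⁻¹ • ((c * w.1, c * w.2) : ℝ × ℝ)
      = (Real.sqrt (w.1 ^ 2 + w.2 ^ 2))⁻¹ • w := by
  have h1 : (c * w.1) ^ 2 + (c * w.2) ^ 2 = c ^ 2 * (w.1 ^ 2 + w.2 ^ 2) := by ring
  rw [h1, Real.sqrt_mul (by positivity), Real.sqrt_sq hc.le]
  set s := Real.sqrt (w.1 ^ 2 + w.2 ^ 2) with hs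
  have hkey : (c * s)⁻¹ * c = s⁻¹ := by
    rcases eq_or_ne s 0 with h | h
    · simp [h]
    · field_simp
  ext
  · simp only [Prod.smul_fst, smul_eq_mul]
    rw [← hkey]; ring
  · simp only [Prod.smul_snd, smul_eq_mul]
    rw [← hkey]; ring

set_option maxHeartbeats 1000000 in
/-- For the 2D border-collision normal form `g` with `δ_L > 0`, `δ_R < 0`,
`τ_R > 0`, with `λ^R_+ = τ_R/2 + √(τ_R²/4 − δ_R)` and
`z* = (1, λ^R_+ − τ_R)/√(1 + (λ^R_+ − τ_R)²)`, the closed first-quadrant arc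
`Q = {z ∈ S¹ : z₁ ≥ 0, z₂ ≥ 0}` is forward invariant under the circle map `G`, and
`G^[n] z → z*` for every `z ∈ Q`. -/
theorem stmt17 (τL δL τR δR : ℝ) (hδL : 0 < δL) (hδR : δR < 0) (hτR : 0 < τR)
    (g : ℝ × ℝ → ℝ × ℝ)
    (hgL : ∀ p : ℝ × ℝ, p.1 ≤ 0 → g p = (τL * p.1 + p.2, -δL * p.1))
    (hgR : ∀ p : ℝ × ℝ, 0 ≤ p.1 → g p = (τR * p.1 + p.2, -δR * p.1))
    (G : ℝ × ℝ → ℝ × ℝ)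
    (hG : ∀ p : ℝ × ℝ, G p = (Real.sqrt ((g p).1 ^ 2 + (g p).2 ^ 2))⁻¹ • g p)
    (lamRp : ℝ) (hlamRp : lamRp = τR / 2 + Real.sqrt (τR ^ 2 / 4 - δR))
    (zs : ℝ × ℝ) (hzs : zs = (Real.sqrt (1 + (lamRp - τR) ^ 2))⁻¹ • (1, lamRp - τR)) :
    (∀ z : ℝ × ℝ, z.1 ^ 2 + z.2 ^ 2 = 1 → 0 ≤ z.1 → 0 ≤ z.2 →
      0 ≤ (G z).1 ∧ 0 ≤ (G z).2) ∧
      (∀ z : ℝ × ℝ, z.1 ^ 2 + z.2 ^ 2 = 1 → 0 ≤ z.1 → 0 ≤ z.2 →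
        Tendsto (fun n : ℕ => G^[n] z) atTop (𝓝 zs)) := by
  -- basic eigenvalue setup
  set D := Real.sqrt (τR ^ 2 / 4 - δR) with hD
  have hD2 : D ^ 2 = τR ^ 2 / 4 - δR := Real.sq_sqrt (by nlinarith)
  have hDnn : 0 ≤ D := Real.sqrt_nonneg _
  have hDgt : τR / 2 < D := by nlinarith
  set lp := τR / 2 + D with hlp
  set lm := τR / 2 - D with hlm
  set sp := lp - τR with hsp
  set sm := lm - τR with hsm
  have hlpτ : lamRp = lp := by rw [hlamRp, hlp]
  have hsp_pos : 0 < sp := by simp only [hsp, hlp]; linarith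
  have hsm_neg : sm < 0 := by simp only [hsm, hlm]; linarith
  have hlp_pos : 0 < lp := by simp only [hlp]; linarith
  have hsplp : sp * lp = -δR := by simp only [hsp, hlp]; nlinarith
  have hsmlm : sm * lm = -δR := by simp only [hsm, hlm]; nlinarith
  have hlm_abs : |lm| < lp := by
    rw [abs_lt]; constructor <;> simp only [hlm, hlp] <;> linarith
  clear_value D lp lm sp sm
  constructor
  · -- forward invariance
    intro z hz hx hy
    have hg := hgR z hx
    rw [hG, hg]
    have h1 : 0 ≤ τR * z.1 + z.2 := by nlinarith
    have h2 : 0 ≤ -δR * z.1 := mul_nonneg (by linarith) hx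
    constructor
    · simp only [Prod.smul_fst, smul_eq_mul]
      exact mul_nonneg (inv_nonneg.2 (Real.sqrt_nonneg _)) h1
    · simp only [Prod.smul_snd, smul_eq_mul]
      exact mul_nonneg (inv_nonneg.2 (Real.sqrt_nonneg _)) h2
  · -- convergence
    intro z hz hx hy
    set a := (z.2 - sm * z.1) / (2 * D) with ha
    set b := (sp * z.1 - z.2) / (2 * D) with hb
    have hDpos : 0 < D := lt_of_le_of_lt (by linarith) hDgt
    have ha_pos : 0 < a := by
      apply div_pos _ (by linarith)
      rcases lt_or_eq_of_le hx with h | h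
      · have h1 : 0 < -sm * z.1 := mul_pos (by linarith) h
        nlinarith
      · have hz1 : z.1 = 0 := h.symm
        have hz2 : (1 : ℝ) ≤ z.2 := by nlinarith
        nlinarith
    have hspsm : sp - sm = 2 * D := by rw [hsp, hsm, hlp, hlm]; ring
    clear_value a b
    -- the unnormalized linear orbit
    set f : ℕ → ℝ × ℝ := fun n =>
      (a * lp ^ n + b * lm ^ n, a * sp * lp ^ n + b * sm * lm ^ n) with hf
    have hf0 : f 0 = z := by
      simp only [hf, pow_zero, mul_one]
      have hD0 : (2 : ℝ) * D ≠ 0 := by positivity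
      ext
      · show a + b = z.1
        have h1 : a + b = ((sp - sm) * z.1) / (2 * D) := by rw [ha, hb]; ring
        rw [h1, hspsm, mul_comm, mul_div_assoc, div_self hD0, mul_one]
      · show a * sp + b * sm = z.2
        have h1 : a * sp + b * sm = ((sp - sm) * z.2) / (2 * D) := by rw [ha, hb]; ring
        rw [h1, hspsm, mul_comm, mul_div_assoc, div_self hD0, mul_one]
    have hrec : ∀ n, f (n + 1) = (τR * (f n).1 + (f n).2, -δR * (f n).1) := by
      intro n
      simp only [hf, pow_succ]
      ext
      · show a * (lp ^ n * lp) + b * (lm ^ n * lm)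
            = τR * (a * lp ^ n + b * lm ^ n) + (a * sp * lp ^ n + b * sm * lm ^ n)
        simp only [hsp, hsm]; ring
      · show a * sp * (lp ^ n * lp) + b * sm * (lm ^ n * lm)
            = -δR * (a * lp ^ n + b * lm ^ n)
        linear_combination (a * lp ^ n) * hsplp + (b * lm ^ n) * hsmlm
    clear_value f
    -- positivity and iterate formula
    have hkey : ∀ n, 0 ≤ (f n).1 ∧ 0 ≤ (f n).2 ∧ 0 < (f n).1 ^ 2 + (f n).2 ^ 2 ∧
        G^[n] z = (Real.sqrt ((f n).1 ^ 2 + (f n).2 ^ 2))⁻¹ • f n := by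
      intro n
      induction n with
      | zero =>
        refine ⟨by rw [hf0]; exact hx, by rw [hf0]; exact hy, by rw [hf0, hz]; norm_num, ?_⟩
        rw [Function.iterate_zero_apply, hf0, hz]
        norm_num
      | succ n ih =>
        obtain ⟨h1, h2, h3, h4⟩ := ih
        have hr : 0 < Real.sqrt ((f n).1 ^ 2 + (f n).2 ^ 2) := Real.sqrt_pos.2 h3
        set r := Real.sqrt ((f n).1 ^ 2 + (f n).2 ^ 2) with hrdef
        -- coordinates of the next point
        have hn1 : 0 ≤ (f (n + 1)).1 := by
          rw [hrec n]
          show 0 ≤ τR * (f n).1 + (f n).2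
          have := mul_nonneg hτR.le h1
          linarith
        have hn2 : 0 ≤ (f (n + 1)).2 := by
          rw [hrec n]; exact mul_nonneg (by linarith) h1
        have hn3 : 0 < (f (n + 1)).1 ^ 2 + (f (n + 1)).2 ^ 2 := by
          rw [hrec n]
          show 0 < (τR * (f n).1 + (f n).2) ^ 2 + (-δR * (f n).1) ^ 2
          rcases lt_or_eq_of_le h1 with h | h
          · have hp : 0 < (-δR * (f n).1) ^ 2 := pow_pos (mul_pos (by linarith) h) 2
            nlinarith [sq_nonneg (τR * (f n).1 + (f n).2)]
          · have h2' : 0 < (f n).2 := by nlinarith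
            have hp : 0 < (τR * (f n).1 + (f n).2) ^ 2 := by
              have := mul_nonneg hτR.le h1
              exact pow_pos (by linarith) 2
            nlinarith [sq_nonneg (-δR * (f n).1)]
        refine ⟨hn1, hn2, hn3, ?_⟩
        rw [Function.iterate_succ_apply', h4, hG]
        have hfst : ((r⁻¹ • f n).1) = r⁻¹ * (f n).1 := rfl
        have hge : g (r⁻¹ • f n) = (r⁻¹ * (f (n+1)).1, r⁻¹ * (f (n+1)).2) := by
          rw [hgR _ (by rw [hfst]; exact mul_nonneg (inv_nonneg.2 hr.le) h1), hrec n]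
          have hsnd : ((r⁻¹ • f n).2) = r⁻¹ * (f n).2 := rfl
          rw [hfst, hsnd]
          ext <;> dsimp only <;> ring
        rw [hge]
        have := nsc_aux r⁻¹ (by positivity) (f (n + 1))
        simpa using this
    -- the rescaled orbit and its limit
    set q := lm / lp with hq
    have hq_abs : |q| < 1 := by
      rw [hq, abs_div, abs_of_pos hlp_pos, div_lt_one hlp_pos]; exact hlm_abs
    have hql : ∀ n : ℕ, q ^ n * lp ^ n = lm ^ n := by
      intro n
      rw [hq, div_pow, div_mul_cancel₀]
      exact pow_ne_zero _ (ne_of_gt hlp_pos)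
    clear_value q
    set u : ℕ → ℝ × ℝ := fun n => (a + b * q ^ n, a * sp + b * sm * q ^ n) with hu
    clear_value u
    have hfu : ∀ n, f n = (lp ^ n * (u n).1, lp ^ n * (u n).2) := by
      intro n
      rw [hf, hu]
      ext
      · show a * lp ^ n + b * lm ^ n = lp ^ n * (a + b * q ^ n)
        rw [← hql n]; ring
      · show a * sp * lp ^ n + b * sm * lm ^ n = lp ^ n * (a * sp + b * sm * q ^ n)
        rw [← hql n]; ring
    -- limits
    have hrpow : Tendsto (fun n : ℕ => q ^ n) atTop (𝓝 0) :=
      tendsto_pow_atTop_nhds_zero_of_abs_lt_one hq_abs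
    have hu1 : Tendsto (fun n => (u n).1) atTop (𝓝 a) := by
      simp only [hu]
      simpa using tendsto_const_nhds.add (hrpow.const_mul b)
    have hu2 : Tendsto (fun n => (u n).2) atTop (𝓝 (a * sp)) := by
      simp only [hu]
      simpa using tendsto_const_nhds.add (hrpow.const_mul (b * sm))
    set w : ℝ × ℝ := (a, a * sp) with hw
    have hw_pos : 0 < w.1 ^ 2 + w.2 ^ 2 := by
      rw [hw]
      have : 0 < a ^ 2 := pow_pos ha_pos 2
      show 0 < a ^ 2 + (a * sp) ^ 2
      nlinarith [sq_nonneg (a * sp)]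
    have hsw : 0 < Real.sqrt (w.1 ^ 2 + w.2 ^ 2) := Real.sqrt_pos.2 hw_pos
    have hsq : Tendsto (fun n => Real.sqrt ((u n).1 ^ 2 + (u n).2 ^ 2)) atTop
        (𝓝 (Real.sqrt (w.1 ^ 2 + w.2 ^ 2))) :=
      (Real.continuous_sqrt.tendsto _).comp ((hu1.pow 2).add (hu2.pow 2))
    have huw : Tendsto u atTop (𝓝 w) := hu1.prodMk_nhds hu2
    have hN : Tendsto (fun n => (Real.sqrt ((u n).1 ^ 2 + (u n).2 ^ 2))⁻¹ • u n) atTop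
        (𝓝 ((Real.sqrt (w.1 ^ 2 + w.2 ^ 2))⁻¹ • w)) :=
      (hsq.inv₀ (ne_of_gt hsw)).smul huw
    have hGn : ∀ n, G^[n] z = (Real.sqrt ((u n).1 ^ 2 + (u n).2 ^ 2))⁻¹ • u n := by
      intro n
      rw [(hkey n).2.2.2, hfu n]
      exact nsc_aux (lp ^ n) (pow_pos hlp_pos n) (u n)
    have hlsp : lamRp - τR = sp := by rw [hlpτ, hsp]
    have hzsw : (Real.sqrt (w.1 ^ 2 + w.2 ^ 2))⁻¹ • w = zs := by
      have h2 := nsc_aux a ha_pos (1, sp)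
      rw [hzs, hlsp, hw]
      simpa using h2
    have hfinal := hN.congr (fun n => (hGn n).symm)
    rwa [hzsw] at hfinal
end

section
/- Consider the two-dimensional border-collision normal form g with δ_L > 0 and δ_R < 0, and let Λ = {a·(τ_R, −δ_R) + b·(1, 0) : a ≥ 0, b ≥ 0} ⊂ ℝ² (the closed sector between the positive x-axis and the ray through (τ_R, −δ_R), which is the image under g of the closed first quadrant). Then g(Λ) ⊆ Λ unless all of the following hold: τ_R < 0, τ_L > 2√δ_L, and −λ^L_+ < −δ_R/τ_R < −λ^L_-, where λ^L_± = τ_L/2 ± √(τ_L²/4 − δ_L). Moreover, if τ_L < 2√δ_L then there exists M ∈ ℕ such that g^M(x,y) ∈ Λ for all (x,y) ∈ ℝ². -/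
set_option maxHeartbeats 800000


open Filter Topology

/-- For the 2D border-collision normal form `g` with `δ_L > 0`, `δ_R < 0`,
let `Λ = {a (τ_R, −δ_R) + b (1,0) : a, b ≥ 0}`. Then `g(Λ) ⊆ Λ` unless `τ_R < 0`,
`τ_L > 2√δ_L`, and `−λ^L_+ < −δ_R/τ_R < −λ^L_-` (with
`λ^L_± = τ_L/2 ± √(τ_L²/4 − δ_L)`). Moreover, if `τ_L < 2√δ_L` then there exists
`M ∈ ℕ` such that `g^[M] p ∈ Λ` for all `p ∈ ℝ²`. -/
theorem stmt18 (τL δL τR δR : ℝ) (hδL : 0 < δL) (hδR : δR < 0)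
    (g : ℝ × ℝ → ℝ × ℝ)
    (hgL : ∀ p : ℝ × ℝ, p.1 ≤ 0 → g p = (τL * p.1 + p.2, -δL * p.1))
    (hgR : ∀ p : ℝ × ℝ, 0 ≤ p.1 → g p = (τR * p.1 + p.2, -δR * p.1))
    (Λ : Set (ℝ × ℝ))
    (hΛ : Λ = {p : ℝ × ℝ | ∃ a b : ℝ, 0 ≤ a ∧ 0 ≤ b ∧
      p = a • ((τR, -δR) : ℝ × ℝ) + b • ((1, 0) : ℝ × ℝ)})
    (lamp lamm : ℝ)
    (hlamp : lamp = τL / 2 + Real.sqrt (τL ^ 2 / 4 - δL))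
    (hlamm : lamm = τL / 2 - Real.sqrt (τL ^ 2 / 4 - δL)) :
    (¬(τR < 0 ∧ 2 * Real.sqrt δL < τL ∧
        -lamp < -δR / τR ∧ -δR / τR < -lamm) →
      ∀ p ∈ Λ, g p ∈ Λ) ∧
      (τL < 2 * Real.sqrt δL → ∃ M : ℕ, ∀ p : ℝ × ℝ, g^[M] p ∈ Λ) := by
  -- membership criterion for Λ
  have hmem : ∀ x y : ℝ, 0 ≤ y → τR * y ≤ -δR * x → (x, y) ∈ Λ := by
    intro x y hy hxy
    rw [hΛ]
    refine ⟨y / (-δR), x - y / (-δR) * τR, div_nonneg hy (by linarith), ?_, ?_⟩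
    · have h1 : y / (-δR) * τR ≤ x := by
        rw [div_mul_eq_mul_div, div_le_iff₀ (by linarith : (0:ℝ) < -δR)]
        nlinarith
      linarith
    · have hne : (-δR) ≠ 0 := by linarith
      simp [Prod.ext_iff, Prod.smul_mk, Prod.mk_add_mk, smul_eq_mul]
      have : δR ≠ 0 := by linarith
      field_simp
  have hmem' : ∀ p ∈ Λ, 0 ≤ p.2 ∧ τR * p.2 ≤ -δR * p.1 := by
    intro p hp
    rw [hΛ] at hp
    obtain ⟨a, b, ha, hb, rfl⟩ := hp
    simp only [Prod.smul_mk, Prod.mk_add_mk, smul_eq_mul, Prod.fst, Prod.snd]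
    constructor <;> nlinarith
  -- the image of the closed first quadrant lies in Λ
  have hA : ∀ q : ℝ × ℝ, 0 ≤ q.1 → 0 ≤ q.2 → g q ∈ Λ := by
    intro q h1 h2
    rw [hgR q h1]
    exact hmem _ _ (by nlinarith) (by nlinarith)
  -- the image of any point has nonnegative second coordinate
  have hC : ∀ q : ℝ × ℝ, 0 ≤ (g q).2 := by
    intro q
    rcases le_total q.1 0 with h | h
    · rw [hgL q h]; simp only; nlinarith
    · rw [hgR q h]; simp only; nlinarith
  -- the key quadratic inequality, assuming the exceptional condition fails
  have hkey : ¬(τR < 0 ∧ 2 * Real.sqrt δL < τL ∧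
        -lamp < -δR / τR ∧ -δR / τR < -lamm) → τR < 0 →
      0 ≤ δR^2 - τL*δR*τR + δL*τR^2 := by
    intro hnc hτR
    by_contra hk
    push_neg at hk
    apply hnc
    have hτRne : τR ≠ 0 := ne_of_lt hτR
    have hτR2 : 0 < τR^2 := by nlinarith [mul_pos_of_neg_of_neg hτR hτR]
    have hτRδR : 0 < τR * δR := mul_pos_of_neg_of_neg hτR hδR
    have hτL : 0 < τL := by nlinarith [sq_nonneg δR, sq_nonneg τR]
    have hτL2 : 4*δL < τL^2 := by nlinarith [sq_nonneg (2*δR - τL*τR)]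
    have hsδ : 2 * Real.sqrt δL < τL := by
      have h1 : Real.sqrt δL < τL / 2 := by
        rw [show Real.sqrt δL < τL / 2 ↔ δL < (τL/2)^2 from Real.sqrt_lt' (by linarith)]
        nlinarith
      linarith
    set q : ℝ := -δR / τR with hq
    set s : ℝ := Real.sqrt (τL^2/4 - δL) with hs
    have hs0 : 0 ≤ s := Real.sqrt_nonneg _
    have hs2 : s^2 = τL^2/4 - δL := Real.sq_sqrt (by nlinarith)
    have hq1 : q^2 + τL*q + δL < 0 := by
      have he : (q^2 + τL*q + δL) * τR^2 = δR^2 - τL*δR*τR + δL*τR^2 := by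
        rw [hq]; field_simp; ring
      nlinarith
    have hq2 : (q + τL/2)^2 < s^2 := by rw [hs2]; nlinarith
    refine ⟨hτR, hsδ, ?_, ?_⟩
    · rw [hlamp]
      nlinarith [sq_nonneg (q + τL/2 + s)]
    · rw [hlamm]
      nlinarith [sq_nonneg (q + τL/2 - s)]
  -- forward invariance of Λ
  have hinv : ¬(τR < 0 ∧ 2 * Real.sqrt δL < τL ∧
        -lamp < -δR / τR ∧ -δR / τR < -lamm) → ∀ p ∈ Λ, g p ∈ Λ := by
    intro hnc p hp
    obtain ⟨hy, hxy⟩ := hmem' p hp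
    rcases le_or_gt 0 p.1 with h | h
    · exact hA p h hy
    · have hτR : τR < 0 := by
        by_contra hc
        push_neg at hc
        nlinarith [mul_nonneg hc hy]
      have hk := hkey hnc hτR
      rw [hgL p h.le]
      apply hmem
      · nlinarith
      · have h1 : 0 ≤ (δR^2 - τL*δR*τR + δL*τR^2) * (-p.1) := mul_nonneg hk (by linarith)
        have h2 : 0 ≤ (-δR) * (-δR*p.1 - τR*p.2) := mul_nonneg (by linarith) (by nlinarith)
        have h3 : 0 < -τR := by linarith
        have h4 : (-τR) * (-δR * (τL*p.1+p.2) - τR * (-δL*p.1)) =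
            (δR^2 - τL*δR*τR + δL*τR^2) * (-p.1) + (-δR)*(-δR*p.1 - τR*p.2) := by ring
        have h6 : 0 ≤ -δR * (τL*p.1+p.2) - τR * (-δL*p.1) := by
          have h5 : (-τR) * 0 ≤ (-τR) * (-δR * (τL*p.1+p.2) - τR * (-δL*p.1)) := by
            rw [h4]; linarith
          exact le_of_mul_le_mul_left (by linarith) h3
        linarith
  refine ⟨hinv, ?_⟩
  -- part 2
  intro h2
  have hnc : ¬(τR < 0 ∧ 2 * Real.sqrt δL < τL ∧
      -lamp < -δR / τR ∧ -δR / τR < -lamm) := by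
    rintro ⟨-, hh, -⟩
    linarith
  have hinv' : ∀ p ∈ Λ, g p ∈ Λ := hinv hnc
  have hiter : ∀ (n : ℕ) (p : ℝ × ℝ), g^[n+1] p = g (g^[n] p) :=
    fun n p => Function.iterate_succ_apply' g n p
  have hiterΛ : ∀ (k : ℕ) (q : ℝ × ℝ), q ∈ Λ → g^[k] q ∈ Λ := by
    intro k
    induction k with
    | zero => intro q hq; simpa using hq
    | succ k ih => intro q hq; rw [hiter]; exact hinv' _ (ih q hq)
  -- finishing lemma: if the orbit hits {x ≥ 0} at time n ≥ 1 with n + 1 ≤ M, then g^[M] p ∈ Λ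
  have hfin : ∀ (M n : ℕ) (p : ℝ × ℝ), 1 ≤ n → n + 1 ≤ M → 0 ≤ (g^[n] p).1 → g^[M] p ∈ Λ := by
    intro M n p hn1 hnM hx
    have hy : 0 ≤ (g^[n] p).2 := by
      obtain ⟨m, rfl⟩ : ∃ m, n = m + 1 := ⟨n - 1, by omega⟩
      rw [hiter]; exact hC _
    have h1 : g^[n+1] p ∈ Λ := by rw [hiter]; exact hA _ hx hy
    have h2' : g^[M] p = g^[M - (n+1)] (g^[n+1] p) := by
      rw [← Function.iterate_add_apply]
      congr 1
      omega
    rw [h2']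
    exact hiterΛ _ _ h1
  rcases le_or_gt τL 0 with hτL | hτL
  · -- if τL ≤ 0 a point in the left half plane leaves in one step
    refine ⟨3, fun p => ?_⟩
    rcases le_or_gt 0 (g^[1] p).1 with h | h
    · exact hfin 3 1 p le_rfl (by omega) h
    · refine hfin 3 2 p (by omega) (by omega) ?_
      have hy1 : 0 ≤ (g^[1] p).2 := by rw [hiter]; exact hC _
      rw [show (2:ℕ) = 1 + 1 from rfl, hiter, hgL _ h.le]
      have h5 : 0 ≤ τL * (g^[1] p).1 := by
        nlinarith [mul_nonneg (neg_nonneg.2 hτL) (neg_nonneg.2 h.le)]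
      simp only
      linarith
  · -- 0 < τL, so τL² < 4 δL : rotation-type dynamics
    have hτL4 : τL^2 < 4*δL := by
      nlinarith [Real.sq_sqrt hδL.le, Real.sqrt_nonneg δL]
    obtain ⟨c, hc⟩ : ∃ c : ℝ, c = δL - τL^2/4 := ⟨_, rfl⟩
    have hc0 : 0 < c := by rw [hc]; linarith
    set N : ℕ := ⌈τL^2/c⌉₊ + 1 with hN
    set M : ℕ := N + 4 with hM
    refine ⟨M, fun p => ?_⟩
    have hexist : ∃ n, 1 ≤ n ∧ n + 1 ≤ M ∧ 0 ≤ (g^[n] p).1 := by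
      by_contra hcon
      push_neg at hcon
      have hneg : ∀ n, 1 ≤ n → n + 1 ≤ M → (g^[n] p).1 < 0 := fun n h1 h2 => hcon n h1 h2
      have hrec : ∀ n, 1 ≤ n → n + 2 ≤ M →
          g^[n+1] p = (τL * (g^[n] p).1 + (g^[n] p).2, -δL * (g^[n] p).1) := by
        intro n h1 h2
        rw [hiter, hgL _ (hneg n h1 (by omega)).le]
      have hrec2 : ∀ n, 1 ≤ n → n + 3 ≤ M →
          (g^[n+2] p).1 = τL * (g^[n+1] p).1 - δL * (g^[n] p).1 := by
        intro n h1 h2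
        have e1 := hrec (n+1) (by omega) (by omega)
        have e2 := hrec n h1 (by omega)
        rw [show n + 2 = (n+1) + 1 from rfl, e1, e2]
        simp
        ring
      set t : ℕ → ℝ := fun n => (g^[n+1] p).1 / (g^[n] p).1 with ht
      have ht_pos : ∀ n, 1 ≤ n → n + 2 ≤ M → 0 < t n := by
        intro n h1 h2
        exact div_pos_of_neg_of_neg (hneg (n+1) (by omega) (by omega)) (hneg n h1 (by omega))
      have htrec : ∀ n, 1 ≤ n → n + 3 ≤ M → t (n+1) = τL - δL / t n := by
        intro n h1 h2
        have hx1 : (g^[n] p).1 < 0 := hneg n h1 (by omega)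
        have hx2 : (g^[n+1] p).1 < 0 := hneg (n+1) (by omega) (by omega)
        have h3 := hrec2 n h1 h2
        simp only [ht]
        rw [h3, div_div_eq_mul_div, sub_div, mul_div_assoc, div_self (ne_of_lt hx2), mul_one]
      have hmain : ∀ k, 2 + k + 2 ≤ M → t (2 + k) ≤ τL - k * (c/τL) := by
        intro k
        induction k with
        | zero =>
          intro _
          have h1 : 0 < t 1 := ht_pos 1 (by omega) (by omega)
          rw [show 2 = 1 + 1 from rfl, htrec 1 (by omega) (by omega)]
          have : 0 < δL / t 1 := div_pos hδL h1
          simp only [Nat.cast_zero, zero_mul, sub_zero]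
          linarith
        | succ k ih =>
          intro hk
          have hkk := ih (by omega)
          have hp' : 0 < t (2+k) := ht_pos (2+k) (by omega) (by omega)
          have hb : t (2+k) ≤ τL := by
            have : 0 ≤ (k:ℝ) * (c/τL) := by positivity
            linarith
          have e := htrec (2+k) (by omega) (by omega)
          have hq : c * t (2+k) ≤ τL * (t (2+k)^2 - τL * t (2+k) + δL) := by
            nlinarith [sq_nonneg (t (2+k) - τL/2), mul_nonneg hτL.le
              (show 0 ≤ t (2+k)^2 - τL * t (2+k) + δL - c by
                rw [hc]; nlinarith [sq_nonneg (t (2+k) - τL/2)])]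
          have hchain : τL - δL / t (2+k) ≤ t (2+k) - c / τL := by
            have expand : (t (2+k) - c/τL) - (τL - δL / t (2+k)) =
                (τL * (t (2+k)^2 - τL * t (2+k) + δL) - c * t (2+k)) / (τL * t (2+k)) := by
              field_simp
              ring
            have hden : 0 < τL * t (2+k) := mul_pos hτL hp'
            have h0 : 0 ≤ (t (2+k) - c/τL) - (τL - δL / t (2+k)) := by
              rw [expand]; exact div_nonneg (by linarith) hden.le
            linarith
          have e' : t (2 + (k+1)) = τL - δL / t (2+k) := by
            rw [show 2 + (k+1) = (2+k) + 1 from by omega]; exact e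
          rw [e']
          push_cast
          linarith
      have hNb : τL < (N:ℝ) * (c/τL) := by
        have h1 : τL^2/c ≤ (⌈τL^2/c⌉₊ : ℝ) := Nat.le_ceil _
        have h2' : (N:ℝ) = (⌈τL^2/c⌉₊ : ℝ) + 1 := by rw [hN]; push_cast; ring
        have h3 : 0 < c / τL := div_pos hc0 hτL
        have h4 : (τL^2/c + 1) * (c/τL) = τL + c/τL := by field_simp
        nlinarith [mul_le_mul_of_nonneg_right (show τL^2/c + 1 ≤ (N:ℝ) by linarith) h3.le]
      have hfinal := hmain N (by omega)
      have hposf := ht_pos (2+N) (by omega) (by omega)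
      linarith
    obtain ⟨n, hn1, hnM, hx⟩ := hexist
    exact hfin M n p hn1 hnM hx
end

section
/- Consider the two-dimensional border-collision normal form g with δ_L > 0, δ_R < 0 and τ_L < 2√δ_L. Let Γ = {(x, 1−x) : 0 ≤ x ≤ 1}, let Δ₀ = {(x,y) : x ≥ 0, y ≥ 0, y ≤ 1−x}, let Δ_n = g^n(Δ₀) (the image set) for n ≥ 1, and let Ω_n = Δ₀ ∪ Δ₁ ∪ ⋯ ∪ Δ_n for n ≥ 0. Then (0,0) is an asymptotically stable fixed point of g if and only if there exist m, k ∈ ℕ such that g(Ω_m) ⊆ Ω_m and g^k(Ω_m) ∩ Γ = ∅. -/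
open Filter Topology


noncomputable def nrm (p : ℝ × ℝ) : ℝ := Real.sqrt (p.1^2 + p.2^2)

lemma nrm_nonneg (p : ℝ × ℝ) : 0 ≤ nrm p := Real.sqrt_nonneg _

lemma abs_fst_le_nrm (p : ℝ × ℝ) : |p.1| ≤ nrm p := by
  rw [nrm, ← Real.sqrt_sq_eq_abs]
  exact Real.sqrt_le_sqrt (by nlinarith [sq_nonneg p.2])

lemma abs_snd_le_nrm (p : ℝ × ℝ) : |p.2| ≤ nrm p := by
  rw [nrm, ← Real.sqrt_sq_eq_abs]
  exact Real.sqrt_le_sqrt (by nlinarith [sq_nonneg p.1])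

lemma nrm_le_abs_add (p : ℝ × ℝ) : nrm p ≤ |p.1| + |p.2| := by
  rw [nrm]
  refine Real.sqrt_le_sqrt ?_ |>.trans (le_of_eq (Real.sqrt_sq (by positivity)))
  nlinarith [abs_nonneg p.1, abs_nonneg p.2, sq_abs p.1, sq_abs p.2, abs_mul_abs_self p.1]

lemma nrm_smul (c : ℝ) (hc : 0 ≤ c) (p : ℝ × ℝ) : nrm (c • p) = c * nrm p := by
  simp only [nrm, Prod.smul_fst, Prod.smul_snd, smul_eq_mul]
  rw [show (c*p.1)^2 + (c*p.2)^2 = c^2 * (p.1^2+p.2^2) by ring, Real.sqrt_mul (by positivity),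
    Real.sqrt_sq hc]

lemma nrm_pos (p : ℝ × ℝ) (hp : p ≠ 0) : 0 < nrm p := by
  rcases eq_or_lt_of_le (nrm_nonneg p) with h | h
  · exfalso
    have h1 : p.1^2 + p.2^2 = 0 := by
      have := Real.sqrt_eq_zero (by positivity) |>.mp h.symm
      linarith [this]
    apply hp
    have : p.1 = 0 ∧ p.2 = 0 := by constructor <;> nlinarith [sq_nonneg p.1, sq_nonneg p.2]
    exact Prod.ext this.1 this.2
  · exact h

section
variable (τL δL τR δR : ℝ) (g : ℝ × ℝ → ℝ × ℝ)
variable (hδL : 0 < δL) (hδR : δR < 0)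
variable (hgL : ∀ p : ℝ × ℝ, p.1 ≤ 0 → g p = (τL * p.1 + p.2, -δL * p.1))
variable (hgR : ∀ p : ℝ × ℝ, 0 ≤ p.1 → g p = (τR * p.1 + p.2, -δR * p.1))

include hgL hgR in
lemma g_homog : ∀ c : ℝ, 0 ≤ c → ∀ p : ℝ × ℝ, g (c • p) = c • g p := by
  intro c hc p
  rcases le_total p.1 0 with h | h
  · have h2 : (c • p).1 ≤ 0 := by
      simpa using mul_nonpos_of_nonneg_of_nonpos hc h
    rw [hgL _ h2, hgL _ h]
    simp [Prod.smul_def, Prod.ext_iff]; constructor <;> ring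
  · have h2 : 0 ≤ (c • p).1 := by simpa using mul_nonneg hc h
    rw [hgR _ h2, hgR _ h]
    simp [Prod.smul_def, Prod.ext_iff]; constructor <;> ring

include hgL hgR in
lemma g_iter_homog : ∀ n : ℕ, ∀ c : ℝ, 0 ≤ c → ∀ p : ℝ × ℝ,
    g^[n] (c • p) = c • g^[n] p := by
  intro n
  induction n with
  | zero => simp
  | succ n ih =>
    intro c hc p
    rw [Function.iterate_succ_apply, Function.iterate_succ_apply,
      g_homog τL δL τR δR g hgL hgR c hc p, ih c hc]

include hgR in
lemma g_zero : g 0 = 0 := by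
  rw [hgR 0 (le_refl 0)]; simp

include hδL hδR hgL hgR in
lemma g_snd_nonneg : ∀ p : ℝ × ℝ, 0 ≤ (g p).2 := by
  intro p
  rcases le_total p.1 0 with h | h
  · rw [hgL _ h]; simp; nlinarith
  · rw [hgR _ h]; simp; nlinarith

include hgL hgR in
lemma g_eq : ∀ p : ℝ × ℝ,
    g p = (τL * min p.1 0 + τR * max p.1 0 + p.2, -δL * min p.1 0 + -δR * max p.1 0) := by
  intro p
  rcases le_total p.1 0 with h | h
  · rw [hgL _ h, min_eq_left h, max_eq_right h]
    simp [Prod.ext_iff]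
  · rw [hgR _ h, min_eq_right h, max_eq_left h]
    simp [Prod.ext_iff]

include hgL hgR in
lemma g_cont : Continuous g := by
  have : g = fun p : ℝ × ℝ =>
      ((τL * min p.1 0 + τR * max p.1 0 + p.2, -δL * min p.1 0 + -δR * max p.1 0) : ℝ × ℝ) := by
    funext p; exact g_eq τL δL τR δR g hgL hgR p
  rw [this]; fun_prop

include hgL hgR in
lemma g_nrm_le : ∃ L : ℝ, 1 ≤ L ∧ ∀ p : ℝ × ℝ, nrm (g p) ≤ L * nrm p := by
  refine ⟨|τL| + |τR| + |δL| + |δR| + 1, le_add_of_nonneg_left (by positivity), fun p => ?_⟩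
  have h1 := abs_fst_le_nrm p
  have h2 := abs_snd_le_nrm p
  have h3 := nrm_le_abs_add (g p)
  have h4 : |(g p).1| ≤ (|τL| + |τR|) * |p.1| + |p.2| := by
    rcases le_total p.1 0 with h | h
    · rw [hgL _ h]
      calc |τL * p.1 + p.2| ≤ |τL * p.1| + |p.2| := abs_add_le _ _
        _ ≤ (|τL| + |τR|) * |p.1| + |p.2| := by
            rw [abs_mul]; nlinarith [abs_nonneg p.1, abs_nonneg τR]
    · rw [hgR _ h]
      calc |τR * p.1 + p.2| ≤ |τR * p.1| + |p.2| := abs_add_le _ _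
        _ ≤ (|τL| + |τR|) * |p.1| + |p.2| := by
            rw [abs_mul]; nlinarith [abs_nonneg p.1, abs_nonneg τL]
  have h5 : |(g p).2| ≤ (|δL| + |δR|) * |p.1| := by
    rcases le_total p.1 0 with h | h
    · rw [hgL _ h]
      simp only [abs_mul, abs_neg]
      nlinarith [abs_nonneg p.1, abs_nonneg δR]
    · rw [hgR _ h]
      simp only [abs_mul, abs_neg]
      nlinarith [abs_nonneg p.1, abs_nonneg δL]
  have h0 := nrm_nonneg p
  nlinarith [abs_nonneg p.1, abs_nonneg p.2, abs_nonneg τL, abs_nonneg τR, abs_nonneg δL, abs_nonneg δR]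

end

section
variable (τL δL τR δR : ℝ) (g : ℝ × ℝ → ℝ × ℝ)

lemma Qenter (hδL : 0 < δL) (hδR : δR < 0) (hτL : τL < 2 * Real.sqrt δL)
    (hgL : ∀ p : ℝ × ℝ, p.1 ≤ 0 → g p = (τL * p.1 + p.2, -δL * p.1))
    (hgR : ∀ p : ℝ × ℝ, 0 ≤ p.1 → g p = (τR * p.1 + p.2, -δR * p.1)) :
    ∃ M : ℕ, ∀ p : ℝ × ℝ, ∃ j ≤ M, 0 ≤ (g^[j] p).1 ∧ 0 ≤ (g^[j] p).2 := by
  have hy := g_snd_nonneg τL δL τR δR g hδL hδR hgL hgR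
  rcases le_or_gt τL 0 with hτ | hτ
  · -- one step after entering the upper half plane
    refine ⟨2, fun p => ?_⟩
    rcases le_or_gt 0 (g p).1 with h1 | h1
    · exact ⟨1, by norm_num, by simpa using h1, by simpa using hy p⟩
    · refine ⟨2, le_refl 2, ?_, ?_⟩
      · have := hgL (g p) (le_of_lt h1)
        rw [show g^[2] p = g (g p) from rfl, this]
        have : 0 ≤ τL * (g p).1 := by
          nlinarith [mul_nonneg (neg_nonneg.2 hτ) (neg_nonneg.2 (le_of_lt h1))]
        simp only
        nlinarith [hy p]
      · rw [show g^[2] p = g (g p) from rfl]; exact hy (g p)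
  · -- spiralling case
    have hτ2 : τL ^ 2 < 4 * δL := by
      have h4 : (2 * Real.sqrt δL) ^ 2 = 4 * δL := by
        rw [mul_pow, Real.sq_sqrt (le_of_lt hδL)]; ring
      nlinarith [Real.sqrt_nonneg δL]
    set c : ℝ := (δL - τL ^ 2 / 4) / τL with hc
    have hcpos : 0 < c := by apply div_pos; nlinarith; exact hτ
    obtain ⟨M₁, hM₁⟩ := exists_nat_gt (τL / c)
    have hM₁' : τL < M₁ * c := by
      rwa [div_lt_iff₀ hcpos] at hM₁
    have sub : ∀ q : ℝ × ℝ, q.1 < 0 → 0 ≤ q.2 →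
        ∃ j ≤ M₁ + 1, 0 ≤ (g^[j] q).1 ∧ 0 ≤ (g^[j] q).2 := by
      intro q hx hy0
      by_contra hcon
      push_neg at hcon
      have key : ∀ i, i ≤ M₁ + 1 → (g^[i] q).1 < 0 ∧ 0 ≤ (g^[i] q).2 ∧
          (i : ℝ) * c ≤ (g^[i] q).2 / (-(g^[i] q).1) := by
        intro i
        induction i with
        | zero =>
          intro _
          refine ⟨by simpa using hx, by simpa using hy0, ?_⟩
          simp only [Function.iterate_zero_apply, Nat.cast_zero, zero_mul]
          have : 0 < -q.1 := by linarith
          positivity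
        | succ i ih =>
          intro hi
          obtain ⟨hxi, hyi, hti⟩ := ih (by omega)
          set u : ℝ := -(g^[i] q).1 with hu
          have hu0 : 0 < u := by rw [hu]; linarith
          have hstep : g^[i+1] q = (τL * (g^[i] q).1 + (g^[i] q).2, -δL * (g^[i] q).1) := by
            rw [Function.iterate_succ_apply', hgL _ (le_of_lt hxi)]
          have hy1 : 0 < (g^[i+1] q).2 := by
            rw [hstep]
            show 0 < -δL * (g^[i] q).1
            nlinarith
          have hx1 : (g^[i+1] q).1 < 0 := by
            by_contra h
            push_neg at h
            exact absurd (hcon _ hi h) (not_lt.2 (le_of_lt hy1))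
          refine ⟨hx1, le_of_lt hy1, ?_⟩
          set y : ℝ := (g^[i] q).2 with hyy
          have hu1 : -(g^[i+1] q).1 = τL * u - y := by
            rw [hstep]
            show -(τL * (g^[i] q).1 + y) = τL * u - y
            rw [hu]; ring
          have hy1' : (g^[i+1] q).2 = δL * u := by
            rw [hstep]
            show -δL * (g^[i] q).1 = δL * u
            rw [hu]; ring
          have hu1pos : 0 < τL * u - y := by rw [← hu1]; linarith
          have hyu : y < τL * u := by linarith
          rw [hu1, hy1']
          have hcτ : c * τL = δL - τL ^ 2 / 4 := by
            rw [hc]; field_simp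
          clear_value c u y
          have hgain : y / u + c ≤ δL * u / (τL * u - y) := by
            rw [div_add' _ _ _ (ne_of_gt hu0), div_le_div_iff₀ hu0 hu1pos]
            nlinarith [sq_nonneg (τL * u - 2 * y), mul_nonneg (mul_nonneg hcpos.le hu0.le) hyi,
              mul_le_mul_of_nonneg_right (le_of_eq hcτ) (mul_pos hu0 hu0).le]
          have : (i : ℝ) * c + c ≤ y / u + c := by
            have : (i:ℝ) * c ≤ y / u := hti
            linarith
          push_cast
          linarith [hti, hgain]
      obtain ⟨hxM, hyM, htM⟩ := key M₁ (by omega)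
      obtain ⟨hxM1, -, -⟩ := key (M₁+1) (le_refl (M₁+1))
      have hxM1' : (g^[M₁+1] q).1 = τL * (g^[M₁] q).1 + (g^[M₁] q).2 := by
        rw [Function.iterate_succ_apply', hgL _ (le_of_lt hxM)]
      have hu0 : 0 < -(g^[M₁] q).1 := by linarith
      have hlt : (g^[M₁] q).2 / (-(g^[M₁] q).1) < τL := by
        rw [div_lt_iff₀ hu0]
        nlinarith
      linarith
    refine ⟨M₁ + 2, fun p => ?_⟩
    rcases le_or_gt 0 (g p).1 with h1 | h1
    · exact ⟨1, by omega, by simpa using h1, by simpa using hy p⟩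
    · obtain ⟨j, hj, h2, h3⟩ := sub (g p) h1 (hy p)
      refine ⟨j + 1, by omega, ?_, ?_⟩ <;>
        rw [Function.iterate_succ_apply] <;> assumption

end

lemma dist_le_nrm (q : ℝ × ℝ) : dist q ((0:ℝ),(0:ℝ)) ≤ nrm q := by
  rw [Prod.dist_eq]
  simp only [Real.dist_eq, sub_zero]
  exact max_le (abs_fst_le_nrm q) (abs_snd_le_nrm q)

lemma nrm_Γ (x : ℝ) (h0 : 0 ≤ x) (h1 : x ≤ 1) : (1:ℝ)/2 ≤ nrm (x, 1 - x) := by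
  rcases le_total x (1/2) with h | h
  · calc (1:ℝ)/2 ≤ |1 - x| := by rw [abs_of_nonneg (by linarith)]; linarith
      _ ≤ nrm (x, 1-x) := abs_snd_le_nrm (x, 1-x)
  · calc (1:ℝ)/2 ≤ |x| := by rw [abs_of_nonneg h0]; linarith
      _ ≤ nrm (x, 1-x) := abs_fst_le_nrm (x, 1-x)

lemma delta_compact : IsCompact {p : ℝ × ℝ | 0 ≤ p.1 ∧ 0 ≤ p.2 ∧ p.2 ≤ 1 - p.1} := by
  have hsub : {p : ℝ × ℝ | 0 ≤ p.1 ∧ 0 ≤ p.2 ∧ p.2 ≤ 1 - p.1} ⊆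
      (Set.Icc (0:ℝ) 1) ×ˢ (Set.Icc (0:ℝ) 1) := by
    rintro ⟨x, y⟩ ⟨h1, h2, h3⟩
    simp only [Set.mem_setOf_eq] at h1 h2 h3
    exact Set.mem_prod.2 ⟨Set.mem_Icc.2 ⟨h1, by simp only at h2 h3 ⊢; linarith⟩,
      Set.mem_Icc.2 ⟨h2, by simp only at h1 h2 h3 ⊢; linarith⟩⟩
  have hcl : IsClosed {p : ℝ × ℝ | 0 ≤ p.1 ∧ 0 ≤ p.2 ∧ p.2 ≤ 1 - p.1} := by
    refine IsClosed.inter (isClosed_le continuous_const continuous_fst) ?_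
    exact IsClosed.inter (isClosed_le continuous_const continuous_snd)
      (isClosed_le continuous_snd (by fun_prop))
  exact IsCompact.of_isClosed_subset (IsCompact.prod isCompact_Icc isCompact_Icc) hcl hsub

lemma delta_smul_mem (ε : ℝ) (hε : 0 < ε) (z : ℝ × ℝ) (h1 : 0 ≤ z.1) (h2 : 0 ≤ z.2)
    (h3 : z.1 + z.2 ≤ ε) :
    ∃ w : ℝ × ℝ, (0 ≤ w.1 ∧ 0 ≤ w.2 ∧ w.2 ≤ 1 - w.1) ∧ z = ε • w := by
  refine ⟨ε⁻¹ • z, ⟨?_, ?_, ?_⟩, ?_⟩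
  · simp only [Prod.smul_fst, smul_eq_mul]; positivity
  · simp only [Prod.smul_snd, smul_eq_mul]; positivity
  · simp only [Prod.smul_fst, Prod.smul_snd, smul_eq_mul]
    have h4 : ε⁻¹ * (z.1 + z.2) ≤ ε⁻¹ * ε := mul_le_mul_of_nonneg_left h3 (by positivity)
    rw [inv_mul_cancel₀ (ne_of_gt hε)] at h4
    nlinarith [h4]
  · rw [smul_smul, mul_inv_cancel₀ (ne_of_gt hε), one_smul]

lemma delta_star (c : ℝ) (h0 : 0 ≤ c) (h1 : c ≤ 1) (p : ℝ × ℝ)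
    (hp : 0 ≤ p.1 ∧ 0 ≤ p.2 ∧ p.2 ≤ 1 - p.1) :
    0 ≤ (c • p).1 ∧ 0 ≤ (c • p).2 ∧ (c • p).2 ≤ 1 - (c • p).1 := by
  obtain ⟨a, b, d⟩ := hp
  refine ⟨?_, ?_, ?_⟩ <;> simp only [Prod.smul_fst, Prod.smul_snd, smul_eq_mul]
  · positivity
  · positivity
  · nlinarith

lemma forward_dir (τL δL τR δR : ℝ) (hδL : 0 < δL) (hδR : δR < 0)
    (hτL : τL < 2 * Real.sqrt δL)
    (g : ℝ × ℝ → ℝ × ℝ)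
    (hgL : ∀ p : ℝ × ℝ, p.1 ≤ 0 → g p = (τL * p.1 + p.2, -δL * p.1))
    (hgR : ∀ p : ℝ × ℝ, 0 ≤ p.1 → g p = (τR * p.1 + p.2, -δR * p.1))
    (Γ : Set (ℝ × ℝ)) (hΓ : Γ = {p : ℝ × ℝ | ∃ x : ℝ, 0 ≤ x ∧ x ≤ 1 ∧ p = (x, 1 - x)})
    (Δ₀ : Set (ℝ × ℝ)) (hΔ₀ : Δ₀ = {p : ℝ × ℝ | 0 ≤ p.1 ∧ 0 ≤ p.2 ∧ p.2 ≤ 1 - p.1})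
    (Ω : ℕ → Set (ℝ × ℝ)) (hΩ : ∀ n : ℕ, Ω n = ⋃ i ∈ Finset.range (n + 1), g^[i] '' Δ₀)
    (hstab : ∀ ε > 0, ∃ δ > 0, ∀ p : ℝ × ℝ, nrm p < δ → ∀ n : ℕ, nrm (g^[n] p) < ε)
    (hattr : ∃ δ > 0, ∀ p : ℝ × ℝ, nrm p < δ →
        Tendsto (fun n : ℕ => g^[n] p) atTop (𝓝 ((0 : ℝ), (0 : ℝ)))) :
    ∃ m k : ℕ, g '' (Ω m) ⊆ Ω m ∧ (g^[k] '' (Ω m)) ∩ Γ = ∅ := by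
  have hhom := g_iter_homog τL δL τR δR g hgL hgR
  have hg0 : ∀ n : ℕ, g^[n] (((0:ℝ),(0:ℝ))) = ((0:ℝ),(0:ℝ)) := by
    intro n
    induction n with
    | zero => rfl
    | succ n ih => rw [Function.iterate_succ_apply', ih]
                   exact g_zero τR δR g hgR
  have nrm0 : nrm ((0:ℝ),(0:ℝ)) = 0 := by simp [nrm]
  -- global attraction
  obtain ⟨δ₀, hδ₀, hA⟩ := hattr
  have hGA : ∀ p : ℝ × ℝ, Tendsto (fun n : ℕ => g^[n] p) atTop (𝓝 ((0:ℝ),(0:ℝ))) := by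
    intro p
    by_cases hp : p = ((0:ℝ),(0:ℝ))
    · subst hp
      have hfe : (fun n : ℕ => g^[n] ((0:ℝ),(0:ℝ))) = fun _ : ℕ => ((0:ℝ),(0:ℝ)) := funext hg0
      rw [hfe]
      exact tendsto_const_nhds
    · have hnp : 0 < nrm p := nrm_pos p hp
      set a : ℝ := δ₀ / (2 * nrm p) with ha
      have hapos : 0 < a := by positivity
      have hna : nrm (a • p) < δ₀ := by
        rw [nrm_smul a hapos.le p, ha]
        rw [div_mul_eq_mul_div, mul_comm]
        rw [div_lt_iff₀ (by positivity)]
        nlinarith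
      have htq := hA (a • p) hna
      have heq : ∀ n : ℕ, g^[n] p = a⁻¹ • g^[n] (a • p) := by
        intro n
        rw [hhom n a hapos.le p, smul_smul, inv_mul_cancel₀ (ne_of_gt hapos), one_smul]
      have hsm := htq.const_smul a⁻¹
      rw [show a⁻¹ • (((0:ℝ),(0:ℝ)) : ℝ × ℝ) = ((0:ℝ),(0:ℝ)) by
        rw [show (((0:ℝ),(0:ℝ)) : ℝ × ℝ) = (0 : ℝ × ℝ) from rfl, smul_zero]] at hsm
      have hfe : (fun n : ℕ => g^[n] p) = fun n : ℕ => a⁻¹ • g^[n] (a • p) := funext heq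
      rw [hfe]
      exact hsm
  -- uniform linear bound
  obtain ⟨δ₁, hδ₁, hB⟩ := hstab 1 one_pos
  set C : ℝ := 2 / δ₁ + 1 with hCdef
  have hC1 : 1 ≤ C := by
    have h9 : 0 < 2 / δ₁ := by positivity
    rw [hCdef]
    linarith
  have hC0 : 0 < C := lt_of_lt_of_le one_pos hC1
  have hC : ∀ p : ℝ × ℝ, ∀ n : ℕ, nrm (g^[n] p) ≤ C * nrm p := by
    intro p n
    by_cases hp : p = ((0:ℝ),(0:ℝ))
    · subst hp
      rw [hg0 n, nrm0]
      simp
    · have hnp : 0 < nrm p := nrm_pos p hp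
      set a : ℝ := δ₁ / (2 * nrm p) with ha
      have hapos : 0 < a := by positivity
      have hna : nrm (a • p) < δ₁ := by
        rw [nrm_smul a hapos.le p, ha, div_mul_eq_mul_div, mul_comm, div_lt_iff₀ (by positivity)]
        nlinarith
      have h1 : nrm (g^[n] (a • p)) < 1 := hB (a • p) hna n
      rw [hhom n a hapos.le p, nrm_smul a hapos.le _] at h1
      have : nrm (g^[n] p) < 1 / a := by
        rw [lt_div_iff₀ hapos, mul_comm]
        exact h1
      have h2 : 1 / a = 2 * nrm p / δ₁ := by
        rw [ha]
        field_simp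
      calc nrm (g^[n] p) ≤ 1 / a := this.le
        _ = (2 / δ₁) * nrm p := by rw [h2]; ring
        _ ≤ C * nrm p := by
            apply mul_le_mul_of_nonneg_right _ (nrm_nonneg p)
            rw [hCdef]; linarith
  -- compactness of Δ₀
  have hΔcomp : IsCompact Δ₀ := by rw [hΔ₀]; exact delta_compact
  have hcont : ∀ n : ℕ, Continuous (g^[n]) :=
    fun n => (g_cont τL δL τR δR g hgL hgR).iterate n
  -- uniform convergence on Δ₀
  have hUnif : ∀ r : ℝ, 0 < r → ∃ N : ℕ, ∀ n ≥ N, ∀ p ∈ Δ₀, nrm (g^[n] p) < r := by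
    intro r hr
    set r' : ℝ := r / (2 * C) with hr'
    have hr'pos : 0 < r' := by positivity
    have hsel : ∀ p : ℝ × ℝ, ∃ n : ℕ, nrm (g^[n] p) < r' := by
      intro p
      have := (Metric.tendsto_atTop.mp (hGA p)) (r' / 2) (by positivity)
      obtain ⟨N, hN⟩ := this
      refine ⟨N, ?_⟩
      have hd := hN N (le_refl N)
      have h1 : |(g^[N] p).1| < r' / 2 := by
        have := dist_le_nrm (g^[N] p)
        rw [Prod.dist_eq] at hd
        simp only [Real.dist_eq, sub_zero] at hd
        exact lt_of_le_of_lt (le_max_left _ _) hd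
      have h2 : |(g^[N] p).2| < r' / 2 := by
        rw [Prod.dist_eq] at hd
        simp only [Real.dist_eq, sub_zero] at hd
        exact lt_of_le_of_lt (le_max_right _ _) hd
      calc nrm (g^[N] p) ≤ |(g^[N] p).1| + |(g^[N] p).2| := nrm_le_abs_add _
        _ < r' := by linarith
    choose np hnp using hsel
    have hopen : ∀ p : ℝ × ℝ, IsOpen ((fun q => nrm (g^[np p] q)) ⁻¹' Set.Iio r') := by
      intro p
      apply IsOpen.preimage _ isOpen_Iio
      have : Continuous nrm := by
        unfold nrm
        fun_prop
      exact this.comp (hcont (np p))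
    have hcover : Δ₀ ⊆ ⋃ p : ℝ × ℝ, (fun q => nrm (g^[np p] q)) ⁻¹' Set.Iio r' := by
      intro p _
      exact Set.mem_iUnion.2 ⟨p, hnp p⟩
    obtain ⟨t, ht⟩ := hΔcomp.elim_finite_subcover _ hopen hcover
    refine ⟨t.sup np, fun n hn p hp => ?_⟩
    obtain ⟨i, hit, hpi⟩ := Set.mem_iUnion₂.1 (ht hp)
    simp only [Set.mem_preimage, Set.mem_Iio] at hpi
    have hni : np i ≤ n := le_trans (Finset.le_sup hit) hn
    have : g^[n] p = g^[n - np i] (g^[np i] p) := by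
      rw [← Function.iterate_add_apply]
      congr 1
      omega
    rw [this]
    calc nrm (g^[n - np i] (g^[np i] p)) ≤ C * nrm (g^[np i] p) := hC _ _
      _ < C * r' := by exact mul_lt_mul_of_pos_left hpi hC0
      _ = r / 2 := by rw [hr']; field_simp
      _ < r := by linarith
  -- Q entry
  obtain ⟨M, hM⟩ := Qenter τL δL τR δR g hδL hδR hτL hgL hgR
  obtain ⟨N₀, hN₀⟩ := hUnif (1/2) (by norm_num)
  set m : ℕ := N₀ + 1 + M with hm
  have hsmall : ∀ p ∈ Δ₀, ∃ j : ℕ, 1 ≤ j ∧ j ≤ m ∧ g^[j] p ∈ Δ₀ := by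
    intro p hp
    obtain ⟨j', hj', hq1, hq2⟩ := hM (g^[N₀+1] p)
    rw [← Function.iterate_add_apply] at hq1 hq2
    refine ⟨j' + (N₀ + 1), by omega, by omega, ?_⟩
    have hnrm : nrm (g^[j' + (N₀+1)] p) < 1/2 := hN₀ _ (by omega) p hp
    rw [hΔ₀]
    refine ⟨hq1, hq2, ?_⟩
    have h1 : |(g^[j' + (N₀+1)] p).1| ≤ nrm (g^[j' + (N₀+1)] p) := abs_fst_le_nrm _
    have h2 : |(g^[j' + (N₀+1)] p).2| ≤ nrm (g^[j' + (N₀+1)] p) := abs_snd_le_nrm _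
    rw [abs_of_nonneg hq1] at h1
    rw [abs_of_nonneg hq2] at h2
    linarith
  have hmemΩ : ∀ i : ℕ, i ≤ m → ∀ p ∈ Δ₀, g^[i] p ∈ Ω m := by
    intro i hi p hp
    rw [hΩ]
    exact Set.mem_biUnion (Finset.mem_range.2 (by omega)) ⟨p, hp, rfl⟩
  refine ⟨m, N₀, ?_, ?_⟩
  · rintro q ⟨w, hw, rfl⟩
    rw [hΩ] at hw
    obtain ⟨i, hi, p, hp, rfl⟩ := by
      simpa only [Set.mem_iUnion, Finset.mem_range, Set.mem_image, exists_prop] using hw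
    rw [← Function.iterate_succ_apply' g i p]
    rcases lt_or_ge (i+1) (m+1) with h | h
    · exact hmemΩ (i+1) (by omega) p hp
    · have him : i = m := by omega
      obtain ⟨j, hj1, hj2, hjΔ⟩ := hsmall p hp
      have heq2 : g^[i+1] p = g^[i+1-j] (g^[j] p) := by
        rw [← Function.iterate_add_apply]
        congr 1
        omega
      rw [heq2]
      exact hmemΩ (i+1-j) (by omega) _ hjΔ
  · rw [Set.eq_empty_iff_forall_notMem]
    rintro q ⟨⟨w, hw, rfl⟩, hqΓ⟩
    rw [hΩ] at hw
    obtain ⟨i, hi, p, hp, rfl⟩ := by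
      simpa only [Set.mem_iUnion, Finset.mem_range, Set.mem_image, exists_prop] using hw
    rw [← Function.iterate_add_apply] at hqΓ
    have hsm : nrm (g^[N₀ + i] p) < 1/2 := hN₀ _ (by omega) p hp
    rw [hΓ] at hqΓ
    obtain ⟨x, hx0, hx1, hxe⟩ := hqΓ
    rw [hxe] at hsm
    exact absurd hsm (not_lt.2 (nrm_Γ x hx0 hx1))

lemma nrm_zero' : nrm ((0:ℝ),(0:ℝ)) = 0 := by simp [nrm]

lemma nrm_le_two_dist (q : ℝ × ℝ) : nrm q ≤ 2 * dist q ((0:ℝ),(0:ℝ)) := by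
  rw [Prod.dist_eq]
  simp only [Real.dist_eq, sub_zero]
  have h1 := le_max_left |q.1| |q.2|
  have h2 := le_max_right |q.1| |q.2|
  calc nrm q ≤ |q.1| + |q.2| := nrm_le_abs_add q
    _ ≤ 2 * max |q.1| |q.2| := by rcases max_cases |q.1| |q.2| with ⟨h, _⟩ | ⟨h, _⟩ <;> rw [h] <;> linarith

set_option maxHeartbeats 1000000 in
lemma backward_dir (τL δL τR δR : ℝ) (hδL : 0 < δL) (hδR : δR < 0)
    (hτL : τL < 2 * Real.sqrt δL)
    (g : ℝ × ℝ → ℝ × ℝ)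
    (hgL : ∀ p : ℝ × ℝ, p.1 ≤ 0 → g p = (τL * p.1 + p.2, -δL * p.1))
    (hgR : ∀ p : ℝ × ℝ, 0 ≤ p.1 → g p = (τR * p.1 + p.2, -δR * p.1))
    (Γ : Set (ℝ × ℝ)) (hΓ : Γ = {p : ℝ × ℝ | ∃ x : ℝ, 0 ≤ x ∧ x ≤ 1 ∧ p = (x, 1 - x)})
    (Δ₀ : Set (ℝ × ℝ)) (hΔ₀ : Δ₀ = {p : ℝ × ℝ | 0 ≤ p.1 ∧ 0 ≤ p.2 ∧ p.2 ≤ 1 - p.1})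
    (Ω : ℕ → Set (ℝ × ℝ)) (hΩ : ∀ n : ℕ, Ω n = ⋃ i ∈ Finset.range (n + 1), g^[i] '' Δ₀)
    (m k : ℕ) (hm : g '' (Ω m) ⊆ Ω m) (hk : (g^[k] '' (Ω m)) ∩ Γ = ∅) :
    (∀ ε > 0, ∃ δ > 0, ∀ p : ℝ × ℝ, nrm p < δ → ∀ n : ℕ, nrm (g^[n] p) < ε) ∧
      (∃ δ > 0, ∀ p : ℝ × ℝ, nrm p < δ →
        Tendsto (fun n : ℕ => g^[n] p) atTop (𝓝 ((0 : ℝ), (0 : ℝ)))) := by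
  have hhom := g_iter_homog τL δL τR δR g hgL hgR
  have hcont : ∀ n : ℕ, Continuous (g^[n]) :=
    fun n => (g_cont τL δL τR δR g hgL hgR).iterate n
  have hg0 : ∀ n : ℕ, g^[n] (((0:ℝ),(0:ℝ))) = ((0:ℝ),(0:ℝ)) := by
    intro n
    induction n with
    | zero => rfl
    | succ n ih => rw [Function.iterate_succ_apply', ih]; exact g_zero τR δR g hgR
  -- basic Ω facts
  have hmemΔΩ : Δ₀ ⊆ Ω m := by
    intro p hp
    rw [hΩ]
    exact Set.mem_biUnion (show (0:ℕ) ∈ Finset.range (m+1) from Finset.mem_range.2 (by omega))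
      ⟨p, hp, by rw [Function.iterate_zero_apply]⟩
  have hInv1 : ∀ q ∈ Ω m, g q ∈ Ω m := fun q hq => hm ⟨q, hq, rfl⟩
  have hInvn : ∀ n : ℕ, ∀ q ∈ Ω m, g^[n] q ∈ Ω m := by
    intro n
    induction n with
    | zero => intro q hq; simpa using hq
    | succ n ih =>
      intro q hq
      rw [Function.iterate_succ_apply']
      exact hInv1 _ (ih q hq)
  have hstar : ∀ c : ℝ, 0 ≤ c → c ≤ 1 → ∀ q ∈ Ω m, c • q ∈ Ω m := by
    intro c h0 h1 q hq
    rw [hΩ] at hq ⊢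
    obtain ⟨i, hi, p, hp, rfl⟩ := by
      simpa only [Set.mem_iUnion, Finset.mem_range, Set.mem_image, exists_prop] using hq
    have hcp : c • p ∈ Δ₀ := by
      rw [hΔ₀] at hp ⊢
      exact delta_star c h0 h1 p hp
    rw [← hhom i c h0 p]
    exact Set.mem_biUnion (Finset.mem_range.2 hi) ⟨c • p, hcp, rfl⟩
  have hPERSIST : ∀ ε : ℝ, 0 ≤ ε → ∀ q : ℝ × ℝ, (∃ w ∈ Ω m, q = ε • w) →
      ∀ i : ℕ, ∃ w ∈ Ω m, g^[i] q = ε • w := by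
    rintro ε hε q ⟨w, hw, rfl⟩ i
    exact ⟨g^[i] w, hInvn i w hw, hhom i ε hε w⟩
  -- compactness and bound R
  have hΔcomp : IsCompact Δ₀ := by rw [hΔ₀]; exact delta_compact
  have hΩcomp : IsCompact (Ω m) := by
    rw [hΩ]
    apply Set.Finite.isCompact_biUnion (Finset.range (m+1)).finite_toSet
    intro i _
    exact hΔcomp.image (hcont i)
  obtain ⟨r, hr⟩ := hΩcomp.isBounded.subset_closedBall ((0:ℝ),(0:ℝ))
  set R : ℝ := 2 * |r| + 1 with hRdef
  have hR1 : 1 ≤ R := by rw [hRdef]; linarith [abs_nonneg r]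
  have hR0 : 0 < R := lt_of_lt_of_le one_pos hR1
  have hRb : ∀ q ∈ Ω m, nrm q ≤ R := by
    intro q hq
    have hd : dist q ((0:ℝ),(0:ℝ)) ≤ r := Metric.mem_closedBall.1 (hr hq)
    have := nrm_le_two_dist q
    have : nrm q ≤ 2 * r := by linarith
    have hrabs : r ≤ |r| := le_abs_self r
    rw [hRdef]; linarith
  -- the contraction factor
  obtain ⟨s', hs_half, hs_lt1, hsS⟩ : ∃ s' : ℝ, 1/2 ≤ s' ∧ s' < 1 ∧
      ∀ w ∈ Ω m, 0 ≤ (g^[k] w).1 → 0 ≤ (g^[k] w).2 → (g^[k] w).1 + (g^[k] w).2 ≤ s' := by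
    set T : Set (ℝ × ℝ) := (g^[k] '' Ω m) ∩ {p : ℝ × ℝ | 0 ≤ p.1 ∧ 0 ≤ p.2} with hT
    have hTcomp : IsCompact T := by
      apply IsCompact.inter_right (hΩcomp.image (hcont k))
      exact IsClosed.inter (isClosed_le continuous_const continuous_fst)
        (isClosed_le continuous_const continuous_snd)
    rcases Set.eq_empty_or_nonempty T with hTe | hTne
    · refine ⟨1/2, le_refl _, by norm_num, fun w hw h1 h2 => ?_⟩
      exfalso
      have : g^[k] w ∈ T := ⟨⟨w, hw, rfl⟩, h1, h2⟩
      rw [hTe] at this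
      exact this
    · obtain ⟨z, hzT, hzmax⟩ := hTcomp.exists_isMaxOn hTne
        (continuous_fst.add continuous_snd).continuousOn
      set σ : ℝ := z.1 + z.2 with hσdef
      have hσ0 : 0 ≤ σ := by
        obtain ⟨-, hz1, hz2⟩ := hzT
        rw [hσdef]; linarith
      have hσ1 : σ < 1 := by
        by_contra hcon
        push_neg at hcon
        have hσpos : 0 < σ := lt_of_lt_of_le one_pos hcon
        obtain ⟨⟨w, hwΩ, hwz⟩, hz12⟩ := hzT
        have hlam0 : 0 ≤ σ⁻¹ := by positivity
        have hlam1 : σ⁻¹ ≤ 1 := by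
          rw [inv_le_one_iff₀]; right; exact hcon
        have hmem : σ⁻¹ • z ∈ g^[k] '' Ω m := by
          refine ⟨σ⁻¹ • w, hstar σ⁻¹ hlam0 hlam1 w hwΩ, ?_⟩
          rw [hhom k σ⁻¹ hlam0 w, hwz]
        have hmemΓ : σ⁻¹ • z ∈ Γ := by
          rw [hΓ]
          refine ⟨σ⁻¹ * z.1, mul_nonneg hlam0 hz12.1, ?_, ?_⟩
          · rw [← inv_mul_cancel₀ (ne_of_gt hσpos)]
            apply mul_le_mul_of_nonneg_left _ hlam0
            rw [hσdef]; linarith [hz12.2]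
          · have h2 : σ⁻¹ * z.2 = 1 - σ⁻¹ * z.1 := by
              have : σ⁻¹ * (z.1 + z.2) = 1 := by
                rw [← hσdef, inv_mul_cancel₀ (ne_of_gt hσpos)]
              nlinarith [this]
            rw [Prod.ext_iff]
            constructor
            · simp
            · simp only [Prod.smul_snd, smul_eq_mul]
              exact h2
        have : σ⁻¹ • z ∈ (g^[k] '' Ω m) ∩ Γ := ⟨hmem, hmemΓ⟩
        rw [hk] at this
        exact this
      refine ⟨max σ (1/2), le_max_right _ _, max_lt hσ1 (by norm_num), ?_⟩
      intro w hw h1 h2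
      have : g^[k] w ∈ T := ⟨⟨w, hw, rfl⟩, h1, h2⟩
      have := hzmax this
      simp only [Set.mem_setOf_eq] at this
      calc (g^[k] w).1 + (g^[k] w).2 ≤ σ := this
        _ ≤ max σ (1/2) := le_max_left _ _
  have hs_pos : 0 < s' := by linarith
  -- Q entry and Lipschitz
  obtain ⟨M, hM⟩ := Qenter τL δL τR δR g hδL hδR hτL hgL hgR
  obtain ⟨L, hL1, hL⟩ := g_nrm_le τL δL τR δR g hgL hgR
  have hL0 : 0 < L := lt_of_lt_of_le one_pos hL1
  have hLn : ∀ n : ℕ, ∀ p : ℝ × ℝ, nrm (g^[n] p) ≤ L^n * nrm p := by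
    intro n
    induction n with
    | zero => intro p; simp
    | succ n ih =>
      intro p
      rw [Function.iterate_succ_apply']
      calc nrm (g (g^[n] p)) ≤ L * nrm (g^[n] p) := hL _
        _ ≤ L * (L^n * nrm p) := by
            apply mul_le_mul_of_nonneg_left (ih p) hL0.le
        _ = L^(n+1) * nrm p := by ring
  have hLM0 : 0 < L^M := pow_pos hL0 M
  have hLMn : ∀ j : ℕ, j ≤ M → ∀ p : ℝ × ℝ, nrm (g^[j] p) ≤ L^M * nrm p := by
    intro j hj p
    calc nrm (g^[j] p) ≤ L^j * nrm p := hLn j p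
      _ ≤ L^M * nrm p := by
          apply mul_le_mul_of_nonneg_right _ (nrm_nonneg p)
          exact pow_le_pow_right₀ hL1 hj
  -- entry into scaled Ω
  have hENT : ∀ p : ℝ × ℝ, p ≠ ((0:ℝ),(0:ℝ)) →
      ∃ j ≤ M, ∃ w ∈ Ω m, g^[j] p = (2 * L^M * nrm p) • w := by
    intro p hp
    have hnp : 0 < nrm p := nrm_pos p hp
    set ε : ℝ := 2 * L^M * nrm p with hεdef
    have hε0 : 0 < ε := by positivity
    obtain ⟨j, hj, h1, h2⟩ := hM p
    have hsum : (g^[j] p).1 + (g^[j] p).2 ≤ ε := by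
      have ha := abs_fst_le_nrm (g^[j] p)
      have hb := abs_snd_le_nrm (g^[j] p)
      rw [abs_of_nonneg h1] at ha
      rw [abs_of_nonneg h2] at hb
      have := hLMn j hj p
      rw [hεdef]
      nlinarith
    obtain ⟨w, hwΔ, hweq⟩ := delta_smul_mem ε hε0 (g^[j] p) h1 h2 hsum
    refine ⟨j, hj, w, hmemΔΩ (by rw [hΔ₀]; exact hwΔ), hweq⟩
  -- the epoch contraction step
  have hEPOCH : ∀ ε : ℝ, 0 < ε → ∀ q : ℝ × ℝ, (∃ w ∈ Ω m, q = ε • w) →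
      ∃ j ≤ k + M, ∃ w ∈ Ω m, g^[j] q = (ε * s') • w := by
    rintro ε hε q ⟨w, hw, rfl⟩
    obtain ⟨j', hj', h1, h2⟩ := hM (g^[k] (ε • w))
    rw [← Function.iterate_add_apply] at h1 h2
    set v : ℝ × ℝ := g^[j' + k] w with hvdef
    have hzv : g^[j' + k] (ε • w) = ε • v := hhom _ ε hε.le w
    rw [hzv] at h1 h2
    simp only [Prod.smul_fst, Prod.smul_snd, smul_eq_mul] at h1 h2
    have hv1 : 0 ≤ v.1 := by
      by_contra hcc; push_neg at hcc; nlinarith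
    have hv2 : 0 ≤ v.2 := by
      by_contra hcc; push_neg at hcc; nlinarith
    have hveq : v = g^[k] (g^[j'] w) := by
      rw [hvdef, add_comm, Function.iterate_add_apply]
    have hsum : v.1 + v.2 ≤ s' := by
      have := hsS (g^[j'] w) (hInvn j' w hw) (by rw [← hveq]; exact hv1) (by rw [← hveq]; exact hv2)
      rw [← hveq] at this
      linarith
    obtain ⟨w'', hw''Δ, hw''eq⟩ := delta_smul_mem s' hs_pos v hv1 hv2 hsum
    refine ⟨j' + k, by omega, w'', hmemΔΩ (by rw [hΔ₀]; exact hw''Δ), ?_⟩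
    rw [hzv, hw''eq, smul_smul]
  -- iterated contraction
  have hITER : ∀ l : ℕ, ∀ ε : ℝ, 0 < ε → ∀ q : ℝ × ℝ, (∃ w ∈ Ω m, q = ε • w) →
      ∃ n ≤ l * (k + M), ∃ w ∈ Ω m, g^[n] q = (ε * s'^l) • w := by
    intro l
    induction l with
    | zero =>
      rintro ε hε q ⟨w, hw, rfl⟩
      exact ⟨0, by omega, w, hw, by simp⟩
    | succ l ih =>
      rintro ε hε q hq
      obtain ⟨n, hn, w, hwm, hweq⟩ := ih ε hε q hq
      have hε' : 0 < ε * s'^l := by positivity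
      obtain ⟨j, hj, w', hw'm, hw'eq⟩ := hEPOCH (ε * s'^l) hε' (g^[n] q) ⟨w, hwm, hweq⟩
      have hnj2 : n + j ≤ (l + 1) * (k + M) := by
        have hring : (l + 1) * (k + M) = l * (k + M) + (k + M) := by ring
        omega
      refine ⟨n + j, hnj2, w', hw'm, ?_⟩
      rw [add_comm n j, Function.iterate_add_apply, hw'eq]
      rw [pow_succ]
      ring_nf
  constructor
  · -- Lyapunov stability
    intro ε₀ hε₀
    set B : ℝ := 2 * L^M * R + L^M with hBdef
    have hB0 : 0 < B := by rw [hBdef]; nlinarith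
    refine ⟨ε₀ / (B + 1), by positivity, ?_⟩
    intro p hp n
    by_cases hp0 : p = ((0:ℝ),(0:ℝ))
    · rw [hp0, hg0 n, nrm_zero']
      exact hε₀
    · have hnp : 0 < nrm p := nrm_pos p hp0
      obtain ⟨j, hj, w₀, hw₀, hzw⟩ := hENT p hp0
      set ε : ℝ := 2 * L^M * nrm p with hεdef
      have hε0 : 0 < ε := by positivity
      rcases lt_or_ge n j with hnj | hnj
      · calc nrm (g^[n] p) ≤ L^M * nrm p := hLMn n (by omega) p
          _ < L^M * (ε₀ / (B + 1)) := by
              exact mul_lt_mul_of_pos_left hp hLM0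
          _ ≤ ε₀ := by
              have hd0 : 0 ≤ ε₀ / (B + 1) := div_nonneg hε₀.le (by linarith)
              have hcancel : (B + 1) * (ε₀ / (B + 1)) = ε₀ := by
                rw [mul_comm]
                exact div_mul_cancel₀ ε₀ (by linarith)
              have hBL : L^M ≤ B + 1 := by rw [hBdef]; nlinarith
              nlinarith
      · have hpe : g^[n] p = g^[n - j] (g^[j] p) := by
          rw [← Function.iterate_add_apply]
          congr 1
          omega
        obtain ⟨w, hwm, hweq⟩ := hPERSIST ε hε0.le (g^[j] p) ⟨w₀, hw₀, hzw⟩ (n - j)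
        rw [hpe, hweq, nrm_smul ε hε0.le]
        calc ε * nrm w ≤ ε * R := mul_le_mul_of_nonneg_left (hRb w hwm) hε0.le
          _ = 2 * L^M * R * nrm p := by rw [hεdef]; ring
          _ < 2 * L^M * R * (ε₀ / (B + 1)) := by
              exact mul_lt_mul_of_pos_left hp (mul_pos (mul_pos two_pos hLM0) hR0)
          _ ≤ ε₀ := by
              have hd0 : 0 ≤ ε₀ / (B + 1) := div_nonneg hε₀.le (by linarith)
              have hcancel : (B + 1) * (ε₀ / (B + 1)) = ε₀ := by
                rw [mul_comm]
                exact div_mul_cancel₀ ε₀ (by linarith)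
              have hBL : 2 * L^M * R ≤ B + 1 := by rw [hBdef]; nlinarith
              nlinarith
  · -- attraction
    refine ⟨1, one_pos, ?_⟩
    intro p _
    by_cases hp0 : p = ((0:ℝ),(0:ℝ))
    · rw [hp0]
      have hfe : (fun n : ℕ => g^[n] ((0:ℝ),(0:ℝ))) = fun _ : ℕ => ((0:ℝ),(0:ℝ)) := funext hg0
      rw [hfe]
      exact tendsto_const_nhds
    · have hnp : 0 < nrm p := nrm_pos p hp0
      obtain ⟨j, hj, w₀, hw₀, hzw⟩ := hENT p hp0
      set ε : ℝ := 2 * L^M * nrm p with hεdef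
      have hε0 : 0 < ε := by positivity
      rw [Metric.tendsto_atTop]
      intro ρ hρ
      obtain ⟨l, hl⟩ := exists_pow_lt_of_lt_one (show 0 < ρ / (ε * R + 1) by positivity) hs_lt1
      obtain ⟨n₁, hn₁, w₁, hw₁m, hw₁eq⟩ := hITER l ε hε0 (g^[j] p) ⟨w₀, hw₀, hzw⟩
      refine ⟨j + n₁, fun n hn => ?_⟩
      have hpe : g^[n] p = g^[n - (j + n₁)] (g^[n₁] (g^[j] p)) := by
        rw [← Function.iterate_add_apply, ← Function.iterate_add_apply]
        congr 1
        omega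
      have hεl : 0 < ε * s'^l := by positivity
      obtain ⟨w, hwm, hweq⟩ := hPERSIST (ε * s'^l) hεl.le (g^[n₁] (g^[j] p))
        ⟨w₁, hw₁m, hw₁eq⟩ (n - (j + n₁))
      have hnb : nrm (g^[n] p) ≤ ε * s'^l * R := by
        rw [hpe, hweq, nrm_smul _ hεl.le]
        exact mul_le_mul_of_nonneg_left (hRb w hwm) hεl.le
      have hfin : ε * s'^l * R < ρ := by
        have h1 : s'^l * (ε * R + 1) < ρ := by
          rw [← lt_div_iff₀ (by positivity)]
          exact hl
        nlinarith [pow_pos hs_pos l]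
      calc dist (g^[n] p) ((0:ℝ),(0:ℝ)) ≤ nrm (g^[n] p) := dist_le_nrm _
        _ ≤ ε * s'^l * R := hnb
        _ < ρ := hfin

/-- For the 2D border-collision normal form `g` with `δ_L > 0`, `δ_R < 0`,
`τ_L < 2√δ_L`, set `Γ = {(x, 1−x) : 0 ≤ x ≤ 1}`,
`Δ₀ = {(x,y) : x ≥ 0, y ≥ 0, y ≤ 1−x}`, `Δ_n = g^n(Δ₀)` and `Ω_n = Δ₀ ∪ ⋯ ∪ Δ_n`.
Then `(0,0)` is an asymptotically stable fixed point of `g` if and only if there exist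
`m, k ∈ ℕ` with `g(Ω_m) ⊆ Ω_m` and `g^k(Ω_m) ∩ Γ = ∅`. -/
theorem stmt19 (τL δL τR δR : ℝ) (hδL : 0 < δL) (hδR : δR < 0)
    (hτL : τL < 2 * Real.sqrt δL)
    (g : ℝ × ℝ → ℝ × ℝ)
    (hgL : ∀ p : ℝ × ℝ, p.1 ≤ 0 → g p = (τL * p.1 + p.2, -δL * p.1))
    (hgR : ∀ p : ℝ × ℝ, 0 ≤ p.1 → g p = (τR * p.1 + p.2, -δR * p.1))
    (Γ : Set (ℝ × ℝ)) (hΓ : Γ = {p : ℝ × ℝ | ∃ x : ℝ, 0 ≤ x ∧ x ≤ 1 ∧ p = (x, 1 - x)})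
    (Δ₀ : Set (ℝ × ℝ)) (hΔ₀ : Δ₀ = {p : ℝ × ℝ | 0 ≤ p.1 ∧ 0 ≤ p.2 ∧ p.2 ≤ 1 - p.1})
    (Ω : ℕ → Set (ℝ × ℝ)) (hΩ : ∀ n : ℕ, Ω n = ⋃ i ∈ Finset.range (n + 1), g^[i] '' Δ₀) :
    ((∀ ε > 0, ∃ δ > 0, ∀ p : ℝ × ℝ, Real.sqrt (p.1 ^ 2 + p.2 ^ 2) < δ →
        ∀ n : ℕ, Real.sqrt ((g^[n] p).1 ^ 2 + (g^[n] p).2 ^ 2) < ε) ∧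
      (∃ δ > 0, ∀ p : ℝ × ℝ, Real.sqrt (p.1 ^ 2 + p.2 ^ 2) < δ →
        Tendsto (fun n : ℕ => g^[n] p) atTop (𝓝 ((0 : ℝ), (0 : ℝ))))) ↔
      (∃ m k : ℕ, g '' (Ω m) ⊆ Ω m ∧ (g^[k] '' (Ω m)) ∩ Γ = ∅) := by
  constructor
  · rintro ⟨h1, h2⟩
    exact forward_dir τL δL τR δR hδL hδR hτL g hgL hgR Γ hΓ Δ₀ hΔ₀ Ω hΩ h1 h2
  · rintro ⟨m, k, hm, hk⟩
    exact backward_dir τL δL τR δR hδL hδR hτL g hgL hgR Γ hΓ Δ₀ hΔ₀ Ω hΩ m k hm hk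
end
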